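/- arXiv:1110.2712 — 4 statements merged into one kernel-verified Lean document; each statement's English description precedes it below -/
import Mathlib

section
/- Fix a set L ⊆ Fin m of lout turns, and let the game G have preference at turn t equal to the lout order <L_{P t} if t ∈ L and exactly the knight order <K_{P t} (not an extension) if t ∉ L. Suppose t < m is a turn such that t ∉ L and every turn u > t satisfies u ∈ L. Let G' be the game obtained from G by transposing turns t and t+1: its turn order is P composed with the transposition (t, t+1), its lout-turn set is (L \ {t+1}) ∪ {t}, and its preferences are defined from these data as before. Then a k-tuple of plates (D_1, …, D_k) is the division of food of some optimal play of G if and only if it is the division of food of some optimal play of G'. -/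
/-- The plate of player `i` under play sequence `a`, with turn order `P`. -/
def plate {M : Type*} [DecidableEq M] {m k : ℕ} (P : Fin m → Fin k) (a : Fin m → M)
    (i : Fin k) : Finset M :=
  (Finset.univ.filter fun t => P t = i).image a

/-- Pairwise comparison of plates with respect to a morsel ordering `le`. -/
def PlateLE {M : Type*} (le : M → M → Prop) (A B : Finset M) : Prop :=
  ∃ f : A → B, Function.Bijective f ∧ ∀ x : A, le x.1 (f x).1

/-- Strict pairwise comparison of plates. -/
def PlateLT {M : Type*} (le : M → M → Prop) (A B : Finset M) : Prop :=
  PlateLE le A B ∧ A ≠ B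

/-- The knight order of player `i` on play sequences. -/
def KnightLT {M : Type*} [DecidableEq M] {m k : ℕ} (P : Fin m → Fin k)
    (ord : Fin k → LinearOrder M) (i : Fin k) (a b : Fin m → M) : Prop :=
  ((∀ j, j ≠ i → PlateLE (ord j).le (plate P a j) (plate P b j)) ∧
      ∃ j, j ≠ i ∧ PlateLT (ord j).le (plate P a j) (plate P b j)) ∨
    ((∀ j, j ≠ i → plate P a j = plate P b j) ∧
      PlateLT (ord i).le (plate P a i) (plate P b i))

/-- The lout order of player `i` on play sequences. -/
def LoutLT {M : Type*} {m k : ℕ} (P : Fin m → Fin k)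
    (ord : Fin k → LinearOrder M) (i : Fin k) (a b : Fin m → M) : Prop :=
  ∃ t : Fin m, P t = i ∧ (∀ s : Fin m, s < t → a s = b s) ∧ (ord i).lt (a t) (b t)

/-- A strategy profile: assigns to each duplicate-free history of length `< m` a
morsel not occurring in it. -/
structure Strategy (M : Type*) (m : ℕ) where
  choice : List M → M
  valid : ∀ h : List M, h.Nodup → h.length < m → choice h ∉ h

/-- Iteratively extend a history by the choices prescribed by `s`. -/
def Strategy.extend {M : Type*} {m : ℕ} (s : Strategy M m) : ℕ → List M → List M
  | 0, h => h
  | j + 1, h => Strategy.extend s j (h ++ [s.choice h])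

/-- The contingent outcome of strategy profile `s` from history `h`, as a play
sequence. -/
def Strategy.play {M : Type*} {m : ℕ} (s : Strategy M m) (h : List M) : Fin m → M :=
  fun t => (s.extend (m - h.length) h).getD t.val (s.choice [])

/-- Subgame perfect equilibrium with respect to preferences `pref t` at turn `t`. -/
def SPE {M : Type*} {m : ℕ}
    (pref : Fin m → (Fin m → M) → (Fin m → M) → Prop) (s : Strategy M m) : Prop :=
  ∀ t : Fin m, ∀ h : List M, h.Nodup → h.length = t.val →
    ∀ x : M, x ∉ h → ¬ pref t (s.play h) (s.play (h ++ [x]))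

/-- Optimal plays: contingent outcomes of subgame perfect equilibria from the
empty history. -/
def OptimalPlay {M : Type*} {m : ℕ}
    (pref : Fin m → (Fin m → M) → (Fin m → M) → Prop) (a : Fin m → M) : Prop :=
  ∃ s : Strategy M m, SPE pref s ∧ a = s.play []

/-- The greedy play: at each turn `t` the mover `P t` selects her favourite
remaining morsel. -/
def IsGreedy {M : Type*} {m k : ℕ} (P : Fin m → Fin k) (ord : Fin k → LinearOrder M)
    (a : Fin m → M) : Prop :=
  Function.Injective a ∧
    ∀ t : Fin m, ∀ x : M, (∀ s : Fin m, s < t → a s ≠ x) → x ≠ a t →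
      (ord (P t)).lt x (a t)

namespace SwitchAux

open List

variable {M : Type*}

section Plate

variable [DecidableEq M] {m k : ℕ}

lemma mem_plate {P : Fin m → Fin k} {a : Fin m → M} {i : Fin k} {x : M} :
    x ∈ plate P a i ↔ ∃ p, P p = i ∧ a p = x := by
  simp [plate]

lemma plate_comp {P : Fin m → Fin k} (σ : Equiv.Perm (Fin m)) (b : Fin m → M) (i : Fin k) :
    plate (P ∘ σ) b i = plate P (b ∘ σ.symm) i := by
  ext x
  simp only [mem_plate, Function.comp_apply]
  constructor
  · rintro ⟨p, h1, h2⟩; exact ⟨σ p, h1, by simp [h2]⟩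
  · rintro ⟨p, h1, h2⟩; exact ⟨σ.symm p, by simpa using h1, h2⟩

end Plate

section PlateLE

lemma plateLE_refl (le : M → M → Prop) (hrefl : ∀ x, le x x) (A : Finset M) :
    PlateLE le A A :=
  ⟨id, Function.bijective_id, fun x => hrefl x.1⟩

lemma plateLE_of_eq (le : M → M → Prop) (hrefl : ∀ x, le x x) {A B : Finset M}
    (h : A = B) : PlateLE le A B := h ▸ plateLE_refl le hrefl A

lemma plateLE_trans {le : M → M → Prop} (htr : Transitive le) {A B C : Finset M}
    (h1 : PlateLE le A B) (h2 : PlateLE le B C) : PlateLE le A C := by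
  obtain ⟨f, hf, hfle⟩ := h1
  obtain ⟨g, hg, hgle⟩ := h2
  exact ⟨g ∘ f, hg.comp hf, fun x => htr (hfle x) (hgle (f x))⟩

variable [DecidableEq M]

lemma plateLE_card_filter (lo : LinearOrder M) {A B : Finset M}
    (h : PlateLE lo.le A B) (c : M) :
    (A.filter fun x => lo.le c x).card ≤ (B.filter fun x => lo.le c x).card := by
  classical
  obtain ⟨f, hf, hfle⟩ := h
  refine Finset.card_le_card_of_injOn (fun a => if ha : a ∈ A then (f ⟨a, ha⟩ : M) else a) ?_ ?_
  · intro a ha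
    simp only [Finset.mem_coe, Finset.mem_filter] at ha ⊢
    rw [dif_pos ha.1]
    exact ⟨(f ⟨a, ha.1⟩).2, lo.le_trans _ _ _ ha.2 (hfle ⟨a, ha.1⟩)⟩
  · intro a ha b hb hab
    simp only [Finset.coe_filter, Set.mem_setOf_eq] at ha hb
    dsimp only at hab
    rw [dif_pos ha.1, dif_pos hb.1] at hab
    have := hf.1 (Subtype.ext hab : f ⟨a, ha.1⟩ = f ⟨b, hb.1⟩)
    exact congrArg Subtype.val this

/-- If `u ∈ A`, `u ∉ B`, and above `u` the sets agree, then `¬ PlateLE A B`. -/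
lemma not_plateLE_aux (lo : LinearOrder M) {A B : Finset M} {u : M}
    (huA : u ∈ A) (huB : u ∉ B) (habove : ∀ y, lo.lt u y → (y ∈ B → y ∈ A)) :
    ¬ PlateLE lo.le A B := by
  classical
  letI := lo
  intro h
  have hc := plateLE_card_filter lo h u
  have hsub : (B.filter fun x => lo.le u x) ⊆ (A.filter fun x => lo.le u x).erase u := by
    intro y hy
    simp only [Finset.mem_filter] at hy
    have hyne : y ≠ u := fun h => huB (h ▸ hy.1)
    have hgt : u < y := lt_of_le_of_ne hy.2 (Ne.symm hyne)
    exact Finset.mem_erase.mpr ⟨hyne,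
      Finset.mem_filter.mpr ⟨habove y hgt hy.1, hy.2⟩⟩
  have huf : u ∈ A.filter fun x => lo.le u x := Finset.mem_filter.mpr ⟨huA, le_refl u⟩
  have h2 := Finset.card_le_card hsub
  rw [Finset.card_erase_of_mem huf] at h2
  have h3 := Finset.card_pos.mpr ⟨u, huf⟩
  omega

lemma plateLE_antisymm (lo : LinearOrder M) {A B : Finset M}
    (h1 : PlateLE lo.le A B) (h2 : PlateLE lo.le B A) : A = B := by
  classical
  letI := lo
  by_contra hne
  have hd : ((A \ B) ∪ (B \ A)).Nonempty := by
    rw [Finset.nonempty_iff_ne_empty]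
    intro hemp
    rw [Finset.union_eq_empty] at hemp
    exact hne (Finset.Subset.antisymm (Finset.sdiff_eq_empty_iff_subset.mp hemp.1)
      (Finset.sdiff_eq_empty_iff_subset.mp hemp.2))
  set u := ((A \ B) ∪ (B \ A)).max' hd with hu
  have humem : u ∈ (A \ B) ∪ (B \ A) := Finset.max'_mem _ hd
  have habove : ∀ y, u < y → (y ∈ A ↔ y ∈ B) := by
    intro y hy
    by_contra hiff
    have : y ∈ (A \ B) ∪ (B \ A) := by
      rw [Finset.mem_union, Finset.mem_sdiff, Finset.mem_sdiff]
      tauto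
    exact absurd (Finset.le_max' _ y this) (not_le.mpr hy)
  rw [Finset.mem_union, Finset.mem_sdiff, Finset.mem_sdiff] at humem
  rcases humem with ⟨hA, hB⟩ | ⟨hB, hA⟩
  · exact not_plateLE_aux lo hA hB (fun y hy => (habove y hy).mpr) h1
  · exact not_plateLE_aux lo hB hA (fun y hy => (habove y hy).mp) h2

lemma plateLT_trans (lo : LinearOrder M) {A B C : Finset M}
    (h1 : PlateLT lo.le A B) (h2 : PlateLT lo.le B C) : PlateLT lo.le A C := by
  refine ⟨plateLE_trans (fun a b c => lo.le_trans a b c) h1.1 h2.1, ?_⟩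
  intro heq
  exact h2.2 (plateLE_antisymm lo h2.1 (heq ▸ h1.1))

end PlateLE

section Knight

variable [DecidableEq M] {m k : ℕ} (P : Fin m → Fin k) (ord : Fin k → LinearOrder M)

lemma knightLT_irrefl (i : Fin k) (a : Fin m → M) : ¬ KnightLT P ord i a a := by
  rintro (⟨_, j, _, _, hne⟩ | ⟨_, _, hne⟩) <;> exact hne rfl

lemma knightLT_trans {i : Fin k} {a b c : Fin m → M}
    (h1 : KnightLT P ord i a b) (h2 : KnightLT P ord i b c) : KnightLT P ord i a c := by
  have htr : ∀ j : Fin k, Transitive (ord j).le := fun j x y z => (ord j).le_trans x y z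
  have hrefl : ∀ j : Fin k, ∀ x : M, (ord j).le x x := fun j x => (ord j).le_refl x
  rcases h1 with ⟨hle1, j1, hj1, hlt1⟩ | ⟨heq1, hlt1⟩ <;>
    rcases h2 with ⟨hle2, j2, hj2, hlt2⟩ | ⟨heq2, hlt2⟩
  · left
    refine ⟨fun j hj => plateLE_trans (htr j) (hle1 j hj) (hle2 j hj), ?_⟩
    by_cases hcase : ∀ j, j ≠ i → plate P a j = plate P c j
    · exfalso
      have hba : PlateLE (ord j1).le (plate P b j1) (plate P a j1) :=
        (hcase j1 hj1) ▸ hle2 j1 hj1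
      exact hlt1.2 (plateLE_antisymm (ord j1) hlt1.1 hba)
    · push_neg at hcase
      obtain ⟨j, hj, hne⟩ := hcase
      exact ⟨j, hj, ⟨plateLE_trans (htr j) (hle1 j hj) (hle2 j hj), hne⟩⟩
  · left
    refine ⟨fun j hj => (heq2 j hj) ▸ hle1 j hj, j1, hj1, ?_⟩
    rw [← heq2 j1 hj1]
    exact hlt1
  · left
    refine ⟨fun j hj => (heq1 j hj) ▸ hle2 j hj, j2, hj2, ?_⟩
    rw [heq1 j2 hj2]
    exact hlt2
  · right
    refine ⟨fun j hj => (heq1 j hj).trans (heq2 j hj), plateLT_trans (ord i) hlt1 hlt2⟩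

end Knight

end SwitchAux
namespace SwitchAux

variable {M : Type*} {m : ℕ}

lemma extend_succ (s : Strategy M m) (n : ℕ) (h : List M) :
    s.extend (n + 1) h = s.extend n (h ++ [s.choice h]) := rfl

lemma extend_append (s : Strategy M m) (n : ℕ) :
    ∀ h : List M, ∃ l : List M, s.extend n h = h ++ l ∧ l.length = n := by
  induction n with
  | zero => exact fun h => ⟨[], by simp [Strategy.extend]⟩
  | succ n ih =>
    intro h
    obtain ⟨l, hl, hlen⟩ := ih (h ++ [s.choice h])
    exact ⟨s.choice h :: l, by simp [Strategy.extend, hl], by simp [hlen]⟩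

lemma extend_length (s : Strategy M m) (n : ℕ) (h : List M) :
    (s.extend n h).length = h.length + n := by
  obtain ⟨l, hl, hlen⟩ := extend_append s n h
  simp [hl, hlen]

lemma extend_nodup (s : Strategy M m) (n : ℕ) :
    ∀ h : List M, h.Nodup → h.length + n ≤ m → (s.extend n h).Nodup := by
  induction n with
  | zero => exact fun h hn _ => hn
  | succ n ih =>
    intro h hn hlen
    rw [extend_succ]
    refine ih _ ?_ (by simp; omega)
    rw [List.nodup_append]
    exact ⟨hn, List.nodup_singleton _, by
      simp; exact fun a ha hax => s.valid h hn (by omega) (hax ▸ ha)⟩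

lemma extend_congr (s₁ s₂ : Strategy M m) (n : ℕ) :
    ∀ h : List M, (∀ g : List M, h.length ≤ g.length → g.length < h.length + n →
      s₁.choice g = s₂.choice g) → s₁.extend n h = s₂.extend n h := by
  induction n with
  | zero => intro h _; rfl
  | succ n ih =>
    intro h hc
    rw [extend_succ, extend_succ, hc h le_rfl (by omega)]
    exact ih _ (fun g hg1 hg2 => hc g (by simp at hg1 ⊢; omega) (by simp at hg2 ⊢; omega))

lemma play_eq_getD (s : Strategy M m) (h : List M) (hh : h.length ≤ m) (v : Fin m) (d : M) :
    s.play h v = (s.extend (m - h.length) h).getD v.val d := by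
  have hlen : (s.extend (m - h.length) h).length = m := by
    rw [extend_length]; omega
  have hv : v.val < (s.extend (m - h.length) h).length := by rw [hlen]; exact v.2
  rw [Strategy.play, List.getD_eq_getElem _ _ hv, List.getD_eq_getElem _ _ hv]

lemma play_lt (s : Strategy M m) (h : List M) (hh : h.length ≤ m) (v : Fin m)
    (hv : v.val < h.length) (d : M) : s.play h v = h.getD v.val d := by
  obtain ⟨l, hl, _⟩ := extend_append s (m - h.length) h
  rw [play_eq_getD s h hh v d, hl, List.getD_append _ _ _ _ hv]

lemma play_step (s : Strategy M m) (h : List M) (hh : h.length < m) :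
    s.play h = s.play (h ++ [s.choice h]) := by
  have : m - h.length = (m - (h ++ [s.choice h]).length) + 1 := by simp; omega
  unfold Strategy.play
  rw [this, extend_succ]

lemma play_at (s : Strategy M m) (h : List M) (hh : h.length < m) :
    s.play h ⟨h.length, hh⟩ = s.choice h := by
  rw [play_step s h hh, play_lt s _ (by simp; omega) _ (by simp) (s.choice [])]
  simp

lemma play_extend (s : Strategy M m) (n : ℕ) :
    ∀ h : List M, h.length + n ≤ m → s.play h = s.play (s.extend n h) := by
  induction n with
  | zero => intro h _; rfl
  | succ n ih =>
    intro h hn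
    rw [play_step s h (by omega), extend_succ]
    exact ih _ (by simp; omega)

lemma play_inj (s : Strategy M m) (h : List M) (hnd : h.Nodup) (hh : h.length ≤ m) :
    Function.Injective (s.play h) := by
  intro u v huv
  have hlen : (s.extend (m - h.length) h).length = m := by rw [extend_length]; omega
  have hnd2 : (s.extend (m - h.length) h).Nodup := extend_nodup s _ h hnd (by omega)
  have hu : u.val < (s.extend (m - h.length) h).length := by rw [hlen]; exact u.2
  have hv : v.val < (s.extend (m - h.length) h).length := by rw [hlen]; exact v.2
  rw [play_eq_getD s h hh u (s.choice []), play_eq_getD s h hh v (s.choice []),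
    List.getD_eq_getElem _ _ hu, List.getD_eq_getElem _ _ hv] at huv
  exact Fin.ext (hnd2.getElem_inj_iff.mp huv)

lemma play_notmem (s : Strategy M m) (h : List M) (hnd : h.Nodup) (hh : h.length ≤ m)
    (p : Fin m) (hp : h.length ≤ p.val) : s.play h p ∉ h := by
  obtain ⟨l, hl, hlen⟩ := extend_append s (m - h.length) h
  have hnd2 : (s.extend (m - h.length) h).Nodup := extend_nodup s _ h hnd (by omega)
  rw [hl, List.nodup_append] at hnd2
  have : s.play h p ∈ l := by
    rw [play_eq_getD s h hh p (s.choice []), hl,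
      List.getD_append_right _ _ _ _ hp, List.getD_eq_getElem _ _ (by omega)]
    exact List.getElem_mem _
  intro hmem
  exact hnd2.2.2 _ hmem _ this rfl

end SwitchAux
namespace SwitchAux

variable {M : Type*}

/-- `x` is the favourite remaining morsel after history `h`, w.r.t. `lo`. -/
def Grd (lo : LinearOrder M) (h : List M) (x : M) : Prop :=
  x ∉ h ∧ ∀ y, y ∉ h → y ≠ x → lo.lt y x

lemma Grd.unique {lo : LinearOrder M} {h : List M} {x y : M}
    (hx : Grd lo h x) (hy : Grd lo h y) : x = y := by
  letI := lo
  by_contra hne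
  exact lt_asymm (hx.2 y hy.1 (Ne.symm hne)) (hy.2 x hx.1 hne)

lemma Grd.congr [DecidableEq M] {lo : LinearOrder M} {h₁ h₂ : List M} {x : M}
    (hfin : h₁.toFinset = h₂.toFinset) (hx : Grd lo h₁ x) : Grd lo h₂ x := by
  have hmem : ∀ y : M, y ∈ h₁ ↔ y ∈ h₂ := by
    intro y
    rw [← List.mem_toFinset, ← List.mem_toFinset, hfin]
  exact ⟨fun hc => hx.1 ((hmem x).mpr hc), fun y hy hne => hx.2 y (fun hc => hy ((hmem y).mp hc)) hne⟩

variable [DecidableEq M] [Fintype M]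

noncomputable def gchoice (lo : LinearOrder M) (x₀ : M) (h : List M) : M :=
  if hne : (Finset.univ \ h.toFinset).Nonempty then @Finset.max' M lo _ hne else x₀

lemma gchoice_grd (lo : LinearOrder M) (x₀ : M) (h : List M)
    (hlen : h.length < Fintype.card M) : Grd lo h (gchoice lo x₀ h) := by
  letI := lo
  have hne : (Finset.univ \ h.toFinset).Nonempty := by
    rw [← Finset.card_pos, Finset.card_sdiff_of_subset (Finset.subset_univ _)]
    have := h.toFinset_card_le
    have := Finset.card_univ (α := M)
    omega
  have hmem := Finset.max'_mem _ hne
  rw [Finset.mem_sdiff, List.mem_toFinset] at hmem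
  constructor
  · rw [gchoice, dif_pos hne]; exact hmem.2
  · intro y hy hyne
    rw [gchoice, dif_pos hne] at hyne ⊢
    refine lt_of_le_of_ne (Finset.le_max' _ y ?_) hyne
    rw [Finset.mem_sdiff, List.mem_toFinset]
    exact ⟨Finset.mem_univ y, hy⟩

/-- Two strategies that are both greedy on a range of turn lengths extend
set-equal histories by the same list of morsels. -/
lemma extend_pair {m : ℕ} (s₁ s₂ : Strategy M m) (LO : ℕ → LinearOrder M) (n : ℕ) :
    ∀ g₁ g₂ : List M, g₁.Nodup → g₂.Nodup → g₁.length = g₂.length →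
      g₁.toFinset = g₂.toFinset → g₁.length + n ≤ m →
      (∀ g : List M, g.Nodup → g₁.length ≤ g.length → g.length < g₁.length + n →
        Grd (LO g.length) g (s₁.choice g)) →
      (∀ g : List M, g.Nodup → g₁.length ≤ g.length → g.length < g₁.length + n →
        Grd (LO g.length) g (s₂.choice g)) →
      ∃ l : List M, s₁.extend n g₁ = g₁ ++ l ∧ s₂.extend n g₂ = g₂ ++ l := by
  induction n with
  | zero => exact fun g₁ g₂ _ _ _ _ _ _ _ => ⟨[], by simp [Strategy.extend], by simp [Strategy.extend]⟩
  | succ n ih =>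
    intro g₁ g₂ hnd₁ hnd₂ hlen hfin hm H₁ H₂
    have hg1 : Grd (LO g₁.length) g₁ (s₁.choice g₁) := H₁ g₁ hnd₁ le_rfl (by omega)
    have hg2 : Grd (LO g₁.length) g₁ (s₂.choice g₂) := by
      have := H₂ g₂ hnd₂ (by omega) (by omega)
      rw [← hlen] at this
      exact this.congr hfin.symm
    have hc : s₁.choice g₁ = s₂.choice g₂ := hg1.unique hg2
    set c := s₁.choice g₁ with hcdef
    have hcg2 : c ∉ g₂ := by
      rw [hc]; exact (H₂ g₂ hnd₂ (by omega) (by omega)).1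
    obtain ⟨l, hl₁, hl₂⟩ := ih (g₁ ++ [c]) (g₂ ++ [c])
      (by rw [List.nodup_append]; exact ⟨hnd₁, List.nodup_singleton _, by simp; exact fun a ha hax => hg1.1 (hax ▸ ha)⟩)
      (by rw [List.nodup_append]; exact ⟨hnd₂, List.nodup_singleton _, by simp; exact fun a ha hax => hcg2 (hax ▸ ha)⟩)
      (by simp [hlen])
      (by simp [hfin])
      (by simp; omega)
      (fun g hg h1 h2 => H₁ g hg (by simp at h1; omega) (by simp at h2; omega))
      (fun g hg h1 h2 => H₂ g hg (by simp at h1 ⊢; omega) (by simp at h2 ⊢; omega))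
    refine ⟨c :: l, ?_, ?_⟩
    · rw [extend_succ, ← hcdef, hl₁, List.append_assoc]; rfl
    · rw [extend_succ, ← hc, hl₂, List.append_assoc]; rfl

variable {m k : ℕ}

/-- At a lout turn, a greedy choice admits no profitable deviation. -/
lemma lout_safe (Q : Fin m → Fin k) (ord : Fin k → LinearOrder M) (s : Strategy M m)
    (u : Fin m) (h : List M) (hnd : h.Nodup) (hlen : h.length = u.val) (x : M) (hx : x ∉ h)
    (hgrd : Grd (ord (Q u)) h (s.choice h)) :
    ¬ LoutLT Q ord (Q u) (s.play h) (s.play (h ++ [x])) := by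
  letI := ord (Q u)
  have hm : h.length < m := by rw [hlen]; exact u.2
  rintro ⟨v, hQv, hpre, hlt⟩
  rcases lt_trichotomy v.val u.val with hv | hv | hv
  · rw [play_lt s h (by omega) v (by omega) x,
      play_lt s (h ++ [x]) (by simp; omega) v (by simp; omega) x,
      List.getD_append _ _ _ _ (by omega)] at hlt
    exact lt_irrefl _ hlt
  · have hvu : v = ⟨h.length, hm⟩ := by
      apply Fin.ext; show v.val = h.length; omega
    rw [hvu, play_at s h hm,
      play_lt s (h ++ [x]) (by simp; omega) _ (by simp) x,
      List.getD_append_right _ _ _ _ le_rfl] at hlt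
    simp at hlt
    rcases eq_or_ne x (s.choice h) with hxc | hxc
    · rw [hxc] at hlt; exact lt_irrefl _ hlt
    · exact lt_asymm hlt (hgrd.2 x hx hxc)
  · have hu' : (⟨h.length, hm⟩ : Fin m) < v := by rw [Fin.lt_def]; simpa [hlen]
    have hcx : s.choice h = x := by
      have := hpre ⟨h.length, hm⟩ hu'
      rw [play_at s h hm, play_lt s (h ++ [x]) (by simp; omega) _ (by simp) x,
        List.getD_append_right _ _ _ _ le_rfl] at this
      simpa using this
    have : s.play h = s.play (h ++ [x]) := by rw [← hcx]; exact play_step s h hm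
    rw [this] at hlt
    exact lt_irrefl _ hlt

/-- At a lout turn, an SPE choice is greedy. -/
lemma lout_forced (Q : Fin m → Fin k) (ord : Fin k → LinearOrder M) (s : Strategy M m)
    (u : Fin m) (h : List M) (hnd : h.Nodup) (hlen : h.length = u.val)
    (hspe : ∀ x : M, x ∉ h → ¬ LoutLT Q ord (Q u) (s.play h) (s.play (h ++ [x]))) :
    Grd (ord (Q u)) h (s.choice h) := by
  letI := ord (Q u)
  have hm : h.length < m := by rw [hlen]; exact u.2
  refine ⟨s.valid h hnd hm, ?_⟩
  intro y hy hne
  by_contra hnlt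
  have hlt : s.choice h < y := lt_of_le_of_ne (not_lt.mp hnlt) (Ne.symm hne)
  refine hspe y hy ⟨⟨h.length, hm⟩, ?_, ?_, ?_⟩
  · congr 1; exact Fin.ext hlen
  · intro w hw
    rw [play_lt s h (by omega) w (by simpa [Fin.lt_def] using hw) y,
      play_lt s (h ++ [y]) (by simp; omega) w (by simp [Fin.lt_def] at hw ⊢; omega) y,
      List.getD_append _ _ _ _ (by simpa [Fin.lt_def] using hw)]
  · rw [play_at s h hm, play_lt s (h ++ [y]) (by simp; omega) _ (by simp) y,
      List.getD_append_right _ _ _ _ le_rfl]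
    simpa using hlt

end SwitchAux
namespace SwitchAux

variable {M : Type*}

lemma exists_max_rel {α : Type*} [DecidableEq α] (r : α → α → Prop) (htr : Transitive r)
    (hirr : Irreflexive r) :
    ∀ n (s : Finset α), s.card = n → s.Nonempty → ∃ a ∈ s, ∀ b ∈ s, ¬ r a b := by
  classical
  intro n
  induction n using Nat.strong_induction_on with
  | _ n ih =>
    intro s hcard hs
    obtain ⟨a, ha⟩ := hs
    by_cases hemp : (s.filter (fun b => r a b)).Nonempty
    · have hss : s.filter (fun b => r a b) ⊂ s :=
        Finset.filter_ssubset.mpr ⟨a, ha, hirr a⟩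
      obtain ⟨b, hb, hmax⟩ := ih _ (by rw [← hcard]; exact Finset.card_lt_card hss) _ rfl hemp
      rw [Finset.mem_filter] at hb
      exact ⟨b, hb.1, fun c hc hrc => hmax c (Finset.mem_filter.mpr ⟨hc, htr hb.2 hrc⟩) hrc⟩
    · exact ⟨a, ha, fun b hb hr => hemp ⟨b, Finset.mem_filter.mpr ⟨hb, hr⟩⟩⟩

section Helpers

variable [DecidableEq M] {m k : ℕ}

lemma knightLT_congr {P Q : Fin m → Fin k} {ord : Fin k → LinearOrder M} {i : Fin k}
    {a b a' b' : Fin m → M} (ha : ∀ r, plate P a r = plate Q a' r)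
    (hb : ∀ r, plate P b r = plate Q b' r) :
    KnightLT P ord i a b ↔ KnightLT Q ord i a' b' := by
  unfold KnightLT
  simp only [ha, hb]

lemma plate_eq_of_agree {P : Fin m → Fin k} {a b : Fin m → M} {r : Fin k}
    (h : ∀ p, P p = r → a p = b p) : plate P a r = plate P b r := by
  ext x
  simp only [mem_plate]
  constructor
  · rintro ⟨p, hp, he⟩; exact ⟨p, hp, by rw [← h p hp]; exact he⟩
  · rintro ⟨p, hp, he⟩; exact ⟨p, hp, by rw [h p hp]; exact he⟩

/-- If two (injective) plays differ exactly at one position `p₀`, their plates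
for the mover at `p₀` are obtained by swapping one morsel. -/
lemma plates_swap_one {P : Fin m → Fin k} {a b : Fin m → M} {p₀ : Fin m} {x y : M}
    (hax : a p₀ = x) (hby : b p₀ = y)
    (hagree : ∀ p, p ≠ p₀ → P p = P p₀ → a p = b p)
    (hainj : Function.Injective a) (hbinj : Function.Injective b) :
    ∃ C : Finset M, x ∉ C ∧ y ∉ C ∧
      plate P a (P p₀) = insert x C ∧ plate P b (P p₀) = insert y C := by
  refine ⟨(plate P a (P p₀)).erase x, Finset.notMem_erase _ _, ?_, ?_, ?_⟩
  · intro hy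
    rw [Finset.mem_erase, mem_plate] at hy
    obtain ⟨hyx, p, hp, hpe⟩ := hy
    by_cases hp0 : p = p₀
    · rw [hp0, hax] at hpe; exact hyx hpe.symm
    · have : b p = y := by rw [← hagree p hp0 hp]; exact hpe
      exact hp0 (hbinj (by rw [this, hby]))
  · rw [Finset.insert_erase]
    rw [mem_plate]
    exact ⟨p₀, rfl, hax⟩
  · have herase : (plate P a (P p₀)).erase x = (plate P b (P p₀)).erase y := by
      ext z
      simp only [Finset.mem_erase, mem_plate]
      constructor
      · rintro ⟨hzx, p, hp, hpe⟩
        have hp0 : p ≠ p₀ := fun hc => hzx (by rw [hc, hax] at hpe; exact hpe.symm)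
        refine ⟨?_, p, hp, by rw [← hagree p hp0 hp]; exact hpe⟩
        intro hzy
        have : b p = b p₀ := by rw [← hagree p hp0 hp, hpe, hzy, hby]
        exact hp0 (hbinj this)
      · rintro ⟨hzy, p, hp, hpe⟩
        have hp0 : p ≠ p₀ := fun hc => hzy (by rw [hc, hby] at hpe; exact hpe.symm)
        refine ⟨?_, p, hp, by rw [hagree p hp0 hp]; exact hpe⟩
        intro hzx
        have : a p = a p₀ := by rw [hagree p hp0 hp, hpe, hzx, hax]
        exact hp0 (hainj this)
    rw [herase, Finset.insert_erase]
    rw [mem_plate]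
    exact ⟨p₀, rfl, hby⟩

lemma plateLE_insert_swap (lo : LinearOrder M) {C : Finset M} {x y : M}
    (hx : x ∉ C) (hy : y ∉ C) (hxy : lo.le x y) :
    PlateLE lo.le (insert x C) (insert y C) := by
  classical
  letI := lo
  refine ⟨fun a => if ha : a.1 = x then ⟨y, Finset.mem_insert_self y C⟩
    else ⟨a.1, Finset.mem_insert_of_mem (by
      rcases Finset.mem_insert.mp a.2 with h | h
      · exact absurd h ha
      · exact h)⟩, ⟨?_, ?_⟩, ?_⟩
  · rintro ⟨a, haC⟩ ⟨b, hbC⟩ hab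
    dsimp only at hab
    by_cases ha : a = x <;> by_cases hb : b = x
    · exact Subtype.ext (ha.trans hb.symm)
    · rw [dif_pos ha, dif_neg hb] at hab
      have : y = b := congrArg Subtype.val hab
      exact absurd ((Finset.mem_insert.mp hbC).resolve_left hb) (this ▸ hy)
    · rw [dif_neg ha, dif_pos hb] at hab
      have : a = y := congrArg Subtype.val hab
      exact absurd ((Finset.mem_insert.mp haC).resolve_left ha) (this ▸ hy)
    · rw [dif_neg ha, dif_neg hb] at hab
      exact Subtype.ext (congrArg Subtype.val hab : a = b)
  · rintro ⟨b, hbC⟩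
    rcases Finset.mem_insert.mp hbC with hb | hb
    · exact ⟨⟨x, Finset.mem_insert_self x C⟩, by simp [hb]⟩
    · have hbx : b ≠ x := fun hc => hx (hc ▸ hb)
      exact ⟨⟨b, Finset.mem_insert_of_mem hb⟩, by simp [hbx]⟩
  · rintro ⟨a, haC⟩
    by_cases ha : a = x
    · simpa [ha] using hxy
    · simp [ha]

lemma list_decomp (h : List M) (r : ℕ) (x₀ : M) (hlen : h.length = r + 1) :
    h = h.take r ++ [h.getD r x₀] := by
  conv_lhs => rw [← List.take_append_drop r h]
  congr 1
  rw [List.drop_eq_getElem_cons (by omega), List.getD_eq_getElem _ _ (by omega)]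
  congr 1
  apply List.eq_nil_of_length_eq_zero
  simp [hlen]

end Helpers

end SwitchAux
namespace SwitchAux

variable {M : Type*}

section Lists

lemma getD_mid0 (h l : List M) (x y d : M) :
    (h ++ x :: y :: l).getD h.length d = x := by
  rw [List.getD_append_right _ _ _ _ le_rfl]
  simp

lemma getD_mid1 (h l : List M) (x y d : M) :
    (h ++ x :: y :: l).getD (h.length + 1) d = y := by
  rw [List.getD_append_right _ _ _ _ (by omega)]
  simp

lemma getD_hi (h l : List M) (x y d : M) (p : ℕ) (hp : h.length + 2 ≤ p) :
    (h ++ x :: y :: l).getD p d = l.getD (p - h.length - 2) d := by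
  rw [List.getD_append_right _ _ _ _ (by omega)]
  have : p - h.length = (p - h.length - 2) + 2 := by omega
  rw [this]
  simp [List.getD_cons_succ]

end Lists

section Game

variable [DecidableEq M] [Fintype M] {m k : ℕ}
variable (P : Fin m → Fin k) (ord : Fin k → LinearOrder M) (t : Fin m) (ht : t.val + 1 < m)

lemma swap_fix (v : Fin m) (h1 : v ≠ t) (h2 : v ≠ ⟨t.val + 1, ht⟩) :
    Equiv.swap t ⟨t.val + 1, ht⟩ v = v := Equiv.swap_apply_of_ne_of_ne h1 h2

lemma plate_lists (h l : List M) (x y : M) (hh : h.length = t.val) (x₀ : M) (r : Fin k) :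
    plate P (fun v => (h ++ x :: y :: l).getD v.val x₀) r
      = plate (P ∘ Equiv.swap t ⟨t.val + 1, ht⟩)
          (fun v => (h ++ y :: x :: l).getD v.val x₀) r := by
  set t1 : Fin m := ⟨t.val + 1, ht⟩ with ht1
  have hswap : ∀ v : Fin m, (h ++ x :: y :: l).getD v.val x₀
      = (h ++ y :: x :: l).getD ((Equiv.swap t t1) v).val x₀ := by
    intro v
    rcases lt_trichotomy v.val t.val with hv | hv | hv
    · rw [swap_fix t ht v (by rw [Fin.ne_iff_vne]; omega) (by rw [Fin.ne_iff_vne]; simp [ht1]; omega),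
        List.getD_append _ _ _ _ (by omega), List.getD_append _ _ _ _ (by omega)]
    · have hvt : v = t := Fin.ext hv
      rw [hvt, Equiv.swap_apply_left]
      have : t1.val = h.length + 1 := by simp [ht1, hh]
      rw [this, getD_mid1]
      have : t.val = h.length := by omega
      rw [this, getD_mid0]
    · rcases eq_or_lt_of_le (show t.val + 1 ≤ v.val by omega) with hv1 | hv1
      · have hvt : v = t1 := Fin.ext (by simp [ht1]; omega)
        rw [hvt, Equiv.swap_apply_right]
        have e1 : t1.val = h.length + 1 := by simp [ht1, hh]
        have e2 : t.val = h.length := by omega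
        rw [e1, getD_mid1, e2, getD_mid0]
      · rw [swap_fix t ht v (by rw [Fin.ne_iff_vne]; omega) (by rw [Fin.ne_iff_vne]; simp [ht1]; omega),
          getD_hi _ _ _ _ _ _ (by omega), getD_hi _ _ _ _ _ _ (by omega)]
  have hsymm : (Equiv.swap t t1).symm = Equiv.swap t t1 := Equiv.symm_swap t t1
  rw [plate_comp, hsymm]
  exact congrArg (fun f => plate P f r) (funext hswap)

/-- If the two movers coincide, the swapped turn order is equal. -/
lemma comp_swap_eq (hij : P t = P ⟨t.val + 1, ht⟩) :
    P ∘ Equiv.swap t ⟨t.val + 1, ht⟩ = P := by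
  funext v
  rcases eq_or_ne v t with rfl | h1
  · simp [Equiv.swap_apply_left, hij]
  rcases eq_or_ne v ⟨t.val + 1, ht⟩ with rfl | h2
  · simp [Equiv.swap_apply_right, hij]
  · simp [swap_fix t ht v h1 h2]

def movP (u : ℕ) : Fin k := if hu : u < m then P ⟨u, hu⟩ else P t

noncomputable def S0 (hm : m ≤ Fintype.card M) (x₀ : M) : Strategy M m :=
  ⟨fun h => gchoice (ord (movP P t h.length)) x₀ h,
   fun h _ hlen => (gchoice_grd _ x₀ h (lt_of_lt_of_le hlen hm)).1⟩

lemma movP_eq (u : ℕ) (hu : u < m) : movP P t u = P ⟨u, hu⟩ := by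
  unfold movP; rw [dif_pos hu]

lemma S0_choice (hm : m ≤ Fintype.card M) (x₀ : M) (g : List M) :
    (S0 P ord t hm x₀).choice g = gchoice (ord (movP P t g.length)) x₀ g := rfl

lemma S0_grd (hm : m ≤ Fintype.card M) (x₀ : M) (g : List M) (hg : g.length < m) :
    Grd (ord (P ⟨g.length, hg⟩)) g ((S0 P ord t hm x₀).choice g) := by
  rw [S0_choice, movP_eq P t g.length hg]
  exact gchoice_grd _ x₀ g (lt_of_lt_of_le hg hm)

noncomputable def kmax (hm : m ≤ Fintype.card M) (x₀ : M) (i : Fin k) (h : List M) : M :=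
  @dite _ (∃ y ∈ Finset.univ \ h.toFinset, ∀ y' ∈ Finset.univ \ h.toFinset,
      ¬ KnightLT (P ∘ Equiv.swap t ⟨t.val + 1, ht⟩) ord i
        ((S0 P ord t hm x₀).play (h ++ [y])) ((S0 P ord t hm x₀).play (h ++ [y'])))
    (Classical.propDecidable _) (fun H => H.choose) (fun _ => x₀)

lemma kmax_exists (hm : m ≤ Fintype.card M) (x₀ : M) (i : Fin k) (h : List M)
    (hlen : h.length < m) :
    ∃ y ∈ Finset.univ \ h.toFinset, ∀ y' ∈ Finset.univ \ h.toFinset,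
      ¬ KnightLT (P ∘ Equiv.swap t ⟨t.val + 1, ht⟩) ord i
        ((S0 P ord t hm x₀).play (h ++ [y])) ((S0 P ord t hm x₀).play (h ++ [y'])) := by
  refine exists_max_rel
    (fun y y' => KnightLT (P ∘ Equiv.swap t ⟨t.val + 1, ht⟩) ord i
      ((S0 P ord t hm x₀).play (h ++ [y])) ((S0 P ord t hm x₀).play (h ++ [y'])))
    (fun a b c hab hbc => knightLT_trans _ _ hab hbc)
    (fun a => knightLT_irrefl _ _ _ _) _ _ rfl ?_
  rw [← Finset.card_pos, Finset.card_sdiff_of_subset (Finset.subset_univ _)]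
  have h1 := h.toFinset_card_le
  have h2 := Finset.card_univ (α := M)
  omega

lemma kmax_spec (hm : m ≤ Fintype.card M) (x₀ : M) (i : Fin k) (h : List M)
    (hlen : h.length < m) :
    kmax P ord t ht hm x₀ i h ∈ Finset.univ \ h.toFinset ∧
      ∀ y' ∈ Finset.univ \ h.toFinset,
        ¬ KnightLT (P ∘ Equiv.swap t ⟨t.val + 1, ht⟩) ord i
          ((S0 P ord t hm x₀).play (h ++ [kmax P ord t ht hm x₀ i h]))
          ((S0 P ord t hm x₀).play (h ++ [y'])) := by
  have H := kmax_exists P ord t ht hm x₀ i h hlen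
  unfold kmax
  rw [dif_pos H]
  exact H.choose_spec

variable (L : Finset (Fin m))

lemma t1_not_mem_L' : (⟨t.val + 1, ht⟩ : Fin m) ∉ insert t (L.erase ⟨t.val + 1, ht⟩) := by
  rw [Finset.mem_insert, Finset.mem_erase]
  rintro (hc | ⟨hc, _⟩)
  · exact absurd (congrArg Fin.val hc) (by simp)
  · exact hc rfl

lemma mem_L'_lt {u : Fin m} (hu : u.val < t.val) :
    u ∈ insert t (L.erase ⟨t.val + 1, ht⟩) ↔ u ∈ L := by
  rw [Finset.mem_insert, Finset.mem_erase]
  constructor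
  · rintro (hc | ⟨_, hc⟩)
    · exact absurd (congrArg Fin.val hc) (by omega)
    · exact hc
  · intro hu'
    exact Or.inr ⟨by rw [Fin.ne_iff_vne]; simp; omega, hu'⟩

lemma spe_greedy_G (hafter : ∀ u : Fin m, t < u → u ∈ L) (s : Strategy M m)
    (hspe : SPE (fun u => if u ∈ L then LoutLT P ord (P u) else KnightLT P ord (P u)) s)
    (g : List M) (hnd : g.Nodup) (hlo : t.val + 1 ≤ g.length) (hg : g.length < m) :
    Grd (ord (P ⟨g.length, hg⟩)) g (s.choice g) := by
  set u : Fin m := ⟨g.length, hg⟩ with hu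
  have huL : u ∈ L := hafter u (by rw [Fin.lt_def]; simp [hu]; omega)
  apply lout_forced P ord s u g hnd rfl
  intro x hx
  simpa only [if_pos huL] using hspe u g hnd rfl x hx

lemma spe_greedy_G'_t (s' : Strategy M m)
    (hspe : SPE (fun u => if u ∈ insert t (L.erase ⟨t.val + 1, ht⟩) then
        LoutLT (P ∘ Equiv.swap t ⟨t.val + 1, ht⟩) ord ((P ∘ Equiv.swap t ⟨t.val + 1, ht⟩) u)
      else KnightLT (P ∘ Equiv.swap t ⟨t.val + 1, ht⟩) ord
        ((P ∘ Equiv.swap t ⟨t.val + 1, ht⟩) u)) s')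
    (g : List M) (hnd : g.Nodup) (hlen : g.length = t.val) :
    Grd (ord (P ⟨t.val + 1, ht⟩)) g (s'.choice g) := by
  have hQ : (P ∘ Equiv.swap t ⟨t.val + 1, ht⟩) t = P ⟨t.val + 1, ht⟩ := by
    simp [Equiv.swap_apply_left]
  rw [← hQ]
  apply lout_forced (P ∘ Equiv.swap t ⟨t.val + 1, ht⟩) ord s' t g hnd hlen
  intro x hx
  simpa only [if_pos (Finset.mem_insert_self t (L.erase ⟨t.val + 1, ht⟩))] using
    hspe t g hnd hlen x hx

lemma spe_greedy_G'_tail (hafter : ∀ u : Fin m, t < u → u ∈ L) (s' : Strategy M m)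
    (hspe : SPE (fun u => if u ∈ insert t (L.erase ⟨t.val + 1, ht⟩) then
        LoutLT (P ∘ Equiv.swap t ⟨t.val + 1, ht⟩) ord ((P ∘ Equiv.swap t ⟨t.val + 1, ht⟩) u)
      else KnightLT (P ∘ Equiv.swap t ⟨t.val + 1, ht⟩) ord
        ((P ∘ Equiv.swap t ⟨t.val + 1, ht⟩) u)) s')
    (g : List M) (hnd : g.Nodup) (hlo : t.val + 2 ≤ g.length) (hg : g.length < m) :
    Grd (ord (P ⟨g.length, hg⟩)) g (s'.choice g) := by
  set u : Fin m := ⟨g.length, hg⟩ with hu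
  have hufix : Equiv.swap t ⟨t.val + 1, ht⟩ u = u :=
    swap_fix t ht u (by rw [Fin.ne_iff_vne]; simp [hu]; omega)
      (by rw [Fin.ne_iff_vne]; simp [hu]; omega)
  have huL : u ∈ insert t (L.erase ⟨t.val + 1, ht⟩) := by
    refine Finset.mem_insert_of_mem (Finset.mem_erase.mpr ⟨?_, ?_⟩)
    · rw [Fin.ne_iff_vne]; simp [hu]; omega
    · exact hafter u (by rw [Fin.lt_def]; simp [hu]; omega)
  have hQ : (P ∘ Equiv.swap t ⟨t.val + 1, ht⟩) u = P u := by simp [hufix]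
  rw [show P ⟨g.length, hg⟩ = (P ∘ Equiv.swap t ⟨t.val + 1, ht⟩) u by rw [hQ]]
  apply lout_forced (P ∘ Equiv.swap t ⟨t.val + 1, ht⟩) ord s' u g hnd rfl
  intro x hx
  simpa only [if_pos huL] using hspe u g hnd rfl x hx

end Game

end SwitchAux
namespace SwitchAux

variable {M : Type*}

section Lists2

variable [DecidableEq M]

lemma nodup_app2 {g : List M} {x y : M} (hnd : g.Nodup) (hx : x ∉ g) (hy : y ∉ g)
    (hxy : x ≠ y) : (g ++ [x, y]).Nodup := by
  rw [List.nodup_append]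
  refine ⟨hnd, by simp [hxy], ?_⟩
  intro a ha b hb hab
  subst hab
  simp at hb
  rcases hb with rfl | rfl
  · exact hx ha
  · exact hy ha

lemma toFinset_app2_comm (g : List M) (x y : M) :
    (g ++ [x, y]).toFinset = (g ++ [y, x]).toFinset := by
  ext a
  simp only [List.toFinset_append, Finset.mem_union, List.mem_toFinset, List.mem_cons,
    List.mem_singleton, List.not_mem_nil, or_false]
  tauto

lemma app2_eq (g : List M) (x y : M) : (g ++ [x]) ++ [y] = g ++ [x, y] := by
  simp

end Lists2

section Backward

variable [DecidableEq M] [Fintype M] {m k : ℕ}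
variable (P : Fin m → Fin k) (ord : Fin k → LinearOrder M) (t : Fin m) (ht : t.val + 1 < m)

/-- The strategy for game `G` built from a strategy of the swapped game `G'`. -/
noncomputable def stratB (hm : m ≤ Fintype.card M) (x₀ : M) (s' : Strategy M m) :
    Strategy M m where
  choice h :=
    if h.length < t.val then s'.choice h
    else if h.length = t.val then
      s'.choice (h ++ [gchoice (ord (P ⟨t.val + 1, ht⟩)) x₀ h])
    else gchoice (ord (movP P t h.length)) x₀ h
  valid h hnd hlen := by
    by_cases h1 : h.length < t.val
    · simp only [if_pos h1]
      exact s'.valid h hnd hlen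
    · by_cases h2 : h.length = t.val
      · simp only [if_neg h1, if_pos h2]
        set w := gchoice (ord (P ⟨t.val + 1, ht⟩)) x₀ h with hw
        have hwg : Grd (ord (P ⟨t.val + 1, ht⟩)) h w :=
          gchoice_grd _ x₀ h (lt_of_lt_of_le hlen hm)
        have hnd2 : (h ++ [w]).Nodup := by
          rw [List.nodup_append]
          exact ⟨hnd, List.nodup_singleton _, by simp; exact fun a ha hax => hwg.1 (hax ▸ ha)⟩
        have := s'.valid (h ++ [w]) hnd2 (by simp [h2]; omega)
        intro hc
        exact this (by simp [hc])
      · simp only [if_neg h1, if_neg h2]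
        exact (gchoice_grd _ x₀ h (lt_of_lt_of_le hlen hm)).1

lemma stratB_choice (hm : m ≤ Fintype.card M) (x₀ : M) (s' : Strategy M m) (h : List M) :
    (stratB P ord t ht hm x₀ s').choice h =
      if h.length < t.val then s'.choice h
      else if h.length = t.val then
        s'.choice (h ++ [gchoice (ord (P ⟨t.val + 1, ht⟩)) x₀ h])
      else gchoice (ord (movP P t h.length)) x₀ h := rfl

variable (L : Finset (Fin m))

/-- Abbreviation for the preference system of the swapped game `G'`. -/
def prefG' : Fin m → (Fin m → M) → (Fin m → M) → Prop := fun u =>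
  if u ∈ insert t (L.erase ⟨t.val + 1, ht⟩) then
    LoutLT (P ∘ Equiv.swap t ⟨t.val + 1, ht⟩) ord ((P ∘ Equiv.swap t ⟨t.val + 1, ht⟩) u)
  else KnightLT (P ∘ Equiv.swap t ⟨t.val + 1, ht⟩) ord ((P ∘ Equiv.swap t ⟨t.val + 1, ht⟩) u)

def prefG : Fin m → (Fin m → M) → (Fin m → M) → Prop := fun u =>
  if u ∈ L then LoutLT P ord (P u) else KnightLT P ord (P u)

section BackCore

variable (hm : m ≤ Fintype.card M) (x₀ : M) (s' : Strategy M m)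

/-- Core computation: from a history of length `t`, the constructed strategy and
`s'` produce outcome lists that differ by transposing positions `t, t+1`. -/
lemma back_core (hafter : ∀ u : Fin m, t < u → u ∈ L)
    (hspe : SPE (prefG' P ord t ht L) s')
    (g : List M) (hnd : g.Nodup) (hlen : g.length = t.val) :
    ∃ l : List M,
      s'.extend (m - g.length) g
        = g ++ gchoice (ord (P ⟨t.val + 1, ht⟩)) x₀ g ::
            s'.choice (g ++ [gchoice (ord (P ⟨t.val + 1, ht⟩)) x₀ g]) :: l ∧
      (stratB P ord t ht hm x₀ s').extend (m - g.length) g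
        = g ++ s'.choice (g ++ [gchoice (ord (P ⟨t.val + 1, ht⟩)) x₀ g]) ::
            gchoice (ord (P ⟨t.val + 1, ht⟩)) x₀ g :: l := by
  have hgm : g.length < m := by omega
  set S := stratB P ord t ht hm x₀ s' with hS
  set w := gchoice (ord (P ⟨t.val + 1, ht⟩)) x₀ g with hw
  have hwg : Grd (ord (P ⟨t.val + 1, ht⟩)) g w :=
    gchoice_grd _ x₀ g (lt_of_lt_of_le hgm hm)
  set c := s'.choice (g ++ [w]) with hc
  have hndw : (g ++ [w]).Nodup := by
    rw [List.nodup_append]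
    exact ⟨hnd, List.nodup_singleton _, by simp; exact fun a ha hax => hwg.1 (hax ▸ ha)⟩
  have hcnot : c ∉ g ++ [w] := s'.valid (g ++ [w]) hndw (by simp; omega)
  have hcg : c ∉ g := fun hc' => hcnot (by simp [hc'])
  have hcw : c ≠ w := fun hc' => hcnot (by simp [hc'])
  -- the s' side
  have e1 : s'.choice g = w :=
    Grd.unique (spe_greedy_G'_t P ord t ht L s' hspe g hnd hlen) hwg
  have estep0 : ∀ n, s'.extend (n + 1 + 1) g = s'.extend n (g ++ [w, c]) := by
    intro n
    rw [extend_succ, e1, extend_succ, ← hc, app2_eq]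
  have estep : s'.extend (m - g.length) g = s'.extend (m - g.length - 2) (g ++ [w, c]) := by
    conv_lhs => rw [show m - g.length = (m - g.length - 2) + 1 + 1 by omega]
    exact estep0 _
  -- the S side
  have f1 : S.choice g = c := by
    rw [hS, stratB_choice, if_neg (by omega), if_pos hlen]
  have hwgc : Grd (ord (P ⟨t.val + 1, ht⟩)) (g ++ [c]) w := by
    constructor
    · simp only [List.mem_append, List.mem_singleton]
      rintro (hmem | hmem)
      · exact hwg.1 hmem
      · exact hcw hmem.symm
    · intro y hy hne
      exact hwg.2 y (fun hmem => hy (by simp [hmem])) hne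
  have f2 : S.choice (g ++ [c]) = w := by
    rw [hS, stratB_choice, if_neg (by simp; omega), if_neg (by simp; omega)]
    have hl1 : (g ++ [c]).length < m := by simp [hlen]; omega
    have hmv : movP P t (g ++ [c]).length = P ⟨t.val + 1, ht⟩ := by
      rw [movP_eq P t _ hl1]
      congr 1
      apply Fin.ext
      simp [hlen]
    rw [hmv]
    exact Grd.unique (gchoice_grd _ x₀ (g ++ [c]) (lt_of_lt_of_le hl1 hm)) hwgc
  have fstep0 : ∀ n, S.extend (n + 1 + 1) g = S.extend n (g ++ [c, w]) := by
    intro n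
    rw [extend_succ, f1, extend_succ, f2, app2_eq]
  have fstep : S.extend (m - g.length) g = S.extend (m - g.length - 2) (g ++ [c, w]) := by
    conv_lhs => rw [show m - g.length = (m - g.length - 2) + 1 + 1 by omega]
    exact fstep0 _
  -- pair the greedy tails
  obtain ⟨l, hl1, hl2⟩ := extend_pair s' S (fun u => ord (movP P t u)) (m - g.length - 2)
    (g ++ [w, c]) (g ++ [c, w])
    (nodup_app2 hnd hwg.1 hcg (Ne.symm hcw))
    (nodup_app2 hnd hcg hwg.1 hcw)
    (by simp)
    (toFinset_app2_comm g w c)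
    (by simp; omega)
    (fun g' hnd' hlo' hhi' => by
      show Grd (ord (movP P t g'.length)) g' (s'.choice g')
      have hg' : g'.length < m := by simp at hhi'; omega
      have := spe_greedy_G'_tail P ord t ht L hafter s' hspe g' hnd'
        (by simp at hlo'; omega) hg'
      rwa [movP_eq P t g'.length hg'])
    (fun g' hnd' hlo' hhi' => by
      show Grd (ord (movP P t g'.length)) g' (S.choice g')
      have hg' : g'.length < m := by simp at hhi'; omega
      rw [hS, stratB_choice, if_neg (by simp at hlo'; omega), if_neg (by simp at hlo'; omega)]
      exact gchoice_grd _ x₀ g' (lt_of_lt_of_le hg' hm))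
  refine ⟨l, ?_, ?_⟩
  · rw [estep, hl1]; simp
  · rw [fstep, hl2]; simp

/-- Plate correspondence for histories of length `≤ t`. -/
lemma back_corr (hafter : ∀ u : Fin m, t < u → u ∈ L)
    (hspe : SPE (prefG' P ord t ht L) s')
    (g : List M) (hnd : g.Nodup) (hle : g.length ≤ t.val) (r : Fin k) :
    plate P ((stratB P ord t ht hm x₀ s').play g) r
      = plate (P ∘ Equiv.swap t ⟨t.val + 1, ht⟩) (s'.play g) r := by
  set S := stratB P ord t ht hm x₀ s' with hS
  have htm : t.val ≤ m := by omega
  have hext : S.extend (t.val - g.length) g = s'.extend (t.val - g.length) g := by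
    apply extend_congr
    intro g' h1 h2
    rw [hS, stratB_choice, if_pos (by omega)]
  have hHnd : (s'.extend (t.val - g.length) g).Nodup :=
    extend_nodup s' _ g hnd (by omega)
  have hHlen : (s'.extend (t.val - g.length) g).length = t.val := by
    rw [extend_length]; omega
  have hps : S.play g = S.play (s'.extend (t.val - g.length) g) := by
    rw [play_extend S (t.val - g.length) g (by omega), hext]
  have hps' : s'.play g = s'.play (s'.extend (t.val - g.length) g) :=
    play_extend s' _ g (by omega)
  rw [hps, hps']
  set H := s'.extend (t.val - g.length) g
  obtain ⟨l, hl1, hl2⟩ := back_core P ord t ht L hm x₀ s' hafter hspe H hHnd hHlen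
  set w := gchoice (ord (P ⟨t.val + 1, ht⟩)) x₀ H
  set c := s'.choice (H ++ [w])
  have g1 : S.play H = fun v => (H ++ c :: w :: l).getD v.val x₀ := by
    funext v
    rw [play_eq_getD S H (by omega) v x₀, hl2]
  have g2 : s'.play H = fun v => (H ++ w :: c :: l).getD v.val x₀ := by
    funext v
    rw [play_eq_getD s' H (by omega) v x₀, hl1]
  rw [g1, g2]
  exact plate_lists P t ht H l c w hHlen x₀ r

end BackCore

end Backward

end SwitchAux
namespace SwitchAux

variable {M : Type*}

section BackSPE

variable [DecidableEq M] [Fintype M] {m k : ℕ}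
variable (P : Fin m → Fin k) (ord : Fin k → LinearOrder M) (t : Fin m) (ht : t.val + 1 < m)
variable (L : Finset (Fin m))

lemma back_spe (hm : m ≤ Fintype.card M) (x₀ : M) (s' : Strategy M m)
    (htL : t ∉ L) (hafter : ∀ u : Fin m, t < u → u ∈ L)
    (hspe : SPE (prefG' P ord t ht L) s') :
    SPE (prefG P ord L) (stratB P ord t ht hm x₀ s') := by
  intro u h hnd hlen x hx
  set S := stratB P ord t ht hm x₀ s' with hS
  set t1 : Fin m := ⟨t.val + 1, ht⟩ with ht1
  simp only [prefG]
  rcases lt_trichotomy u.val t.val with hu | hu | hu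
  · -- turns before t : identical in the two games
    by_cases huL : u ∈ L
    · rw [if_pos huL]
      apply lout_safe P ord S u h hnd hlen x hx
      have hch : S.choice h = s'.choice h := by
        rw [hS, stratB_choice, if_pos (by omega)]
      rw [hch]
      have huL' : u ∈ insert t (L.erase t1) := (mem_L'_lt t ht L (by omega)).mpr huL
      have hfix : Equiv.swap t t1 u = u :=
        swap_fix t ht u (by rw [Fin.ne_iff_vne]; omega) (by rw [Fin.ne_iff_vne]; simp [ht1]; omega)
      have hgrd := lout_forced (P ∘ Equiv.swap t t1) ord s' u h hnd hlen
        (fun y hy => by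
          have hX := hspe u h hnd hlen y hy; simp only [prefG'] at hX; rwa [if_pos huL'] at hX)
      rwa [show (P ∘ Equiv.swap t t1) u = P u by simp [hfix]] at hgrd
    · rw [if_neg huL]
      have huL' : u ∉ insert t (L.erase t1) := by
        rw [mem_L'_lt t ht L (by omega)]; exact huL
      have hk : ¬ KnightLT (P ∘ Equiv.swap t t1) ord ((P ∘ Equiv.swap t t1) u)
          (s'.play h) (s'.play (h ++ [x])) := by
        have hX := hspe u h hnd hlen x hx; simp only [prefG'] at hX; rwa [if_neg huL'] at hX
      have hfix : Equiv.swap t t1 u = u :=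
        swap_fix t ht u (by rw [Fin.ne_iff_vne]; omega) (by rw [Fin.ne_iff_vne]; simp [ht1]; omega)
      rw [show (P ∘ Equiv.swap t t1) u = P u by simp [hfix]] at hk
      intro hK
      apply hk
      rw [← knightLT_congr
        (fun r => back_corr P ord t ht L hm x₀ s' hafter hspe h hnd (by omega) r)
        (fun r => back_corr P ord t ht L hm x₀ s' hafter hspe (h ++ [x])
          (by rw [List.nodup_append]; exact ⟨hnd, List.nodup_singleton _, by simp; exact fun a ha hax => hx (hax ▸ ha)⟩)
          (by simp; omega) r)]
      exact hK
  · -- the knight turn t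
    have hut : u = t := Fin.ext hu
    subst hut
    rw [if_neg htL]
    have hlent : h.length = u.val := hlen
    set w := gchoice (ord (P t1)) x₀ h with hw
    have hwg : Grd (ord (P t1)) h w := gchoice_grd _ x₀ h (by omega)
    obtain ⟨l, hl1, hl2⟩ := back_core P ord u ht L hm x₀ s' hafter hspe h hnd hlen
    set c := s'.choice (h ++ [w]) with hc
    have hndw : (h ++ [w]).Nodup := by
      rw [List.nodup_append]
      exact ⟨hnd, List.nodup_singleton _, by simp; exact fun a ha hax => hwg.1 (hax ▸ ha)⟩
    have hlenw : (h ++ [w]).length = t1.val := by simp [ht1, hlen]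
    have gA : S.play h = fun v => (h ++ c :: w :: l).getD v.val x₀ := by
      funext v
      rw [play_eq_getD S h (by omega) v x₀, hl2]
    have gA' : s'.play (h ++ [w]) = fun v => (h ++ w :: c :: l).getD v.val x₀ := by
      have hstep : s'.play (h ++ [w]) = s'.play h := by
        rw [← Grd.unique (spe_greedy_G'_t P ord u ht L s' hspe h hnd hlen) hwg]
        exact (play_step s' h (by omega)).symm
      funext v
      rw [hstep, play_eq_getD s' h (by omega) v x₀, hl1]
    by_cases hxw : x = w
    · -- deviation to the lout's favourite
      subst hxw
      set w₂ := S.choice (h ++ [w]) with hw2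
      have hw2g : Grd (ord (P t1)) (h ++ [w]) w₂ := by
        rw [hw2, hS, stratB_choice, if_neg (by simp; omega), if_neg (by simp; omega)]
        have hl1' : (h ++ [w]).length < m := by simp; omega
        have hmv : movP P u (h ++ [w]).length = P t1 := by
          rw [movP_eq P u _ hl1']
          congr 1
          apply Fin.ext
          simp [hlen, ht1]
        rw [hmv]
        exact gchoice_grd _ x₀ (h ++ [w]) (by omega)
      have hndx : (h ++ [w]).Nodup := hndw
      have hndx2 : (h ++ [w, w₂]).Nodup := by
        refine nodup_app2 hnd hwg.1 (fun hc' => hw2g.1 (by simp [hc'])) ?_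
        intro hc'
        exact hw2g.1 (by simp [hc'])
      have hstepB : ∀ n, S.extend (n + 1) (h ++ [w]) = S.extend n (h ++ [w, w₂]) := by
        intro n
        rw [extend_succ, ← hw2, app2_eq]
      by_cases hij : P u = P t1
      · -- same mover at both turns
        have hQP : P ∘ Equiv.swap u t1 = P := comp_swap_eq P u ht hij
        -- pair the tails of `S` after `h ++ [w, w₂]` with those of `s'`
        obtain ⟨l₃, he1, he2⟩ := extend_pair S s' (fun v => ord (movP P u v)) (m - u.val - 2)
          (h ++ [w, w₂]) (h ++ [w, w₂]) hndx2 hndx2 rfl rfl (by simp; omega)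
          (fun g' hnd' hlo' hhi' => by
            show Grd (ord (movP P u g'.length)) g' (S.choice g')
            have hg' : g'.length < m := by simp at hhi'; omega
            rw [hS, stratB_choice, if_neg (by simp at hlo'; omega),
              if_neg (by simp at hlo'; omega)]
            exact gchoice_grd _ x₀ g' (lt_of_lt_of_le hg' hm))
          (fun g' hnd' hlo' hhi' => by
            show Grd (ord (movP P u g'.length)) g' (s'.choice g')
            have hg' : g'.length < m := by simp at hhi'; omega
            have := spe_greedy_G'_tail P ord u ht L hafter s' hspe g' hnd'
              (by simp at hlo'; omega) hg'
            rwa [movP_eq P u g'.length hg'])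
        have gB : S.play (h ++ [w]) = fun v => (h ++ w :: w₂ :: l₃).getD v.val x₀ := by
          funext v
          rw [play_eq_getD S (h ++ [w]) (by simp; omega) v x₀]
          conv_lhs => rw [show m - (h ++ [w]).length = (m - u.val - 2) + 1 by simp [hlen]; omega]
          rw [hstepB, he1]
          simp
        have gB' : s'.play (h ++ [w] ++ [w₂]) = fun v => (h ++ w :: w₂ :: l₃).getD v.val x₀ := by
          funext v
          rw [play_eq_getD s' (h ++ [w] ++ [w₂]) (by simp; omega) v x₀]
          have : m - (h ++ [w] ++ [w₂]).length = m - u.val - 2 := by simp [hlen]; omega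
          rw [this, app2_eq, he2]
          simp
        have hknight : ¬ KnightLT (P ∘ Equiv.swap u t1) ord ((P ∘ Equiv.swap u t1) t1)
            (s'.play (h ++ [w])) (s'.play (h ++ [w] ++ [w₂])) := by
          have := hspe t1 (h ++ [w]) hndx hlenw w₂ hw2g.1
          simp only [prefG'] at this; rwa [if_neg (t1_not_mem_L' u ht L)] at this
        rw [hQP] at hknight
        intro hK
        apply hknight
        rw [gA', gB', ← hij]
        rw [gA, gB] at hK
        have hpl : ∀ r, plate P (fun v => (h ++ c :: w :: l).getD v.val x₀) r
            = plate P (fun v => (h ++ w :: c :: l).getD v.val x₀) r := by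
          intro r
          have := plate_lists P u ht h l c w hlen x₀ r
          rwa [hQP] at this
        exact (knightLT_congr hpl (fun r => rfl)).mp hK
      · -- different movers: the knight never robs the lout (counting argument)
        intro hK
        have hinjB : Function.Injective (S.play (h ++ [w])) :=
          play_inj S (h ++ [w]) hndx (by simp; omega)
        have hBt : S.play (h ++ [w]) u = w := by
          rw [play_lt S (h ++ [w]) (by simp; omega) u (by simp; omega) x₀,
            List.getD_append_right _ _ _ _ (by omega)]
          simp [hlen]
        have hAt1 : S.play h t1 = w := by
          rw [gA]
          show (h ++ c :: w :: l).getD t1.val x₀ = w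
          have e : t1.val = h.length + 1 := by simp [ht1, hlen]
          rw [e]
          exact getD_mid1 h l c w x₀
        have hAmem : w ∈ plate P (S.play h) (P t1) := mem_plate.mpr ⟨t1, rfl, hAt1⟩
        have hBnot : w ∉ plate P (S.play (h ++ [w])) (P t1) := by
          rw [mem_plate]
          rintro ⟨p, hp, hval⟩
          have : p = u := hinjB (by rw [hval, hBt])
          rw [this] at hp
          exact hij hp
        have habove : ∀ y, (ord (P t1)).lt w y →
            y ∈ plate P (S.play (h ++ [w])) (P t1) → y ∈ plate P (S.play h) (P t1) := by
          intro y hy hyB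
          rw [mem_plate] at hyB
          obtain ⟨p, hp, hval⟩ := hyB
          rcases lt_trichotomy p.val u.val with hpu | hpu | hpu
          · refine mem_plate.mpr ⟨p, hp, ?_⟩
            rw [play_lt S (h ++ [w]) (by simp; omega) p (by simp; omega) x₀,
              List.getD_append _ _ _ _ (by omega)] at hval
            rw [play_lt S h (by omega) p (by omega) x₀]
            exact hval
          · exfalso
            have : p = u := Fin.ext hpu
            rw [this, hBt] at hval
            letI := ord (P t1)
            rw [hval] at hy
            exact lt_irrefl _ hy
          · exfalso
            have hnm := play_notmem S (h ++ [w]) hndx (by simp; omega) p (by simp; omega)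
            rw [hval] at hnm
            have hyh : y ∉ h := fun hc' => hnm (by simp [hc'])
            have hyx : y ≠ w := fun hc' => hnm (by simp [hc'])
            letI := ord (P t1)
            exact lt_asymm hy (hwg.2 y hyh hyx)
        rcases hK with ⟨hle, _⟩ | ⟨heq, _⟩
        · exact not_plateLE_aux (ord (P t1)) hAmem hBnot (fun y hy => habove y hy)
            (hle (P t1) (Ne.symm hij))
        · exact hBnot (heq (P t1) (Ne.symm hij) ▸ hAmem)
    · -- ordinary deviation x ≠ w: compare with the knight's deviation in G'
      have hndx : (h ++ [x]).Nodup := by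
        rw [List.nodup_append]
        exact ⟨hnd, List.nodup_singleton _, by simp; exact fun a ha hax => hx (hax ▸ ha)⟩
      have hwx : Grd (ord (P t1)) (h ++ [x]) w := by
        constructor
        · simp only [List.mem_append, List.mem_singleton]
          rintro (hmem | hmem)
          · exact hwg.1 hmem
          · exact hxw hmem.symm
        · intro y hy hne
          exact hwg.2 y (fun hmem => hy (by simp [hmem])) hne
      have hchx : S.choice (h ++ [x]) = w := by
        rw [hS, stratB_choice, if_neg (by simp; omega), if_neg (by simp; omega)]
        have hl1' : (h ++ [x]).length < m := by simp; omega
        have hmv : movP P u (h ++ [x]).length = P t1 := by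
          rw [movP_eq P u _ hl1']
          congr 1
          apply Fin.ext
          simp [hlen, ht1]
        rw [hmv]
        exact Grd.unique (gchoice_grd _ x₀ (h ++ [x]) (by omega)) hwx
      have hndx2 : (h ++ [x, w]).Nodup := nodup_app2 hnd hx hwg.1 hxw
      have hndwx : (h ++ [w, x]).Nodup := nodup_app2 hnd hwg.1 hx (Ne.symm hxw)
      obtain ⟨l₂, he1, he2⟩ := extend_pair S s' (fun v => ord (movP P u v)) (m - u.val - 2)
        (h ++ [x, w]) (h ++ [w, x]) hndx2 hndwx (by simp) (toFinset_app2_comm h x w)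
        (by simp; omega)
        (fun g' hnd' hlo' hhi' => by
          show Grd (ord (movP P u g'.length)) g' (S.choice g')
          have hg' : g'.length < m := by simp at hhi'; omega
          rw [hS, stratB_choice, if_neg (by simp at hlo'; omega),
            if_neg (by simp at hlo'; omega)]
          exact gchoice_grd _ x₀ g' (lt_of_lt_of_le hg' hm))
        (fun g' hnd' hlo' hhi' => by
          show Grd (ord (movP P u g'.length)) g' (s'.choice g')
          have hg' : g'.length < m := by simp at hhi'; omega
          have := spe_greedy_G'_tail P ord u ht L hafter s' hspe g' hnd'
            (by simp at hlo'; omega) hg'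
          rwa [movP_eq P u g'.length hg'])
      have gB : S.play (h ++ [x]) = fun v => (h ++ x :: w :: l₂).getD v.val x₀ := by
        funext v
        rw [play_eq_getD S (h ++ [x]) (by simp; omega) v x₀]
        conv_lhs => rw [show m - (h ++ [x]).length = (m - u.val - 2) + 1 by simp [hlen]; omega]
        rw [extend_succ, hchx, app2_eq, he1]
        simp
      have gB' : s'.play (h ++ [w] ++ [x]) = fun v => (h ++ w :: x :: l₂).getD v.val x₀ := by
        funext v
        rw [play_eq_getD s' (h ++ [w] ++ [x]) (by simp; omega) v x₀]
        have : m - (h ++ [w] ++ [x]).length = m - u.val - 2 := by simp [hlen]; omega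
        rw [this, app2_eq, he2]
        simp
      have hknight : ¬ KnightLT (P ∘ Equiv.swap u t1) ord ((P ∘ Equiv.swap u t1) t1)
          (s'.play (h ++ [w])) (s'.play (h ++ [w] ++ [x])) := by
        have hxnotw : x ∉ h ++ [w] := by simp [hx, hxw]
        have := hspe t1 (h ++ [w]) hndw hlenw x hxnotw
        simp only [prefG'] at this; rwa [if_neg (t1_not_mem_L' u ht L)] at this
      have hQt1 : (P ∘ Equiv.swap u t1) t1 = P u := by simp [Equiv.swap_apply_right]
      rw [hQt1] at hknight
      intro hK
      apply hknight
      rw [gA', gB']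
      rw [gA, gB] at hK
      exact (knightLT_congr (fun r => plate_lists P u ht h l c w hlen x₀ r)
        (fun r => plate_lists P u ht h l₂ x w hlen x₀ r)).mp hK
  · -- lout turns after t
    have huL : u ∈ L := hafter u (by rw [Fin.lt_def]; omega)
    rw [if_pos huL]
    apply lout_safe P ord S u h hnd hlen x hx
    have hch : S.choice h = gchoice (ord (movP P t h.length)) x₀ h := by
      rw [hS, stratB_choice, if_neg (by omega), if_neg (by omega)]
    have hhm : h.length < m := by rw [hlen]; exact u.2
    rw [hch, movP_eq P t h.length hhm]
    have : (⟨h.length, hhm⟩ : Fin m) = u := Fin.ext hlen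
    rw [this]
    exact gchoice_grd _ x₀ h (by omega)

end BackSPE

end SwitchAux
namespace SwitchAux

variable {M : Type*}

lemma getD_agree_outside (g l : List M) (x y x' y' d : M) (p : ℕ)
    (hp : p ≠ g.length) (hp2 : p ≠ g.length + 1) :
    (g ++ x :: y :: l).getD p d = (g ++ x' :: y' :: l).getD p d := by
  rcases lt_trichotomy p g.length with h | h | h
  · rw [List.getD_append _ _ _ _ h, List.getD_append _ _ _ _ h]
  · exact absurd h hp
  · have h2 : g.length + 2 ≤ p := by omega
    rw [getD_hi _ _ _ _ _ _ h2, getD_hi _ _ _ _ _ _ h2]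

section Forward

variable [DecidableEq M] [Fintype M] {m k : ℕ}
variable (P : Fin m → Fin k) (ord : Fin k → LinearOrder M) (t : Fin m) (ht : t.val + 1 < m)
variable (L : Finset (Fin m))

/-- A knight whose successor-lout is a different player never takes the lout's
favourite morsel in an SPE of the original game. -/
lemma never_rob (hm : m ≤ Fintype.card M) (x₀ : M) (s : Strategy M m)
    (htL : t ∉ L) (hafter : ∀ u : Fin m, t < u → u ∈ L)
    (hspe : SPE (prefG P ord L) s) (hij : P t ≠ P ⟨t.val + 1, ht⟩)
    (g : List M) (hnd : g.Nodup) (hlen : g.length = t.val) :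
    s.choice g ≠ gchoice (ord (P ⟨t.val + 1, ht⟩)) x₀ g := by
  set t1 : Fin m := ⟨t.val + 1, ht⟩ with ht1
  intro hcw
  set w := gchoice (ord (P t1)) x₀ g with hw
  have hwg : Grd (ord (P t1)) g w := gchoice_grd _ x₀ g (by omega)
  have hndw : (g ++ [w]).Nodup := by
    rw [List.nodup_append]
    exact ⟨hnd, List.nodup_singleton _, by simp; exact fun a ha hax => hwg.1 (hax ▸ ha)⟩
  set w₂ := gchoice (ord (P t1)) x₀ (g ++ [w]) with hw2
  have hw2g : Grd (ord (P t1)) (g ++ [w]) w₂ := gchoice_grd _ x₀ _ (by simp; omega)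
  have hw2gnot : w₂ ∉ g := fun hc => hw2g.1 (by simp [hc])
  have hw2w : w₂ ≠ w := fun hc => hw2g.1 (by simp [hc])
  have hnd2 : (g ++ [w, w₂]).Nodup := nodup_app2 hnd hwg.1 hw2gnot (Ne.symm hw2w)
  have hndx2 : (g ++ [w₂, w]).Nodup := nodup_app2 hnd hw2gnot hwg.1 hw2w
  -- choice after the knight takes w is w₂
  have step2 : s.choice (g ++ [w]) = w₂ := by
    have hh := spe_greedy_G P ord t L hafter s hspe (g ++ [w]) hndw (by simp [hlen])
      (by simp; omega)
    have : P (⟨(g ++ [w]).length, by simp; omega⟩ : Fin m) = P t1 := by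
      congr 1; apply Fin.ext; simp [hlen, ht1]
    rw [this] at hh
    exact Grd.unique hh hw2g
  -- choice after the knight takes w₂ is w
  have hndw2 : (g ++ [w₂]).Nodup := by
    rw [List.nodup_append]
    exact ⟨hnd, List.nodup_singleton _, by simp; exact fun a ha hax => hw2gnot (hax ▸ ha)⟩
  have step2' : s.choice (g ++ [w₂]) = w := by
    have hh := spe_greedy_G P ord t L hafter s hspe (g ++ [w₂]) hndw2 (by simp [hlen])
      (by simp; omega)
    have heq : P (⟨(g ++ [w₂]).length, by simp; omega⟩ : Fin m) = P t1 := by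
      congr 1; apply Fin.ext; simp [hlen, ht1]
    rw [heq] at hh
    refine Grd.unique hh ?_
    constructor
    · simp only [List.mem_append, List.mem_singleton]
      rintro (hmem | hmem)
      · exact hwg.1 hmem
      · exact hw2w hmem.symm
    · intro y hy hne
      exact hwg.2 y (fun hmem => hy (by simp [hmem])) hne
  -- tails agree
  obtain ⟨l, he1, he2⟩ := extend_pair s s (fun v => ord (movP P t v)) (m - t.val - 2)
    (g ++ [w, w₂]) (g ++ [w₂, w]) hnd2 hndx2 (by simp) (toFinset_app2_comm g w w₂)
    (by simp [hlen]; omega)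
    (fun g' hnd' hlo' hhi' => by
      show Grd (ord (movP P t g'.length)) g' (s.choice g')
      have hg' : g'.length < m := by simp at hhi'; omega
      have := spe_greedy_G P ord t L hafter s hspe g' hnd' (by simp [hlen] at hlo'; omega) hg'
      rwa [movP_eq P t g'.length hg'])
    (fun g' hnd' hlo' hhi' => by
      show Grd (ord (movP P t g'.length)) g' (s.choice g')
      have hg' : g'.length < m := by simp at hhi'; omega
      have := spe_greedy_G P ord t L hafter s hspe g' hnd' (by simp [hlen] at hlo'; omega) hg'
      rwa [movP_eq P t g'.length hg'])
  have gA : s.play g = fun v => (g ++ w :: w₂ :: l).getD v.val x₀ := by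
    funext v
    rw [play_eq_getD s g (by omega) v x₀]
    conv_lhs => rw [show m - g.length = (m - t.val - 2) + 1 + 1 by omega]
    rw [extend_succ, hcw, extend_succ, step2, app2_eq, he1]
    simp
  have gB : s.play (g ++ [w₂]) = fun v => (g ++ w₂ :: w :: l).getD v.val x₀ := by
    funext v
    rw [play_eq_getD s (g ++ [w₂]) (by simp; omega) v x₀]
    conv_lhs => rw [show m - (g ++ [w₂]).length = (m - t.val - 2) + 1 by simp [hlen]; omega]
    rw [extend_succ, step2', app2_eq, he2]
    simp
  -- the knight order prefers the deviation w₂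
  have hinjA : Function.Injective (s.play g) := play_inj s g hnd (by omega)
  have hinjB : Function.Injective (s.play (g ++ [w₂])) :=
    play_inj s (g ++ [w₂]) hndw2 (by simp; omega)
  have hAt1 : s.play g t1 = w₂ := by
    rw [gA]
    show (g ++ w :: w₂ :: l).getD t1.val x₀ = w₂
    rw [show t1.val = g.length + 1 by simp [ht1, hlen]]
    exact getD_mid1 g l w w₂ x₀
  have hBt1 : s.play (g ++ [w₂]) t1 = w := by
    rw [gB]
    show (g ++ w₂ :: w :: l).getD t1.val x₀ = w
    rw [show t1.val = g.length + 1 by simp [ht1, hlen]]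
    exact getD_mid1 g l w₂ w x₀
  have hagree : ∀ p : Fin m, p ≠ t1 → P p = P t1 → s.play g p = s.play (g ++ [w₂]) p := by
    intro p hp hPp
    have hpt : p ≠ t := fun hc => hij (hc ▸ hPp)
    rw [gA, gB]
    exact getD_agree_outside g l w w₂ w₂ w x₀ p.val
      (by rw [hlen] at *; exact fun hc => hpt (Fin.ext (by omega)))
      (by intro hc; exact hp (Fin.ext (by simp [ht1]; omega)))
  obtain ⟨C, hw2C, hwC, hCA, hCB⟩ := plates_swap_one (P := P) hAt1 hBt1 hagree hinjA hinjB
  have hlew : (ord (P t1)).le w₂ w := by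
    letI := ord (P t1)
    exact le_of_lt (hwg.2 w₂ hw2gnot hw2w)
  have hKnight : KnightLT P ord (P t) (s.play g) (s.play (g ++ [w₂])) := by
    left
    constructor
    · intro r hr
      by_cases hr1 : r = P t1
      · subst hr1
        rw [hCA, hCB]
        exact plateLE_insert_swap (ord (P t1)) hw2C hwC hlew
      · refine plateLE_of_eq _ (fun z => (ord r).le_refl z) ?_
        apply plate_eq_of_agree
        intro p hp
        have hp1 : p ≠ t1 := fun hc => hr1 (by rw [← hp, hc])
        have hpt : p ≠ t := fun hc => hr (by rw [← hp, hc])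
        rw [gA, gB]
        exact getD_agree_outside g l w w₂ w₂ w x₀ p.val
          (fun hc => hpt (Fin.ext (by omega)))
          (fun hc => hp1 (Fin.ext (by simp [ht1]; omega)))
    · refine ⟨P t1, Ne.symm hij, ?_, ?_⟩
      · rw [hCA, hCB]
        exact plateLE_insert_swap (ord (P t1)) hw2C hwC hlew
      · rw [hCA, hCB]
        intro heq
        have : w ∈ insert w₂ C := heq ▸ Finset.mem_insert_self w C
        rcases Finset.mem_insert.mp this with hc | hc
        · exact hw2w hc.symm
        · exact hwC hc
  have := hspe t g hnd hlen w₂ hw2gnot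
  rw [show prefG P ord L t = KnightLT P ord (P t) by rw [prefG, if_neg htL]] at this
  exact this hKnight

end Forward

end SwitchAux
namespace SwitchAux

variable {M : Type*}

section Forward2

variable [DecidableEq M] [Fintype M] {m k : ℕ}
variable (P : Fin m → Fin k) (ord : Fin k → LinearOrder M) (t : Fin m) (ht : t.val + 1 < m)
variable (L : Finset (Fin m))

/-- The strategy for the swapped game `G'` built from a strategy of `G`. -/
noncomputable def stratF (hm : m ≤ Fintype.card M) (x₀ : M) (s : Strategy M m) :
    Strategy M m where
  choice h :=
    if h.length < t.val then s.choice h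
    else if h.length = t.val then gchoice (ord (P ⟨t.val + 1, ht⟩)) x₀ h
    else if h.length = t.val + 1 then
      (if h.getD t.val x₀ = gchoice (ord (P ⟨t.val + 1, ht⟩)) x₀ (h.take t.val) then
        (if s.choice (h.take t.val) = gchoice (ord (P ⟨t.val + 1, ht⟩)) x₀ (h.take t.val)
          then gchoice (ord (P t)) x₀ h
          else s.choice (h.take t.val))
        else kmax P ord t ht hm x₀ (P t) h)
    else gchoice (ord (movP P t h.length)) x₀ h
  valid h hnd hlen := by
    by_cases h1 : h.length < t.val
    · simp only [if_pos h1]; exact s.valid h hnd hlen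
    · by_cases h2 : h.length = t.val
      · simp only [if_neg h1, if_pos h2]
        exact (gchoice_grd _ x₀ h (lt_of_lt_of_le hlen hm)).1
      · by_cases h3 : h.length = t.val + 1
        · simp only [if_neg h1, if_neg h2, if_pos h3]
          by_cases hz : h.getD t.val x₀ = gchoice (ord (P ⟨t.val + 1, ht⟩)) x₀ (h.take t.val)
          · rw [if_pos hz]
            by_cases hcw : s.choice (h.take t.val)
                = gchoice (ord (P ⟨t.val + 1, ht⟩)) x₀ (h.take t.val)
            · rw [if_pos hcw]
              exact (gchoice_grd _ x₀ h (lt_of_lt_of_le hlen hm)).1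
            · rw [if_neg hcw]
              have hh0nd : (h.take t.val).Nodup := hnd.sublist (List.take_sublist _ _)
              have hc0 := s.valid (h.take t.val) hh0nd
                (by rw [List.length_take]; omega)
              have hdec := list_decomp h t.val x₀ (by omega)
              intro hmem
              have hmem2 : s.choice (h.take t.val) ∈ h.take t.val ++ [h.getD t.val x₀] := by
                rw [← hdec]; exact hmem
              rcases List.mem_append.mp hmem2 with hmem3 | hmem3
              · exact hc0 hmem3
              · rw [List.mem_singleton] at hmem3
                exact hcw (hmem3.trans hz)
          · rw [if_neg hz]
            have := (kmax_spec P ord t ht hm x₀ (P t) h hlen).1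
            rw [Finset.mem_sdiff, List.mem_toFinset] at this
            exact this.2
        · simp only [if_neg h1, if_neg h2, if_neg h3]
          exact (gchoice_grd _ x₀ h (lt_of_lt_of_le hlen hm)).1

lemma stratF_choice (hm : m ≤ Fintype.card M) (x₀ : M) (s : Strategy M m) (h : List M) :
    (stratF P ord t ht hm x₀ s).choice h =
      if h.length < t.val then s.choice h
      else if h.length = t.val then gchoice (ord (P ⟨t.val + 1, ht⟩)) x₀ h
      else if h.length = t.val + 1 then
        (if h.getD t.val x₀ = gchoice (ord (P ⟨t.val + 1, ht⟩)) x₀ (h.take t.val) then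
          (if s.choice (h.take t.val) = gchoice (ord (P ⟨t.val + 1, ht⟩)) x₀ (h.take t.val)
            then gchoice (ord (P t)) x₀ h
            else s.choice (h.take t.val))
          else kmax P ord t ht hm x₀ (P t) h)
      else gchoice (ord (movP P t h.length)) x₀ h := rfl

lemma fwd_core (hm : m ≤ Fintype.card M) (x₀ : M) (s : Strategy M m)
    (htL : t ∉ L) (hafter : ∀ u : Fin m, t < u → u ∈ L)
    (hspe : SPE (prefG P ord L) s)
    (g : List M) (hnd : g.Nodup) (hlen : g.length = t.val) :
    ∃ l : List M,
      s.extend (m - g.length) g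
        = g ++ s.choice g ::
            (if s.choice g = gchoice (ord (P ⟨t.val + 1, ht⟩)) x₀ g
              then gchoice (ord (P ⟨t.val + 1, ht⟩)) x₀
                (g ++ [gchoice (ord (P ⟨t.val + 1, ht⟩)) x₀ g])
              else gchoice (ord (P ⟨t.val + 1, ht⟩)) x₀ g) :: l
      ∧ (stratF P ord t ht hm x₀ s).extend (m - g.length) g
        = g ++ gchoice (ord (P ⟨t.val + 1, ht⟩)) x₀ g ::
            (if s.choice g = gchoice (ord (P ⟨t.val + 1, ht⟩)) x₀ g
              then gchoice (ord (P ⟨t.val + 1, ht⟩)) x₀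
                (g ++ [gchoice (ord (P ⟨t.val + 1, ht⟩)) x₀ g])
              else s.choice g) :: l := by
  set t1 : Fin m := ⟨t.val + 1, ht⟩ with ht1
  set F := stratF P ord t ht hm x₀ s with hF
  set w := gchoice (ord (P t1)) x₀ g with hw
  have hwg : Grd (ord (P t1)) g w := gchoice_grd _ x₀ g (by omega)
  set c := s.choice g with hc
  have hcg : c ∉ g := s.valid g hnd (by omega)
  have hndw : (g ++ [w]).Nodup := by
    rw [List.nodup_append]
    exact ⟨hnd, List.nodup_singleton _, by simp; exact fun a ha hax => hwg.1 (hax ▸ ha)⟩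
  have hndc : (g ++ [c]).Nodup := by
    rw [List.nodup_append]
    exact ⟨hnd, List.nodup_singleton _, by simp; exact fun a ha hax => hcg (hax ▸ ha)⟩
  -- `F` plays `w` at the history `g`
  have hFg : F.choice g = w := by
    rw [hF, stratF_choice, if_neg (by omega), if_pos hlen]
  have htake : (g ++ [w]).take t.val = g := by
    rw [← hlen]; exact List.take_left
  have hgetD : (g ++ [w]).getD t.val x₀ = w := by
    rw [← hlen, List.getD_append_right _ _ _ _ le_rfl]
    simp
  -- greedy hypotheses for the tails
  have hgrds : ∀ g' : List M, g'.Nodup → t.val + 2 ≤ g'.length → g'.length < m →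
      Grd (ord (movP P t g'.length)) g' (s.choice g') := by
    intro g' hnd' hlo' hg'
    have := spe_greedy_G P ord t L hafter s hspe g' hnd' (by omega) hg'
    rwa [movP_eq P t g'.length hg']
  have hgrdF : ∀ g' : List M, t.val + 2 ≤ g'.length → g'.length < m →
      Grd (ord (movP P t g'.length)) g' (F.choice g') := by
    intro g' hlo' hg'
    rw [hF, stratF_choice, if_neg (by omega), if_neg (by omega), if_neg (by omega)]
    exact gchoice_grd _ x₀ g' (lt_of_lt_of_le hg' hm)
  by_cases hcw : c = w
  · -- the knight takes the lout's favourite (same player)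
    simp only [if_pos hcw]
    set w₂ := gchoice (ord (P t1)) x₀ (g ++ [w]) with hw2
    have hw2g : Grd (ord (P t1)) (g ++ [w]) w₂ := gchoice_grd _ x₀ _ (by simp; omega)
    have hij : P t = P t1 := by
      by_contra hij
      exact never_rob P ord t ht L hm x₀ s htL hafter hspe hij g hnd hlen hcw
    have hstep2 : s.choice (g ++ [w]) = w₂ := by
      have hh := spe_greedy_G P ord t L hafter s hspe (g ++ [w]) hndw (by simp [hlen])
        (by simp; omega)
      have heq : P (⟨(g ++ [w]).length, by simp; omega⟩ : Fin m) = P t1 := by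
        congr 1; apply Fin.ext; simp [hlen, ht1]
      rw [heq] at hh
      exact Grd.unique hh hw2g
    have hFstep2 : F.choice (g ++ [w]) = w₂ := by
      rw [hF, stratF_choice, if_neg (by simp; omega), if_neg (by simp; omega),
        if_pos (by simp [hlen]), if_pos (by rw [htake, hgetD]), if_pos (by rw [htake]; exact hcw)]
      rw [hw2, hij]
    have hnd2 : (g ++ [w, w₂]).Nodup :=
      nodup_app2 hnd hwg.1 (fun hc' => hw2g.1 (by simp [hc']))
        (fun hc' => (hw2g.1 (by simp [hc'.symm])))
    obtain ⟨l, he1, he2⟩ := extend_pair s F (fun v => ord (movP P t v)) (m - t.val - 2)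
      (g ++ [w, w₂]) (g ++ [w, w₂]) hnd2 hnd2 rfl rfl (by simp [hlen]; omega)
      (fun g' hnd' hlo' hhi' => by
        show Grd (ord (movP P t g'.length)) g' (s.choice g')
        have hg' : g'.length < m := by simp at hhi'; omega
        exact hgrds g' hnd' (by simp [hlen] at hlo'; omega) hg')
      (fun g' hnd' hlo' hhi' => by
        show Grd (ord (movP P t g'.length)) g' (F.choice g')
        have hg' : g'.length < m := by simp at hhi'; omega
        exact hgrdF g' (by simp [hlen] at hlo'; omega) hg')
    refine ⟨l, ?_, ?_⟩
    · conv_lhs => rw [show m - g.length = (m - t.val - 2) + 1 + 1 by omega]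
      rw [extend_succ, ← hc, hcw, extend_succ, hstep2, app2_eq, he1]
      simp [hcw]
    · conv_lhs => rw [show m - g.length = (m - t.val - 2) + 1 + 1 by omega]
      rw [extend_succ, hFg, extend_succ, hFstep2, app2_eq, he2]
      simp
  · -- the knight takes something else
    simp only [if_neg hcw]
    have hstep2 : s.choice (g ++ [c]) = w := by
      have hh := spe_greedy_G P ord t L hafter s hspe (g ++ [c]) hndc (by simp [hlen])
        (by simp; omega)
      have heq : P (⟨(g ++ [c]).length, by simp; omega⟩ : Fin m) = P t1 := by
        congr 1; apply Fin.ext; simp [hlen, ht1]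
      rw [heq] at hh
      refine Grd.unique hh ?_
      constructor
      · simp only [List.mem_append, List.mem_singleton]
        rintro (hmem | hmem)
        · exact hwg.1 hmem
        · exact hcw hmem.symm
      · intro y hy hne
        exact hwg.2 y (fun hmem => hy (by simp [hmem])) hne
    have hFstep2 : F.choice (g ++ [w]) = c := by
      rw [hF, stratF_choice, if_neg (by simp; omega), if_neg (by simp; omega),
        if_pos (by simp [hlen]), if_pos (by rw [htake, hgetD]), if_neg (by rw [htake]; exact hcw)]
      rw [htake]
    have hnd2 : (g ++ [c, w]).Nodup := nodup_app2 hnd hcg hwg.1 hcw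
    have hnd2' : (g ++ [w, c]).Nodup := nodup_app2 hnd hwg.1 hcg (Ne.symm hcw)
    obtain ⟨l, he1, he2⟩ := extend_pair s F (fun v => ord (movP P t v)) (m - t.val - 2)
      (g ++ [c, w]) (g ++ [w, c]) hnd2 hnd2' (by simp) (toFinset_app2_comm g c w)
      (by simp [hlen]; omega)
      (fun g' hnd' hlo' hhi' => by
        show Grd (ord (movP P t g'.length)) g' (s.choice g')
        have hg' : g'.length < m := by simp at hhi'; omega
        exact hgrds g' hnd' (by simp [hlen] at hlo'; omega) hg')
      (fun g' hnd' hlo' hhi' => by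
        show Grd (ord (movP P t g'.length)) g' (F.choice g')
        have hg' : g'.length < m := by simp at hhi'; omega
        exact hgrdF g' (by simp [hlen] at hlo'; omega) hg')
    refine ⟨l, ?_, ?_⟩
    · conv_lhs => rw [show m - g.length = (m - t.val - 2) + 1 + 1 by omega]
      rw [extend_succ, ← hc, extend_succ, hstep2, app2_eq, he1]
      simp
    · conv_lhs => rw [show m - g.length = (m - t.val - 2) + 1 + 1 by omega]
      rw [extend_succ, hFg, extend_succ, hFstep2, app2_eq, he2]
      simp

lemma fwd_corr (hm : m ≤ Fintype.card M) (x₀ : M) (s : Strategy M m)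
    (htL : t ∉ L) (hafter : ∀ u : Fin m, t < u → u ∈ L)
    (hspe : SPE (prefG P ord L) s)
    (g : List M) (hnd : g.Nodup) (hle : g.length ≤ t.val) (r : Fin k) :
    plate (P ∘ Equiv.swap t ⟨t.val + 1, ht⟩) ((stratF P ord t ht hm x₀ s).play g) r
      = plate P (s.play g) r := by
  set t1 : Fin m := ⟨t.val + 1, ht⟩ with ht1
  set F := stratF P ord t ht hm x₀ s with hF
  have hext : F.extend (t.val - g.length) g = s.extend (t.val - g.length) g := by
    apply extend_congr
    intro g' h1 h2
    rw [hF, stratF_choice, if_pos (by omega)]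
  have hHnd : (s.extend (t.val - g.length) g).Nodup :=
    extend_nodup s _ g hnd (by omega)
  have hHlen : (s.extend (t.val - g.length) g).length = t.val := by
    rw [extend_length]; omega
  have hps : F.play g = F.play (s.extend (t.val - g.length) g) := by
    rw [play_extend F (t.val - g.length) g (by omega), hext]
  have hps' : s.play g = s.play (s.extend (t.val - g.length) g) :=
    play_extend s _ g (by omega)
  rw [hps, hps']
  set H := s.extend (t.val - g.length) g
  obtain ⟨l, hl1, hl2⟩ := fwd_core P ord t ht L hm x₀ s htL hafter hspe H hHnd hHlen
  set w := gchoice (ord (P t1)) x₀ H with hw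
  set c := s.choice H with hc
  by_cases hcw : c = w
  · rw [if_pos hcw] at hl1 hl2
    set w₂ := gchoice (ord (P t1)) x₀ (H ++ [w]) with hw2
    have g1 : s.play H = fun v => (H ++ c :: w₂ :: l).getD v.val x₀ := by
      funext v
      rw [play_eq_getD s H (by omega) v x₀, hl1]
    have g2 : F.play H = fun v => (H ++ w :: w₂ :: l).getD v.val x₀ := by
      funext v
      rw [play_eq_getD F H (by omega) v x₀, hl2]
    have hij : P t = P t1 := by
      by_contra hij
      exact never_rob P ord t ht L hm x₀ s htL hafter hspe hij H hHnd hHlen hcw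
    rw [g1, g2, hcw, comp_swap_eq P t ht hij]
  · rw [if_neg hcw] at hl1 hl2
    have g1 : s.play H = fun v => (H ++ c :: w :: l).getD v.val x₀ := by
      funext v
      rw [play_eq_getD s H (by omega) v x₀, hl1]
    have g2 : F.play H = fun v => (H ++ w :: c :: l).getD v.val x₀ := by
      funext v
      rw [play_eq_getD F H (by omega) v x₀, hl2]
    rw [g1, g2]
    exact (plate_lists P t ht H l c w hHlen x₀ r).symm

end Forward2

end SwitchAux
namespace SwitchAux

variable {M : Type*}

section Forward3

variable [DecidableEq M] [Fintype M] {m k : ℕ}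
variable (P : Fin m → Fin k) (ord : Fin k → LinearOrder M) (t : Fin m) (ht : t.val + 1 < m)
variable (L : Finset (Fin m))

lemma fwd_spe (hm : m ≤ Fintype.card M) (x₀ : M) (s : Strategy M m)
    (htL : t ∉ L) (hafter : ∀ u : Fin m, t < u → u ∈ L)
    (hspe : SPE (prefG P ord L) s) :
    SPE (prefG' P ord t ht L) (stratF P ord t ht hm x₀ s) := by
  intro u h hnd hlen x hx
  set F := stratF P ord t ht hm x₀ s with hF
  set t1 : Fin m := ⟨t.val + 1, ht⟩ with ht1
  simp only [prefG']
  rcases lt_trichotomy u.val t.val with hu | hu | hu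
  · -- turns before t
    have hfix : Equiv.swap t t1 u = u :=
      swap_fix t ht u (by rw [Fin.ne_iff_vne]; omega) (by rw [Fin.ne_iff_vne]; simp [ht1]; omega)
    by_cases huL : u ∈ L
    · rw [if_pos ((mem_L'_lt t ht L (by omega)).mpr huL)]
      apply lout_safe (P ∘ Equiv.swap t t1) ord F u h hnd hlen x hx
      have hch : F.choice h = s.choice h := by
        rw [hF, stratF_choice, if_pos (by omega)]
      rw [hch, show (P ∘ Equiv.swap t t1) u = P u by simp [hfix]]
      exact lout_forced P ord s u h hnd hlen
        (fun y hy => by simpa only [prefG, if_pos huL] using hspe u h hnd hlen y hy)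
    · rw [if_neg (by rw [mem_L'_lt t ht L (by omega)]; exact huL)]
      have hk : ¬ KnightLT P ord (P u) (s.play h) (s.play (h ++ [x])) := by
        simpa only [prefG, if_neg huL] using hspe u h hnd hlen x hx
      rw [show (P ∘ Equiv.swap t t1) u = P u by simp [hfix]]
      intro hK
      apply hk
      exact (knightLT_congr
        (fun r => fwd_corr P ord t ht L hm x₀ s htL hafter hspe h hnd (by omega) r)
        (fun r => fwd_corr P ord t ht L hm x₀ s htL hafter hspe (h ++ [x])
          (by rw [List.nodup_append]; exact ⟨hnd, List.nodup_singleton _, by simp; exact fun a ha hax => hx (hax ▸ ha)⟩)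
          (by simp; omega) r)).mp hK
  · -- the lout turn t of G'
    have hut : u = t := Fin.ext hu
    subst hut
    rw [if_pos (Finset.mem_insert_self _ _)]
    apply lout_safe (P ∘ Equiv.swap u t1) ord F u h hnd hlen x hx
    have hch : F.choice h = gchoice (ord (P t1)) x₀ h := by
      rw [hF, stratF_choice, if_neg (by omega), if_pos hlen]
    rw [hch, show (P ∘ Equiv.swap u t1) u = P t1 by simp [Equiv.swap_apply_left]]
    exact gchoice_grd _ x₀ h (by omega)
  · rcases eq_or_lt_of_le (show t.val + 1 ≤ u.val by omega) with hu1 | hu1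
    · -- the knight turn t+1 of G'
      have hut : u = t1 := Fin.ext (by simp [ht1]; omega)
      have hnotb : u ∉ insert t (L.erase t1) := by
        rw [hut]; exact t1_not_mem_L' t ht L
      rw [if_neg hnotb]
      have hmov : (P ∘ Equiv.swap t t1) u = P t := by
        rw [hut]; simp [Equiv.swap_apply_right]
      rw [hmov]
      have hlen1 : h.length = t.val + 1 := by omega
      have hdec : h = h.take t.val ++ [h.getD t.val x₀] := list_decomp h t.val x₀ hlen1
      have h0nd : (h.take t.val).Nodup := hnd.sublist (List.take_sublist _ _)
      have h0len : (h.take t.val).length = t.val := by rw [List.length_take]; omega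
      set h₀ := h.take t.val with hh0
      set z := h.getD t.val x₀ with hz
      set w := gchoice (ord (P t1)) x₀ h₀ with hw
      have hwg : Grd (ord (P t1)) h₀ w := gchoice_grd _ x₀ h₀ (by omega)
      have hxh0 : x ∉ h₀ := fun hc => hx (by rw [hdec]; simp [hc])
      have hgrds : ∀ g' : List M, g'.Nodup → t.val + 2 ≤ g'.length → g'.length < m →
          Grd (ord (movP P t g'.length)) g' (s.choice g') := by
        intro g' hnd' hlo' hg'
        have := spe_greedy_G P ord t L hafter s hspe g' hnd' (by omega) hg'
        rwa [movP_eq P t g'.length hg']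
      have hgrdF : ∀ g' : List M, t.val + 2 ≤ g'.length → g'.length < m →
          Grd (ord (movP P t g'.length)) g' (F.choice g') := by
        intro g' hlo' hg'
        rw [hF, stratF_choice, if_neg (by omega), if_neg (by omega), if_neg (by omega)]
        exact gchoice_grd _ x₀ g' (lt_of_lt_of_le hg' hm)
      by_cases hzw : z = w
      · -- on-path history: the lout has just taken her favourite
        have hdecw : h = h₀ ++ [w] := by rw [← hzw]; exact hdec
        set c := s.choice h₀ with hc
        obtain ⟨l, hl1, hl2⟩ := fwd_core P ord t ht L hm x₀ s htL hafter hspe h₀ h0nd h0len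
        have hFh0 : F.choice h₀ = w := by
          rw [hF, stratF_choice, if_neg (by omega), if_pos h0len]
        have hplay0 : F.play h₀ = F.play h := by
          conv_rhs => rw [hdecw]
          rw [← hFh0]
          exact play_step F h₀ (by omega)
        -- the deviation plays
        have hndx : (h ++ [x]).Nodup := by
          rw [List.nodup_append]
          exact ⟨hnd, List.nodup_singleton _, by simp; exact fun a ha hax => hx (hax ▸ ha)⟩
        have hxw : x ≠ w := fun hc' => hx (by rw [hdecw, hc']; simp)
        have hnd0x : (h₀ ++ [x]).Nodup := by
          rw [List.nodup_append]
          exact ⟨h0nd, List.nodup_singleton _, by simp; exact fun a ha hax => hxh0 (hax ▸ ha)⟩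
        have hsx : s.choice (h₀ ++ [x]) = w := by
          have hh := spe_greedy_G P ord t L hafter s hspe (h₀ ++ [x]) hnd0x
            (by simp [h0len]) (by simp [h0len]; omega)
          have heq : P (⟨(h₀ ++ [x]).length, by simp [h0len]; omega⟩ : Fin m) = P t1 := by
            congr 1; apply Fin.ext; simp [h0len, ht1]
          rw [heq] at hh
          refine Grd.unique hh ?_
          constructor
          · simp only [List.mem_append, List.mem_singleton]
            rintro (hmem | hmem)
            · exact hwg.1 hmem
            · exact hxw hmem.symm
          · intro y hy hne
            exact hwg.2 y (fun hmem => hy (by simp [hmem])) hne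
        have hnd2 : (h₀ ++ [x, w]).Nodup := nodup_app2 h0nd hxh0 hwg.1 hxw
        have hnd2' : (h₀ ++ [w, x]).Nodup := nodup_app2 h0nd hwg.1 hxh0 (Ne.symm hxw)
        obtain ⟨l₂, he1, he2⟩ := extend_pair s F (fun v => ord (movP P t v)) (m - t.val - 2)
          (h₀ ++ [x, w]) (h₀ ++ [w, x]) hnd2 hnd2' (by simp) (toFinset_app2_comm h₀ x w)
          (by simp [h0len]; omega)
          (fun g' hnd' hlo' hhi' => by
            show Grd (ord (movP P t g'.length)) g' (s.choice g')
            have hg' : g'.length < m := by simp at hhi'; omega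
            exact hgrds g' hnd' (by simp [h0len] at hlo'; omega) hg')
          (fun g' hnd' hlo' hhi' => by
            show Grd (ord (movP P t g'.length)) g' (F.choice g')
            have hg' : g'.length < m := by simp at hhi'; omega
            exact hgrdF g' (by simp [h0len] at hlo'; omega) hg')
        have gBs : s.play (h₀ ++ [x]) = fun v => (h₀ ++ x :: w :: l₂).getD v.val x₀ := by
          funext v
          rw [play_eq_getD s (h₀ ++ [x]) (by simp [h0len]) v x₀]
          conv_lhs => rw [show m - (h₀ ++ [x]).length = (m - t.val - 2) + 1 by
            simp [h0len]; omega]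
          rw [extend_succ, hsx, app2_eq, he1]
          simp
        have gBF : F.play (h ++ [x]) = fun v => (h₀ ++ w :: x :: l₂).getD v.val x₀ := by
          funext v
          rw [play_eq_getD F (h ++ [x]) (by simp [hlen1]; omega) v x₀]
          have hln : m - (h ++ [x]).length = m - t.val - 2 := by simp [hlen1]; omega
          rw [hln, hdecw, app2_eq, he2]
          simp
        have hKn : ¬ KnightLT P ord (P t) (s.play h₀) (s.play (h₀ ++ [x])) := by
          simpa only [prefG, if_neg htL] using hspe t h₀ h0nd h0len x hxh0
        intro hK
        apply hKn
        by_cases hcw : c = w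
        · rw [if_pos hcw] at hl1 hl2
          have hij : P t = P t1 := by
            by_contra hij
            exact never_rob P ord t ht L hm x₀ s htL hafter hspe hij h₀ h0nd h0len hcw
          have gAs : s.play h₀ = fun v => (h₀ ++ c :: gchoice (ord (P t1)) x₀ (h₀ ++ [w]) :: l).getD v.val x₀ := by
            funext v
            rw [play_eq_getD s h₀ (by omega) v x₀, hl1]
          have gAF : F.play h = fun v => (h₀ ++ w :: gchoice (ord (P t1)) x₀ (h₀ ++ [w]) :: l).getD v.val x₀ := by
            rw [← hplay0]
            funext v
            rw [play_eq_getD F h₀ (by omega) v x₀, hl2]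
          refine (knightLT_congr ?_ ?_).mp hK
          · intro r
            rw [gAs, gAF, hcw, comp_swap_eq P t ht hij]
          · intro r
            rw [gBs, gBF]
            exact (plate_lists P t ht h₀ l₂ x w h0len x₀ r).symm
        · rw [if_neg hcw] at hl1 hl2
          have gAs : s.play h₀ = fun v => (h₀ ++ c :: w :: l).getD v.val x₀ := by
            funext v
            rw [play_eq_getD s h₀ (by omega) v x₀, hl1]
          have gAF : F.play h = fun v => (h₀ ++ w :: c :: l).getD v.val x₀ := by
            rw [← hplay0]
            funext v
            rw [play_eq_getD F h₀ (by omega) v x₀, hl2]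
          refine (knightLT_congr ?_ ?_).mp hK
          · intro r
            rw [gAs, gAF]
            exact (plate_lists P t ht h₀ l c w h0len x₀ r).symm
          · intro r
            rw [gBs, gBF]
            exact (plate_lists P t ht h₀ l₂ x w h0len x₀ r).symm
      · -- off-path: the preceding lout move was not greedy
        have hFh : F.choice h = kmax P ord t ht hm x₀ (P t) h := by
          rw [hF, stratF_choice, if_neg (by omega), if_neg (by omega), if_pos hlen1,
            if_neg hzw]
        have hkm := kmax_spec P ord t ht hm x₀ (P t) h (by omega)
        have hplayS0 : ∀ y' : M, F.play (h ++ [y'])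
            = fun v => ((S0 P ord t hm x₀).play (h ++ [y'])) v := by
          intro y'
          funext v
          rw [play_eq_getD F (h ++ [y']) (by simp; omega) v x₀,
            play_eq_getD (S0 P ord t hm x₀) (h ++ [y']) (by simp; omega) v x₀]
          congr 1
          apply extend_congr
          intro g' h1 h2
          rw [hF, stratF_choice, if_neg (by simp [hlen1] at h1; omega),
            if_neg (by simp [hlen1] at h1; omega), if_neg (by simp [hlen1] at h1; omega)]
          rfl
        have hplayF : F.play h = F.play (h ++ [kmax P ord t ht hm x₀ (P t) h]) := by
          rw [← hFh]
          exact play_step F h (by omega)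
        intro hK
        refine hkm.2 x ?_ ?_
        · rw [Finset.mem_sdiff, List.mem_toFinset]
          exact ⟨Finset.mem_univ x, hx⟩
        · have e1 : (S0 P ord t hm x₀).play (h ++ [kmax P ord t ht hm x₀ (P t) h])
              = F.play h := by
            rw [hplayF, hplayS0]
          have e2 : (S0 P ord t hm x₀).play (h ++ [x]) = F.play (h ++ [x]) := by
            rw [hplayS0]
          rw [e1, e2]
          exact hK
    · -- lout turns after t+1
      have huL' : u ∈ insert t (L.erase t1) := by
        refine Finset.mem_insert_of_mem (Finset.mem_erase.mpr ⟨?_, ?_⟩)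
        · rw [Fin.ne_iff_vne]; simp [ht1]; omega
        · exact hafter u (by rw [Fin.lt_def]; omega)
      rw [if_pos huL']
      apply lout_safe (P ∘ Equiv.swap t t1) ord F u h hnd hlen x hx
      have hhm : h.length < m := by rw [hlen]; exact u.2
      have hch : F.choice h = gchoice (ord (movP P t h.length)) x₀ h := by
        rw [hF, stratF_choice, if_neg (by omega), if_neg (by omega), if_neg (by omega)]
      have hfix : Equiv.swap t t1 u = u :=
        swap_fix t ht u (by rw [Fin.ne_iff_vne]; omega)
          (by rw [Fin.ne_iff_vne]; simp [ht1]; omega)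
      rw [hch, movP_eq P t h.length hhm,
        show (⟨h.length, hhm⟩ : Fin m) = u from Fin.ext hlen,
        show (P ∘ Equiv.swap t t1) u = P u by simp [hfix]]
      exact gchoice_grd _ x₀ h (by omega)

end Forward3

end SwitchAux

/-- switching lemma: if `t ∉ L` is a knight turn, every later turn
is a lout turn, and `t < m`, then transposing turns `t` and `t+1` (making `t` a
lout turn and `t+1` a knight turn) yields a game with exactly the same possible
divisions of food under optimal play.  Here the knight turns carry exactly the
knight order as preference. -/
theorem switch_lemma {M : Type*} [Fintype M] [DecidableEq M] {m k : ℕ}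
    (hm : m ≤ Fintype.card M) (P : Fin m → Fin k) (ord : Fin k → LinearOrder M)
    (L : Finset (Fin m)) (t : Fin m) (ht : t.val + 1 < m)
    (htL : t ∉ L) (hafter : ∀ u : Fin m, t < u → u ∈ L)
    (D : Fin k → Finset M) :
    (∃ a : Fin m → M,
        OptimalPlay
          (fun u => if u ∈ L then LoutLT P ord (P u) else KnightLT P ord (P u)) a ∧
        ∀ i : Fin k, plate P a i = D i) ↔
      (∃ a' : Fin m → M,
        OptimalPlay
          (fun u =>
            if u ∈ insert t (L.erase ⟨t.val + 1, ht⟩) then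
              LoutLT (P ∘ Equiv.swap t ⟨t.val + 1, ht⟩) ord
                ((P ∘ Equiv.swap t ⟨t.val + 1, ht⟩) u)
            else
              KnightLT (P ∘ Equiv.swap t ⟨t.val + 1, ht⟩) ord
                ((P ∘ Equiv.swap t ⟨t.val + 1, ht⟩) u)) a' ∧
        ∀ i : Fin k, plate (P ∘ Equiv.swap t ⟨t.val + 1, ht⟩) a' i = D i) := by
  have hcard : 0 < Fintype.card M := by omega
  haveI : Nonempty M := Fintype.card_pos_iff.mp hcard
  set x₀ : M := Classical.arbitrary M
  constructor
  · rintro ⟨a, ⟨s, hspe, rfl⟩, hD⟩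
    refine ⟨(SwitchAux.stratF P ord t ht hm x₀ s).play [],
      ⟨SwitchAux.stratF P ord t ht hm x₀ s, ?_, rfl⟩, ?_⟩
    · exact SwitchAux.fwd_spe P ord t ht L hm x₀ s htL hafter hspe
    · intro i
      rw [SwitchAux.fwd_corr P ord t ht L hm x₀ s htL hafter hspe [] List.nodup_nil
        (by simp) i]
      exact hD i
  · rintro ⟨a', ⟨s', hspe', rfl⟩, hD⟩
    refine ⟨(SwitchAux.stratB P ord t ht hm x₀ s').play [],
      ⟨SwitchAux.stratB P ord t ht hm x₀ s', ?_, rfl⟩, ?_⟩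
    · exact SwitchAux.back_spe P ord t ht L hm x₀ s' htL hafter hspe'
    · intro i
      rw [SwitchAux.back_corr P ord t ht L hm x₀ s' hafter hspe' [] List.nodup_nil
        (by simp) i]
      exact hD i
end

section
/- In the group decision dinner, all optimal plays result in the same division of the food: if a and b are both optimal plays, then B_i(a) = B_i(b) for every player i. -/
/-- The group plate of player `i`: the morsels chosen on turns where `i` is NOT
the speaker. -/
def groupPlate {M : Type*} [DecidableEq M] {m k : ℕ} (P : Fin m → Fin k)
    (a : Fin m → M) (i : Fin k) : Finset M :=
  (Finset.univ.filter fun t => P t ≠ i).image a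

/-- The group Pareto order at turn `t`: every non-speaking player receives a
weakly more enjoyable group plate, and at least one receives a strictly more
enjoyable one. -/
def ParetoLT {M : Type*} [DecidableEq M] {m k : ℕ} (P : Fin m → Fin k)
    (ord : Fin k → LinearOrder M) (t : Fin m) (a b : Fin m → M) : Prop :=
  (∀ j, j ≠ P t → PlateLE (ord j).le (groupPlate P a j) (groupPlate P b j)) ∧
    ∃ j, j ≠ P t ∧ PlateLT (ord j).le (groupPlate P a j) (groupPlate P b j)

namespace GD
set_option linter.unusedSectionVars false
variable {M : Type*} [DecidableEq M]

/-- count of elements of `A` that are `≤ z` w.r.t. a linear order -/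
def cnt (L : LinearOrder M) (z : M) (A : Finset M) : ℕ :=
  (A.filter (fun y => L.le y z)).card

lemma cnt_insert (L : LinearOrder M) (z : M) {A : Finset M} {y : M} (hy : y ∉ A) :
    cnt L z (insert y A) = (if L.le y z then 1 else 0) + cnt L z A := by
  letI := L
  unfold cnt
  rw [Finset.filter_insert]
  split
  · rw [Finset.card_insert_of_notMem (by simp [hy])]; omega
  · simp

lemma cnt_union (L : LinearOrder M) (z : M) {A B : Finset M} (h : Disjoint A B) :
    cnt L z (A ∪ B) = cnt L z A + cnt L z B := by
  letI := L
  unfold cnt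
  rw [Finset.filter_union, Finset.card_union_of_disjoint]
  exact Finset.disjoint_filter_filter h

lemma plateLE_of_cnt (L : LinearOrder M) {A B : Finset M} (hcard : A.card = B.card)
    (h : ∀ z, cnt L z B ≤ cnt L z A) : PlateLE L.le A B := by
  letI := L
  have e₁ := A.orderIsoOfFin (rfl : A.card = A.card)
  have e₂ := B.orderIsoOfFin (hcard.symm : B.card = A.card)
  have key : ∀ i : Fin A.card, (e₁ i : M) ≤ (e₂ i : M) := by
    intro i
    by_contra hlt
    push_neg at hlt
    set z := (e₂ i : M) with hz
    have h1 : (i : ℕ) + 1 ≤ cnt L z B := by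
      have : (Finset.Iic i).card ≤ (B.filter (fun y => y ≤ z)).card := by
        apply Finset.card_le_card_of_injOn (fun t => (e₂ t : M))
        · intro t ht
          simp only [Finset.mem_coe, Finset.mem_Iic] at ht
          simp only [Finset.mem_coe, Finset.mem_filter]
          exact ⟨(e₂ t).2, e₂.monotone ht⟩
        · intro t _ t' _ htt
          exact e₂.injective (Subtype.ext htt)
      simpa [cnt, Fin.card_Iic] using this
    have h2 : cnt L z A ≤ (i : ℕ) := by
      have : (A.filter (fun y => y ≤ z)).card ≤ (Finset.Iio i).card := by
        apply Finset.card_le_card_of_injOn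
          (fun y => if hy : y ∈ A then e₁.symm ⟨y, hy⟩ else i)
        · intro y hy
          simp only [Finset.mem_coe, Finset.mem_filter] at hy
          simp only [hy.1, dif_pos, Finset.mem_coe, Finset.mem_Iio]
          by_contra hge
          push_neg at hge
          have : (e₁ i : M) ≤ (e₁ (e₁.symm ⟨y, hy.1⟩) : M) := e₁.monotone hge
          simp only [OrderIso.apply_symm_apply] at this
          exact absurd (le_trans this hy.2) (not_le.mpr hlt)
        · intro y hy y' hy' hyy
          simp only [Finset.mem_coe, Finset.mem_filter] at hy hy'
          simp only [hy.1, hy'.1, dif_pos] at hyy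
          have := congrArg e₁ hyy
          simp only [OrderIso.apply_symm_apply] at this
          exact Subtype.ext_iff.mp this
      simpa [cnt, Fin.card_Iio] using this
    have := h z
    omega
  refine ⟨fun a => e₂ (e₁.symm a), ((e₁.symm.toEquiv).trans e₂.toEquiv).bijective, ?_⟩
  intro a
  have ha : (a : M) = (e₁ (e₁.symm a) : M) := by simp
  conv_lhs => rw [ha]
  exact key _


variable {k : ℕ} (ord : Fin k → LinearOrder M)

/-- reverse-greedy assignment: process speakers from head, each picks the
speaker's least favourite of the remaining set. -/
def RG : List (Fin k) → Finset M → List M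
  | [], _ => []
  | q :: S, R =>
    if h : R.Nonempty then
      (@Finset.min' M (ord q) R h) :: RG S (R.erase (@Finset.min' M (ord q) R h))
    else []

lemma RG_cons {q : Fin k} {S : List (Fin k)} {R : Finset M} (h : R.Nonempty) :
    RG ord (q :: S) R =
      (@Finset.min' M (ord q) R h) :: RG ord S (R.erase (@Finset.min' M (ord q) R h)) := by
  simp [RG, h]

lemma mem_RG : ∀ {S : List (Fin k)} {R : Finset M} {y : M}, y ∈ RG ord S R → y ∈ R := by
  intro S
  induction S with
  | nil => intro R y hy; simp [RG] at hy
  | cons q S ih =>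
    intro R y hy
    by_cases h : R.Nonempty
    · rw [RG_cons ord h] at hy
      rcases List.mem_cons.mp hy with h1 | h2
      · rw [h1]; exact @Finset.min'_mem M (ord q) R h
      · exact Finset.mem_of_mem_erase (ih h2)
    · simp [RG, h] at hy

lemma length_RG : ∀ {S : List (Fin k)} {R : Finset M}, S.length ≤ R.card →
    (RG ord S R).length = S.length := by
  intro S
  induction S with
  | nil => intro R _; simp [RG]
  | cons q S ih =>
    intro R hle
    have h : R.Nonempty := Finset.card_pos.mp (by simp at hle; omega)
    rw [RG_cons ord h]
    have : S.length ≤ (R.erase (@Finset.min' M (ord q) R h)).card := by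
      rw [Finset.card_erase_of_mem (@Finset.min'_mem M (ord q) R h)]
      simp at hle; omega
    simp [ih this]

lemma nodup_RG : ∀ {S : List (Fin k)} {R : Finset M}, (RG ord S R).Nodup := by
  intro S
  induction S with
  | nil => intro R; simp [RG]
  | cons q S ih =>
    intro R
    by_cases h : R.Nonempty
    · rw [RG_cons ord h]
      refine List.nodup_cons.mpr ⟨fun hmem => ?_, ih⟩
      have := mem_RG ord hmem
      simp at this
    · simp [RG, h]

lemma min'_erase (L : LinearOrder M) {R : Finset M} {a : M} (ha : a ∈ R)
    (hR : (R.erase a).Nonempty)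
    (hne : a ≠ @Finset.min' M L R ⟨a, ha⟩) :
    @Finset.min' M L (R.erase a) hR = @Finset.min' M L R ⟨a, ha⟩ := by
  letI := L
  apply le_antisymm
  · apply Finset.min'_le
    exact Finset.mem_erase.mpr ⟨(Ne.symm hne), Finset.min'_mem R _⟩
  · apply Finset.le_min'
    intro y hy
    exact Finset.min'_le R y (Finset.mem_of_mem_erase hy)

lemma RG_erase : ∀ {S : List (Fin k)} {R : Finset M} {x : M}, x ∈ R →
    x ∉ (RG ord S R) → S.length < R.card →
    RG ord S (R.erase x) = RG ord S R := by
  intro S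
  induction S with
  | nil => intro R x _ _ _; simp [RG]
  | cons q S ih =>
    intro R x hx hnx hlen
    have h : R.Nonempty := ⟨x, hx⟩
    have hRe : (R.erase x).Nonempty := by
      rw [← Finset.card_pos, Finset.card_erase_of_mem hx]
      simp at hlen; omega
    have hne : x ≠ @Finset.min' M (ord q) R h := by
      intro hEq
      apply hnx
      rw [RG_cons ord h, ← hEq]
      exact List.mem_cons_self
    have hmin : @Finset.min' M (ord q) (R.erase x) hRe = @Finset.min' M (ord q) R h :=
      min'_erase (ord q) hx hRe hne
    rw [RG_cons ord h, RG_cons ord hRe, hmin]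
    congr 1
    rw [Finset.erase_right_comm]
    set μ := @Finset.min' M (ord q) R h with hμ
    have hxμ : x ∈ R.erase μ := Finset.mem_erase.mpr ⟨hne, hx⟩
    apply ih hxμ
    · intro hmem
      apply hnx
      rw [RG_cons ord h]
      exact List.mem_cons_of_mem _ hmem
    · rw [Finset.card_erase_of_mem (@Finset.min'_mem M (ord q) R h)]
      simp at hlen ⊢; omega

lemma RG_append : ∀ {S S' : List (Fin k)} {R : Finset M}, S.length ≤ R.card →
    RG ord (S ++ S') R = RG ord S R ++ RG ord S' (R \ (RG ord S R).toFinset) := by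
  intro S
  induction S with
  | nil => intro S' R _; simp [RG]
  | cons q S ih =>
    intro S' R hlen
    have h : R.Nonempty := Finset.card_pos.mp (by simp at hlen; omega)
    set μ := @Finset.min' M (ord q) R h with hμ
    have hμR : μ ∈ R := @Finset.min'_mem M (ord q) R h
    rw [List.cons_append, RG_cons ord h, RG_cons ord h, List.cons_append]
    have hlen' : S.length ≤ (R.erase μ).card := by
      rw [Finset.card_erase_of_mem hμR]; simp at hlen; omega
    rw [ih hlen']
    have hset : (R.erase μ) \ (RG ord S (R.erase μ)).toFinset
        = R \ (μ :: RG ord S (R.erase μ)).toFinset := by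
      ext y
      simp only [List.toFinset_cons, Finset.mem_sdiff, Finset.mem_erase, Finset.mem_insert,
        List.mem_toFinset]
      tauto
    rw [hset]


/-- plate of player `j` given speakers list `S` and chosen-morsels list `D`:
the morsels at positions where the speaker is not `j`. -/
def plateL (j : Fin k) : List (Fin k) → List M → Finset M
  | q :: S, y :: D => if q = j then plateL j S D else insert y (plateL j S D)
  | _, _ => ∅

@[simp] lemma plateL_nil (j : Fin k) (D : List M) : plateL (M := M) j [] D = ∅ := by
  cases D <;> rfl

@[simp] lemma plateL_nil' (j : Fin k) (S : List (Fin k)) : plateL (M := M) j S [] = ∅ := by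
  cases S <;> rfl

lemma plateL_cons (j q : Fin k) (S : List (Fin k)) (y : M) (D : List M) :
    plateL j (q :: S) (y :: D)
      = if q = j then plateL j S D else insert y (plateL j S D) := rfl

lemma plateL_subset (j : Fin k) : ∀ (S : List (Fin k)) (D : List M),
    plateL j S D ⊆ D.toFinset := by
  intro S
  induction S with
  | nil => intro D; simp
  | cons q S ih =>
    intro D
    cases D with
    | nil => simp
    | cons y D =>
      rw [plateL_cons]
      split
      · exact (ih D).trans (by simp [Finset.subset_insert, List.toFinset_cons])
      · rw [List.toFinset_cons]
        exact Finset.insert_subset_insert _ (ih D)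

lemma mem_plateL (j : Fin k) (d : M) : ∀ (S : List (Fin k)) (D : List M),
    S.length = D.length → ∀ y : M,
    (y ∈ plateL j S D ↔ ∃ i, ∃ h : i < S.length, S.get ⟨i, h⟩ ≠ j ∧ D.getD i d = y) := by
  intro S
  induction S with
  | nil => intro D _ y; simp
  | cons q S ih =>
    intro D hlen y
    cases D with
    | nil => simp at hlen
    | cons z D =>
      simp only [List.length_cons, Nat.add_right_cancel_iff] at hlen
      rw [plateL_cons]
      constructor
      · intro hy
        by_cases hq : q = j
        · rw [if_pos hq] at hy
          obtain ⟨i, hi, h1, h2⟩ := (ih D hlen y).mp hy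
          exact ⟨i + 1, by simpa using hi, by simpa using h1, by simpa using h2⟩
        · rw [if_neg hq] at hy
          rcases Finset.mem_insert.mp hy with h1 | h1
          · exact ⟨0, by simp, by simpa using hq, by simp [h1.symm]⟩
          · obtain ⟨i, hi, ha, hb⟩ := (ih D hlen y).mp h1
            exact ⟨i + 1, by simpa using hi, by simpa using ha, by simpa using hb⟩
      · rintro ⟨i, hi, h1, h2⟩
        cases i with
        | zero =>
          simp only [List.get] at h1
          simp only [List.getD_cons_zero] at h2
          rw [if_neg h1]
          exact Finset.mem_insert.mpr (Or.inl h2.symm)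
        | succ i =>
          have hmem : y ∈ plateL j S D := by
            apply (ih D hlen y).mpr
            exact ⟨i, by simpa using hi, by simpa using h1, by simpa using h2⟩
          split
          · exact hmem
          · exact Finset.mem_insert_of_mem hmem

lemma card_plateL (j : Fin k) : ∀ (S : List (Fin k)) (D : List M), D.Nodup →
    S.length = D.length →
    (plateL j S D).card = (S.filter (fun q => q ≠ j)).length := by
  intro S
  induction S with
  | nil => intro D _ _; simp
  | cons q S ih =>
    intro D hnd hlen
    cases D with
    | nil => simp at hlen
    | cons z D =>
      simp only [List.length_cons, Nat.add_right_cancel_iff] at hlen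
      have hnd' : D.Nodup := (List.nodup_cons.mp hnd).2
      rw [plateL_cons]
      by_cases hq : q = j
      · rw [if_pos hq, ih D hnd' hlen, List.filter_cons]
        simp [hq]
      · rw [if_neg hq, Finset.card_insert_of_notMem, ih D hnd' hlen, List.filter_cons]
        · simp [hq]
        · intro hmem
          exact (List.nodup_cons.mp hnd).1 (List.mem_toFinset.mp (plateL_subset j S D hmem))

lemma plateL_append (j : Fin k) : ∀ (S₁ : List (Fin k)) (D₁ : List M),
    S₁.length = D₁.length → ∀ (S₂ : List (Fin k)) (D₂ : List M),
    plateL j (S₁ ++ S₂) (D₁ ++ D₂) = plateL j S₁ D₁ ∪ plateL j S₂ D₂ := by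
  intro S₁
  induction S₁ with
  | nil =>
    intro D₁ hlen S₂ D₂
    have : D₁ = [] := List.length_eq_zero_iff.mp hlen.symm
    simp [this]
  | cons q S ih =>
    intro D₁ hlen S₂ D₂
    cases D₁ with
    | nil => simp at hlen
    | cons z D =>
      simp only [List.length_cons, Nat.add_right_cancel_iff] at hlen
      simp only [List.cons_append, plateL_cons, ih D hlen S₂ D₂]
      split
      · rfl
      · rw [Finset.insert_union]

lemma plateL_reverse (j : Fin k) : ∀ (S : List (Fin k)) (D : List M),
    S.length = D.length →
    plateL j S.reverse D.reverse = plateL j S D := by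
  intro S
  induction S with
  | nil => intro D _; simp
  | cons q S ih =>
    intro D hlen
    cases D with
    | nil => simp at hlen
    | cons z D =>
      simp only [List.length_cons, Nat.add_right_cancel_iff] at hlen
      simp only [List.reverse_cons]
      rw [plateL_append j S.reverse D.reverse (by simp [hlen]), ih D hlen, plateL_cons,
        plateL_cons]
      split
      · simp [plateL]
      · ext y
        simp only [plateL, Finset.mem_union, Finset.mem_insert]
        have : plateL (M := M) j [] [] = ∅ := rfl
        simp only [plateL_nil', Finset.mem_insert, Finset.notMem_empty, or_false]
        tauto


lemma cnt_singleton (L : LinearOrder M) (z y : M) :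
    cnt L z {y} = if L.le y z then 1 else 0 := by
  letI := L
  unfold cnt
  rw [Finset.filter_singleton]
  split <;> simp

lemma genC (p j : Fin k) (hj : j ≠ p) (z : M) :
    ∀ (S : List (Fin k)) (R : Finset M) (c w : M), c ∈ R → w ∉ R.erase c →
    S.length + 1 = R.card →
    cnt (ord j) z (plateL j (S ++ [p]) (RG ord (S ++ [p]) R))
        + (if (ord j).le w z then 1 else 0)
      ≤ cnt (ord j) z (plateL j (S ++ [p]) (RG ord S (R.erase c) ++ [w]))
        + (if (ord j).le c z then 1 else 0) := by
  intro S
  induction S with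
  | nil =>
    intro R c w hc hw hlen
    obtain ⟨a, ha⟩ := Finset.card_eq_one.mp hlen.symm
    rw [ha] at hc
    rw [Finset.mem_singleton] at hc
    subst hc
    subst ha
    have h1 : RG ord ([] ++ [p]) ({c} : Finset M) = [c] := by
      rw [List.nil_append, RG_cons ord ⟨c, Finset.mem_singleton_self c⟩]
      simp [RG, @Finset.min'_singleton M (ord p) c]
    have h2 : RG ord [] (({c} : Finset M).erase c) ++ [w] = [w] := by simp [RG]
    rw [h1, h2, List.nil_append]
    have hp1 : plateL j [p] [c] = ({c} : Finset M) := by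
      rw [plateL_cons, if_neg (Ne.symm hj)]; rfl
    have hp2 : plateL j [p] [w] = ({w} : Finset M) := by
      rw [plateL_cons, if_neg (Ne.symm hj)]; rfl
    rw [hp1, hp2, cnt_singleton, cnt_singleton]
    omega
  | cons q S' ih =>
    intro R c w hc hw hlen
    have hR : R.Nonempty := ⟨c, hc⟩
    set μ := @Finset.min' M (ord q) R hR with hμdef
    have hμR : μ ∈ R := @Finset.min'_mem M (ord q) R hR
    simp only [List.length_cons] at hlen
    have hcardRc : (R.erase c).card = S'.length + 1 := by
      rw [Finset.card_erase_of_mem hc]; omega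
    have hRc : (R.erase c).Nonempty := Finset.card_pos.mp (by omega)
    by_cases hcμ : c = μ
    · -- the token is picked at the head
      set ν := @Finset.min' M (ord q) (R.erase c) hRc with hνdef
      have hνRc : ν ∈ R.erase c := @Finset.min'_mem M (ord q) (R.erase c) hRc
      have hD2 : RG ord ((q :: S') ++ [p]) R
          = μ :: RG ord (S' ++ [p]) (R.erase c) := by
        rw [List.cons_append, RG_cons ord hR, ← hμdef, hcμ]
      have hD1 : RG ord (q :: S') (R.erase c) ++ [w]
          = ν :: (RG ord S' ((R.erase c).erase ν) ++ [w]) := by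
        rw [RG_cons ord hRc, ← hνdef, List.cons_append]
      have hIH := ih (R.erase c) ν w hνRc
        (fun hmem => hw (Finset.mem_of_mem_erase hmem)) (by omega)
      have hνw : ν ≠ w := fun hEq => hw (hEq ▸ hνRc)
      have hcν : (ord q).le c ν := by
        rw [hcμ, hμdef]
        exact @Finset.min'_le M (ord q) R ν (Finset.mem_of_mem_erase hνRc)
      -- not-mem facts
      have hm2 : c ∉ plateL j (S' ++ [p]) (RG ord (S' ++ [p]) (R.erase c)) := by
        intro hmem
        have := mem_RG ord (List.mem_toFinset.mp (plateL_subset j _ _ hmem))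
        simp at this
      have hm1 : ν ∉ plateL j (S' ++ [p]) (RG ord S' ((R.erase c).erase ν) ++ [w]) := by
        intro hmem
        have := List.mem_toFinset.mp (plateL_subset j _ _ hmem)
        rcases List.mem_append.mp this with h1 | h1
        · have := mem_RG ord h1; simp at this
        · simp at h1; exact hνw h1
      rw [hD2, hD1, List.cons_append, plateL_cons, plateL_cons]
      by_cases hq : q = j
      · rw [if_pos hq, if_pos hq]
        have hb : (if (ord j).le ν z then (1:ℕ) else 0) ≤ (if (ord j).le c z then 1 else 0) := by
          split
          · rw [if_pos ((ord j).le_trans c ν z (hq ▸ hcν) (by assumption))]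
          · omega
        omega
      · rw [if_neg hq, if_neg hq, ← hcμ, cnt_insert _ _ hm2, cnt_insert _ _ hm1]
        omega
    · -- the token is not picked at the head
      have hμRc : μ ∈ R.erase c := Finset.mem_erase.mpr ⟨Ne.symm hcμ, hμR⟩
      have hmin : @Finset.min' M (ord q) (R.erase c) hRc = μ :=
        min'_erase (ord q) hc hRc hcμ
      have hD2 : RG ord ((q :: S') ++ [p]) R
          = μ :: RG ord (S' ++ [p]) (R.erase μ) := by
        rw [List.cons_append, RG_cons ord hR]
      have hD1 : RG ord (q :: S') (R.erase c) ++ [w]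
          = μ :: (RG ord S' ((R.erase μ).erase c) ++ [w]) := by
        rw [RG_cons ord hRc, hmin, List.cons_append, Finset.erase_right_comm]
      have hcRμ : c ∈ R.erase μ := Finset.mem_erase.mpr ⟨hcμ, hc⟩
      have hwμ : w ∉ (R.erase μ).erase c := by
        intro hmem
        rw [Finset.erase_right_comm] at hmem
        exact hw (Finset.mem_of_mem_erase hmem)
      have hIH := ih (R.erase μ) c w hcRμ hwμ
        (by rw [Finset.card_erase_of_mem hμR]; omega)
      have hwneμ : w ≠ μ := fun hEq => hw (hEq ▸ hμRc)
      have hm2 : μ ∉ plateL j (S' ++ [p]) (RG ord (S' ++ [p]) (R.erase μ)) := by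
        intro hmem
        have := mem_RG ord (List.mem_toFinset.mp (plateL_subset j _ _ hmem))
        simp at this
      have hm1 : μ ∉ plateL j (S' ++ [p]) (RG ord S' ((R.erase μ).erase c) ++ [w]) := by
        intro hmem
        have := List.mem_toFinset.mp (plateL_subset j _ _ hmem)
        rcases List.mem_append.mp this with h1 | h1
        · have := mem_RG ord h1; simp at this
        · simp at h1; exact hwneμ h1.symm
      rw [hD2, hD1, List.cons_append, plateL_cons, plateL_cons]
      by_cases hq : q = j
      · rw [if_pos hq, if_pos hq]
        exact hIH
      · rw [if_neg hq, if_neg hq, cnt_insert _ _ hm2, cnt_insert _ _ hm1]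
        omega


section Game
variable {m : ℕ}

lemma extend_succ (s : Strategy M m) (n : ℕ) (h : List M) :
    s.extend (n + 1) h = s.extend n (h ++ [s.choice h]) := rfl

lemma length_extend (s : Strategy M m) : ∀ (n : ℕ) (h : List M),
    (s.extend n h).length = h.length + n := by
  intro n
  induction n with
  | zero => intro h; rfl
  | succ n ih =>
    intro h
    rw [extend_succ, ih]
    simp; omega

lemma play_succ (s : Strategy M m) (h : List M) (r : ℕ) (hlen : h.length + (r + 1) = m) :
    s.play h = s.play (h ++ [s.choice h]) := by
  funext t
  unfold Strategy.play
  have h1 : m - h.length = r + 1 := by omega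
  have h2 : m - (h ++ [s.choice h]).length = r := by simp; omega
  rw [h1, h2, extend_succ]

lemma play_full (s : Strategy M m) (h : List M) (hlen : h.length = m) :
    s.play h = fun t => h.getD t.val (s.choice []) := by
  funext t
  unfold Strategy.play
  rw [hlen, Nat.sub_self]
  rfl

variable {k : ℕ}

lemma groupPlate_eq_plateL (P : Fin m → Fin k) (L : List M) (hL : L.length = m)
    (d : M) (j : Fin k) :
    groupPlate P (fun t => L.getD t.val d) j = plateL j (List.ofFn P) L := by
  ext y
  rw [mem_plateL j d (List.ofFn P) L (by simp [hL]), groupPlate]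
  simp only [Finset.mem_image, Finset.mem_filter, Finset.mem_univ, true_and]
  constructor
  · rintro ⟨t, ht, rfl⟩
    refine ⟨t.val, by simp, ?_, rfl⟩
    rw [List.get_ofFn]
    simpa using ht
  · rintro ⟨i, hi, hne, hy⟩
    simp only [List.length_ofFn] at hi
    refine ⟨⟨i, hi⟩, ?_, hy⟩
    rw [List.get_ofFn] at hne
    simpa using hne

end Game

section Main
variable {m k : ℕ} [Fintype M]

/-- speakers of turns `m-1, m-2, ..., t`. -/
def Srev (P : Fin m → Fin k) (t : ℕ) : List (Fin k) := ((List.ofFn P).drop t).reverse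

lemma length_Srev (P : Fin m → Fin k) (t : ℕ) : (Srev P t).length = m - t := by
  simp [Srev]

lemma Srev_succ (P : Fin m → Fin k) (t : ℕ) (ht : t < m) :
    Srev P t = Srev P (t + 1) ++ [P ⟨t, ht⟩] := by
  unfold Srev
  rw [List.drop_eq_getElem_cons (by simpa using ht), List.reverse_cons]
  congr
  simp

/-- the canonical ("backward greedy") completion of history `h`. -/
def canonL (P : Fin m → Fin k) (ord : Fin k → LinearOrder M) (h : List M) : List M :=
  h ++ (RG ord (Srev P h.length) ((Finset.univ : Finset M) \ h.toFinset)).reverse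

lemma mem_plateL_ofFn (P : Fin m → Fin k) (L : List M) (hL : L.length = m) (d : M)
    (j : Fin k) (y : M) :
    y ∈ plateL j (List.ofFn P) L ↔
      ∃ i, ∃ hi : i < m, P ⟨i, hi⟩ ≠ j ∧ L.getD i d = y := by
  rw [mem_plateL j d _ _ (by simp [hL])]
  constructor <;> rintro ⟨i, hi, h1, h2⟩
  · refine ⟨i, by simpa using hi, ?_, h2⟩
    rw [List.get_ofFn] at h1
    simpa using h1
  · refine ⟨i, by simpa using hi, ?_, h2⟩
    rw [List.get_ofFn]
    simpa using h1

lemma getD_inj {L : List M} (hnd : L.Nodup) {i i' : ℕ} (hi : i < L.length)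
    (hi' : i' < L.length) {d : M} (h : L.getD i d = L.getD i' d) : i = i' := by
  rw [List.getD_eq_getElem L d hi, List.getD_eq_getElem L d hi'] at h
  exact (List.Nodup.getElem_inj_iff hnd).mp h

lemma plate_p_subset (hm : m = Fintype.card M) (P : Fin m → Fin k) (p : Fin k)
    {L1 L2 : List M} (h1 : L1.Nodup) (hl1 : L1.length = m) (hl2 : L2.length = m)
    (hu2 : L2.toFinset = Finset.univ)
    (hagree : ∀ j, j ≠ p → plateL j (List.ofFn P) L1 = plateL j (List.ofFn P) L2) :
    plateL p (List.ofFn P) L1 ⊆ plateL p (List.ofFn P) L2 := by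
  intro y hy
  obtain ⟨i1, hi1, hP1, hg1⟩ := (mem_plateL_ofFn P L1 hl1 y p y).mp hy
  set j := P ⟨i1, hi1⟩ with hjdef
  by_contra hy2
  -- y occurs in L2 at some position, necessarily with speaker p
  have hyL2 : y ∈ L2 := by
    rw [← List.mem_toFinset, hu2]; exact Finset.mem_univ y
  obtain ⟨i2, hi2, hg2⟩ := List.mem_iff_getElem.mp hyL2
  have hg2' : L2.getD i2 y = y := by rw [List.getD_eq_getElem L2 y hi2, hg2]
  have hi2m : i2 < m := by omega
  have hP2 : P ⟨i2, hi2m⟩ = p := by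
    by_contra hne
    exact hy2 ((mem_plateL_ofFn P L2 hl2 y p y).mpr ⟨i2, hi2m, hne, hg2'⟩)
  -- plates of j differ
  have hyj2 : y ∈ plateL j (List.ofFn P) L2 :=
    (mem_plateL_ofFn P L2 hl2 y j y).mpr ⟨i2, hi2m, by rw [hP2]; exact Ne.symm hP1, hg2'⟩
  have hyj1 : y ∉ plateL j (List.ofFn P) L1 := by
    intro hmem
    obtain ⟨i, hi, hPi, hgi⟩ := (mem_plateL_ofFn P L1 hl1 y j y).mp hmem
    have : i = i1 := getD_inj h1 (by omega) (by omega) (hgi.trans hg1.symm)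
    subst this
    exact hPi rfl
  rw [hagree j hP1] at hyj1
  exact hyj1 hyj2

lemma diff_speaker (hm : m = Fintype.card M) (P : Fin m → Fin k) (p : Fin k)
    {L1 L2 : List M} (h1 : L1.Nodup) (h2 : L2.Nodup) (hl1 : L1.length = m)
    (hl2 : L2.length = m) (hu1 : L1.toFinset = Finset.univ)
    (hu2 : L2.toFinset = Finset.univ)
    (hne : ∃ j, plateL j (List.ofFn P) L1 ≠ plateL j (List.ofFn P) L2) :
    ∃ j, j ≠ p ∧ plateL j (List.ofFn P) L1 ≠ plateL j (List.ofFn P) L2 := by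
  by_contra hcon
  push_neg at hcon
  obtain ⟨j0, hj0⟩ := hne
  have hjp : j0 = p := by
    by_contra hne'
    exact hj0 (by_contra fun hc => (hc (hcon j0 hne')).elim)
  subst hjp
  apply hj0
  apply Finset.Subset.antisymm
  · exact plate_p_subset hm P j0 h1 hl1 hl2 hu2 (fun j hj => hcon j hj)
  · exact plate_p_subset hm P j0 h2 hl2 hl1 hu1 (fun j hj => (hcon j hj).symm)

lemma main_lemma (hm : m = Fintype.card M) (P : Fin m → Fin k)
    (ord : Fin k → LinearOrder M) (s : Strategy M m)
    (hs : SPE (fun t => ParetoLT P ord t) s) :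
    ∀ (r : ℕ) (h : List M), h.Nodup → h.length + r = m →
      ∀ j, groupPlate P (s.play h) j = plateL j (List.ofFn P) (canonL P ord h) := by
  intro r
  induction r with
  | zero =>
    intro h hnd hlen j
    simp only [Nat.add_zero] at hlen
    have hdrop : (List.ofFn P).drop m = [] :=
      List.drop_eq_nil_of_le (by simp)
    have hcanon : canonL P ord h = h := by
      unfold canonL Srev
      rw [hlen, hdrop]
      have : RG ord ([] : List (Fin k)).reverse
          ((Finset.univ : Finset M) \ h.toFinset) = [] := rfl
      rw [this]
      simp
    rw [hcanon, play_full s h hlen]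
    exact groupPlate_eq_plateL P h hlen (s.choice []) j
  | succ r ih =>
    intro h hnd hlen j
    set t := h.length with htdef
    have ht : t < m := by omega
    set p := P ⟨t, ht⟩ with hpdef
    set R := (Finset.univ : Finset M) \ h.toFinset with hRdef
    have hcardR : R.card = r + 1 := by
      rw [hRdef, Finset.card_sdiff_of_subset (Finset.subset_univ _), Finset.card_univ, ← hm,
        List.toFinset_card_of_nodup hnd]
      omega
    set S := Srev P (t + 1) with hSdef
    have hlenS : S.length = r := by rw [hSdef, length_Srev]; omega
    set Q := RG ord S R with hQdef
    have hlenQ : Q.length = r := by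
      rw [hQdef, length_RG ord (by rw [hlenS, hcardR]; omega)]; exact hlenS
    have hQsub : Q.toFinset ⊆ R := fun y hy => mem_RG ord (List.mem_toFinset.mp hy)
    have hQcard : Q.toFinset.card = r := by
      rw [List.toFinset_card_of_nodup (nodup_RG ord), hlenQ]
    set Lft := R \ Q.toFinset with hLdef
    have hLcard : Lft.card = 1 := by
      rw [hLdef, Finset.card_sdiff_of_subset hQsub, hQcard, hcardR]
      omega
    have hLne : Lft.Nonempty := Finset.card_pos.mp (by omega)
    set x0 := @Finset.min' M (ord p) Lft hLne with hx0def
    have hx0L : x0 ∈ Lft := @Finset.min'_mem M (ord p) Lft hLne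
    have hx0R : x0 ∈ R := (Finset.mem_sdiff.mp (hLdef ▸ hx0L)).1
    have hx0nQ : x0 ∉ Q.toFinset := (Finset.mem_sdiff.mp (hLdef ▸ hx0L)).2
    have hx0h : x0 ∉ h := by
      have := (Finset.mem_sdiff.mp (hRdef ▸ hx0R)).2
      simpa using this
    have hSp : Srev P t = S ++ [p] := Srev_succ P t ht
    have hD2 : RG ord (S ++ [p]) R = Q ++ [x0] := by
      rw [RG_append ord (by rw [hlenS, hcardR]; omega), ← hQdef, ← hLdef]
      congr 1
      rw [RG_cons ord hLne, ← hx0def]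
      rfl
    set x := s.choice h with hxdef
    have hxh : x ∉ h := s.valid h hnd (by omega)
    have hxR : x ∈ R := Finset.mem_sdiff.mpr ⟨Finset.mem_univ x, by simpa using hxh⟩
    have hplay : s.play h = s.play (h ++ [x]) := play_succ s h r (by omega)
    have happnd : ∀ y : M, y ∉ h → (h ++ [y]).Nodup := by
      intro y hy
      rw [List.nodup_append]
      exact ⟨hnd, List.nodup_singleton y, fun a ha b hb hab => hy (by rw [List.mem_singleton] at hb; subst hb; subst hab; exact ha)⟩
    have hcanon_app : ∀ y : M, y ∉ h →
        canonL P ord (h ++ [y]) = h ++ (RG ord S (R.erase y) ++ [y]).reverse := by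
      intro y hy
      unfold canonL
      have hlen' : (h ++ [y]).length = t + 1 := by simp [htdef]
      rw [hlen']
      have hset : (Finset.univ : Finset M) \ (h ++ [y]).toFinset = R.erase y := by
        ext z
        simp only [hRdef, List.toFinset_append, List.toFinset_cons, List.toFinset_nil,
          Finset.mem_sdiff, Finset.mem_univ, true_and, Finset.mem_erase, Finset.mem_union,
          Finset.mem_insert, Finset.notMem_empty, or_false, List.mem_toFinset]
        tauto
      rw [hset, ← hSdef, List.reverse_append, List.append_assoc]
      rfl
    set D1 := RG ord S (R.erase x) ++ [x] with hD1def
    set L1 := h ++ D1.reverse with hL1def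
    set L2 := h ++ (Q ++ [x0]).reverse with hL2def
    have hcanx : canonL P ord (h ++ [x]) = L1 := hcanon_app x hxh
    have hcanh : canonL P ord h = L2 := by
      unfold canonL
      rw [← htdef, hSp, ← hRdef, hD2]
    have hcardRx : (R.erase x).card = r := by
      rw [Finset.card_erase_of_mem hxR, hcardR]
      omega
    have hxnRG : x ∉ RG ord S (R.erase x) := by
      intro hmem
      exact (Finset.notMem_erase x R) (mem_RG ord hmem)
    have hD1nd : D1.Nodup := by
      rw [hD1def, List.nodup_append]
      exact ⟨nodup_RG ord, List.nodup_singleton x,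
        fun a ha b hb hab => hxnRG (by rw [List.mem_singleton] at hb; subst hb; subst hab; exact ha)⟩
    have hD1len : D1.length = r + 1 := by
      rw [hD1def, List.length_append, length_RG ord (by rw [hlenS, hcardRx]),
        hlenS]
      rfl
    have hD1sub : D1.toFinset ⊆ R := by
      intro y hy
      rcases List.mem_append.mp (List.mem_toFinset.mp hy) with h1 | h1
      · exact Finset.mem_of_mem_erase (mem_RG ord h1)
      · simp at h1; exact h1 ▸ hxR
    have hD2nd : (Q ++ [x0]).Nodup := by
      rw [List.nodup_append]
      refine ⟨nodup_RG ord, List.nodup_singleton x0, ?_⟩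
      intro a ha b hb hab
      rw [List.mem_singleton] at hb; subst hb; subst hab
      exact hx0nQ (List.mem_toFinset.mpr ha)
    have hD2len : (Q ++ [x0]).length = r + 1 := by simp [hlenQ]
    have hD2sub : (Q ++ [x0]).toFinset ⊆ R := by
      intro y hy
      rcases List.mem_append.mp (List.mem_toFinset.mp hy) with h1 | h1
      · exact mem_RG ord h1
      · simp at h1; exact h1 ▸ hx0R
    -- global facts about L1 and L2
    have hLfacts : ∀ D : List M, D.Nodup → D.length = r + 1 → D.toFinset ⊆ R →
        (h ++ D.reverse).Nodup ∧ (h ++ D.reverse).length = m ∧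
          (h ++ D.reverse).toFinset = Finset.univ := by
      intro D hDnd hDlen hDsub
      have hnd' : (h ++ D.reverse).Nodup := by
        rw [List.nodup_append]
        refine ⟨hnd, List.nodup_reverse.mpr hDnd, ?_⟩
        intro a ha b hamem hab
        subst hab
        have haR : a ∈ R := hDsub (List.mem_toFinset.mpr (List.mem_reverse.mp hamem))
        have := (Finset.mem_sdiff.mp (hRdef ▸ haR)).2
        exact this (List.mem_toFinset.mpr ha)
      have hlen' : (h ++ D.reverse).length = m := by simp [hDlen]; omega
      refine ⟨hnd', hlen', ?_⟩
      apply Finset.eq_univ_of_card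
      rw [List.toFinset_card_of_nodup hnd', hlen', hm]
    obtain ⟨hndL1, hlenL1, huL1⟩ := hLfacts D1 hD1nd hD1len hD1sub
    obtain ⟨hndL2, hlenL2, huL2⟩ := hLfacts (Q ++ [x0]) hD2nd hD2len hD2sub
    -- plate decomposition
    have hdecomp : ∀ (D : List M), D.length = r + 1 → ∀ j' : Fin k,
        plateL j' (List.ofFn P) (h ++ D.reverse)
          = plateL j' ((List.ofFn P).take t) h ∪ plateL j' (S ++ [p]) D := by
      intro D hD j'
      conv_lhs => rw [← List.take_append_drop t (List.ofFn P)]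
      rw [plateL_append j' _ h (by simp [htdef]; omega)]
      congr 1
      have hdrop : (List.ofFn P).drop t = (S ++ [p]).reverse := by
        rw [← hSp]
        unfold Srev
        rw [List.reverse_reverse]
      rw [hdrop, plateL_reverse j' (S ++ [p]) D (by simp [hlenS, hD])]
    have hCsub : ∀ j' : Fin k, plateL j' ((List.ofFn P).take t) h ⊆ h.toFinset :=
      fun j' => plateL_subset j' _ h
    have hdisj : ∀ j' : Fin k, ∀ D : List M, D.toFinset ⊆ R →
        Disjoint (plateL j' ((List.ofFn P).take t) h) (plateL j' (S ++ [p]) D) := by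
      intro j' D hDsub
      rw [Finset.disjoint_left]
      intro a ha haD
      have haR : a ∈ R := hDsub (plateL_subset j' _ D haD)
      exact (Finset.mem_sdiff.mp (hRdef ▸ haR)).2 (hCsub j' ha)
    -- the IH applied to the two continuations
    have hGP1 : ∀ j' : Fin k, groupPlate P (s.play h) j' = plateL j' (List.ofFn P) L1 := by
      intro j'
      rw [hplay, ih (h ++ [x]) (happnd x hxh) (by simp; omega) j', hcanx]
    have hcanx0 : canonL P ord (h ++ [x0]) = L2 := by
      rw [hcanon_app x0 hx0h]
      rw [RG_erase ord hx0R (fun hmem => hx0nQ (List.mem_toFinset.mpr hmem))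
        (by rw [hlenS, hcardR]; omega), ← hQdef]
    have hGP2 : ∀ j' : Fin k,
        groupPlate P (s.play (h ++ [x0])) j' = plateL j' (List.ofFn P) L2 := by
      intro j'
      rw [ih (h ++ [x0]) (happnd x0 hx0h) (by simp; omega) j', hcanx0]
    -- the Pareto comparison for every non-speaker
    have hple : ∀ j' : Fin k, j' ≠ p →
        PlateLE (ord j').le (plateL j' (List.ofFn P) L1) (plateL j' (List.ofFn P) L2) := by
      intro j' hj'
      rw [hL1def, hL2def, hdecomp D1 hD1len j', hdecomp (Q ++ [x0]) hD2len j']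
      apply plateLE_of_cnt (ord j')
      · rw [Finset.card_union_of_disjoint (hdisj j' D1 hD1sub),
          Finset.card_union_of_disjoint (hdisj j' (Q ++ [x0]) hD2sub),
          card_plateL j' (S ++ [p]) D1 hD1nd (by simp [hlenS, hD1len]),
          card_plateL j' (S ++ [p]) (Q ++ [x0]) hD2nd (by simp [hlenS, hD2len])]
      · intro z
        rw [cnt_union _ _ (hdisj j' D1 hD1sub), cnt_union _ _ (hdisj j' (Q ++ [x0]) hD2sub)]
        have hgen := genC ord p j' hj' z S R x x hxR (Finset.notMem_erase x R)
          (by rw [hlenS, hcardR])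
        rw [hD2, ← hD1def] at hgen
        omega
    have key : ∀ j' : Fin k, plateL j' (List.ofFn P) L1 = plateL j' (List.ofFn P) L2 := by
      by_contra hcon
      push_neg at hcon
      obtain ⟨j1, hj1p, hj1⟩ := diff_speaker hm P p hndL1 hndL2 hlenL1 hlenL2 huL1 huL2 hcon
      have hpareto : ParetoLT P ord ⟨t, ht⟩ (s.play h) (s.play (h ++ [x0])) := by
        constructor
        · intro j' hj'
          rw [hGP1 j', hGP2 j']
          exact hple j' hj'
        · refine ⟨j1, hj1p, ?_⟩
          rw [hGP1 j1, hGP2 j1]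
          exact ⟨hple j1 hj1p, hj1⟩
      exact hs ⟨t, ht⟩ h hnd rfl x0 hx0h hpareto
    rw [hGP1 j, key j, hcanh]

end Main
end GD

/-- in the group decision dinner all optimal plays result in the
same division of the food. -/
theorem group_optimal_plays_same_division {M : Type*} [Fintype M] [DecidableEq M]
    {m k : ℕ} (hm : m = Fintype.card M) (P : Fin m → Fin k)
    (ord : Fin k → LinearOrder M) (a b : Fin m → M)
    (ha : OptimalPlay (fun t => ParetoLT P ord t) a)
    (hb : OptimalPlay (fun t => ParetoLT P ord t) b) :
    ∀ i : Fin k, groupPlate P a i = groupPlate P b i := by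
  intro i
  obtain ⟨s1, hs1, ha⟩ := ha
  obtain ⟨s2, hs2, hb⟩ := hb
  rw [ha, hb,
    GD.main_lemma hm P ord s1 hs1 m [] List.nodup_nil (by simp) i,
    GD.main_lemma hm P ord s2 hs2 m [] List.nodup_nil (by simp) i]
end

section
/- (Kohler–Chandrasekaran, two self-interested players.) Suppose k = 2 and m = n (all morsels are consumed). For each player i, let the self-interested order on play sequences be: a ≺_i b iff A_i(a) <_i A_i(b), and suppose the preference at each turn t is a strict partial order extending the self-interested order of player P t. Consider the deterministic play b of the reversed game with turn order Q t = P (n+1−t), in which at each turn the mover selects the remaining morsel that is MINIMAL with respect to the OTHER player's ranking. Then for every optimal play a of the self-interested game and each player i, the plate A_i(a) (with turn order P) equals the plate of player i under b (with turn order Q). -/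
/-- Player `i`'s self-interested order on play sequences: `a ≺ b` iff player `i`
receives a strictly more enjoyable plate in `b`. -/
def SelfLT {M : Type*} [DecidableEq M] {m k : ℕ} (P : Fin m → Fin k)
    (ord : Fin k → LinearOrder M) (i : Fin k) (a b : Fin m → M) : Prop :=
  PlateLT (ord i).le (plate P a i) (plate P b i)

/-- The deterministic play in which at each turn the mover selects the remaining
morsel that is minimal with respect to the OTHER player's ranking. -/
def IsGreedyMinOther {M : Type*} {m : ℕ} (Q : Fin m → Fin 2)
    (ord : Fin 2 → LinearOrder M) (b : Fin m → M) : Prop :=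
  Function.Injective b ∧
    ∀ t : Fin m, ∀ x : M, (∀ s : Fin m, s < t → b s ≠ x) → x ≠ b t →
      (ord (1 - Q t)).lt (b t) x


set_option linter.unusedSectionVars false
set_option linter.unusedVariables false
set_option maxHeartbeats 1000000

namespace KC


variable {M : Type*} [DecidableEq M]

/-- bottom-up plates -/
def bu (ord : Fin 2 → LinearOrder M) : List (Fin 2) → Finset M → Fin 2 → Finset M
  | [], _, _ => ∅
  | q :: L, R, i =>
    if h : R.Nonempty then
      (if q = i then {@Finset.min' M (ord (1 - q)) R h} else ∅) ∪
        bu ord L (R.erase (@Finset.min' M (ord (1 - q)) R h)) i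
    else ∅

/-- leftover after bottom-up processing -/
def loF (ord : Fin 2 → LinearOrder M) : List (Fin 2) → Finset M → Finset M
  | [], R => R
  | q :: L, R =>
    if h : R.Nonempty then
      loF ord L (R.erase (@Finset.min' M (ord (1 - q)) R h))
    else R

lemma fin2_cases : ∀ q : Fin 2, q = 0 ∨ q = 1 := by decide

variable (ord : Fin 2 → LinearOrder M)

lemma bu_subset : ∀ (L : List (Fin 2)) (R : Finset M) (i), bu ord L R i ⊆ R := by
  intro L
  induction L with
  | nil => intro R i; simp [bu]
  | cons q L ih =>
    intro R i
    rw [bu]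
    split
    · rename_i h
      apply Finset.union_subset
      · split
        · simp [Finset.min'_mem]
        · simp
      · exact (ih _ i).trans (Finset.erase_subset _ _)
    · simp

lemma loF_subset : ∀ (L : List (Fin 2)) (R : Finset M), loF ord L R ⊆ R := by
  intro L
  induction L with
  | nil => intro R; simp [loF]
  | cons q L ih =>
    intro R
    rw [loF]
    split
    · exact (ih _).trans (Finset.erase_subset _ _)
    · simp

lemma loF_card : ∀ (L : List (Fin 2)) (R : Finset M), L.length ≤ R.card →
    (loF ord L R).card = R.card - L.length := by
  intro L
  induction L with
  | nil => intro R _; simp [loF]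
  | cons q L ih =>
    intro R hle
    rw [loF]
    have hne : R.Nonempty := Finset.card_pos.mp (by simp at hle; omega)
    rw [dif_pos hne]
    have hmem := @Finset.min'_mem M (ord (1 - q)) R hne
    have hc : (R.erase (@Finset.min' M (ord (1 - q)) R hne)).card = R.card - 1 :=
      Finset.card_erase_of_mem hmem
    rw [ih _ (by simp at hle ⊢; omega), hc]
    simp; omega

lemma min'_erase (o : LinearOrder M) (R : Finset M) (hne : R.Nonempty) (z : M)
    (hzne : z ≠ @Finset.min' M o R hne)
    (hne' : (R.erase z).Nonempty) :
    @Finset.min' M o (R.erase z) hne' = @Finset.min' M o R hne := by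
  refine @le_antisymm M (o.toPartialOrder) _ _ ?_ ?_
  · exact @Finset.min'_le M o _ _ (Finset.mem_erase.mpr ⟨Ne.symm hzne, @Finset.min'_mem M o R hne⟩)
  · exact @Finset.min'_le M o R _ (Finset.mem_of_mem_erase (@Finset.min'_mem M o _ hne'))

lemma bu_append : ∀ (L1 L2 : List (Fin 2)) (R : Finset M) (i), L1.length ≤ R.card →
    bu ord (L1 ++ L2) R i = bu ord L1 R i ∪ bu ord L2 (loF ord L1 R) i := by
  intro L1
  induction L1 with
  | nil => intro L2 R i _; simp [bu, loF]
  | cons q L1 ih =>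
    intro L2 R i hle
    have hne : R.Nonempty := Finset.card_pos.mp (by simp at hle; omega)
    rw [List.cons_append, bu, dif_pos hne, bu, dif_pos hne, loF, dif_pos hne,
      ih _ _ _ (by rw [Finset.card_erase_of_mem (@Finset.min'_mem M (ord (1-q)) R hne)]; simp at hle ⊢; omega),
      Finset.union_assoc]

lemma bu_erase_loF : ∀ (L : List (Fin 2)) (R : Finset M) (z : M) (i),
    R.card = L.length + 1 → loF ord L R = {z} →
    bu ord L (R.erase z) i = bu ord L R i := by
  intro L
  induction L with
  | nil => intro R z i hc hz; simp [bu]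
  | cons q L ih =>
    intro R z i hc hz
    have hc2 : R.card = L.length + 2 := by simpa using hc
    have hne : R.Nonempty := Finset.card_pos.mp (by omega)
    rw [loF, dif_pos hne] at hz
    set c := @Finset.min' M (ord (1 - q)) R hne with hcdef
    have hzmem : z ∈ R.erase c := by
      have := loF_subset ord L (R.erase c)
      rw [hz] at this; exact this (Finset.mem_singleton_self z)
    have hznec : z ≠ c := (Finset.mem_erase.mp hzmem).1
    have hzR : z ∈ R := Finset.mem_of_mem_erase hzmem
    have hcz : (R.erase z).card = L.length + 1 := by
      rw [Finset.card_erase_of_mem hzR]; omega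
    have hne' : (R.erase z).Nonempty := Finset.card_pos.mp (by omega)
    simp only [bu]
    rw [dif_pos hne', dif_pos hne]
    rw [min'_erase (ord (1-q)) R hne z hznec hne']
    rw [← hcdef, Finset.erase_right_comm]
    rw [ih (R.erase c) z i (by rw [Finset.card_erase_of_mem (hcdef ▸ @Finset.min'_mem M (ord (1-q)) R hne)]; omega) hz]

lemma bu_disj01 : ∀ (L : List (Fin 2)) (R : Finset M),
    Disjoint (bu ord L R 0) (bu ord L R 1) := by
  intro L
  induction L with
  | nil => intro R; simp [bu]
  | cons q L ih =>
    intro R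
    rw [bu, bu]
    split
    · rename_i hne
      set c := @Finset.min' M (ord (1 - q)) R hne
      have hcnot : ∀ j, c ∉ bu ord L (R.erase c) j := fun j hj =>
        (Finset.mem_erase.mp (bu_subset ord L _ j hj)).1 rfl
      refine Finset.disjoint_union_left.mpr ⟨?_, Finset.disjoint_union_right.mpr ⟨?_, ih _⟩⟩
      · split
        · refine Finset.disjoint_union_right.mpr ⟨?_, ?_⟩
          · split
            · rename_i h0 h1; exact absurd (h0.symm.trans h1) (by decide)
            · simp
          · simp [hcnot 1]
        · simp
      · split
        · simp [hcnot 0]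
        · simp
    · simp

lemma bu_disj_loF : ∀ (L : List (Fin 2)) (R : Finset M) (i),
    Disjoint (bu ord L R i) (loF ord L R) := by
  intro L
  induction L with
  | nil => intro R i; simp [bu]
  | cons q L ih =>
    intro R i
    rw [bu, loF]
    split
    · rename_i hne
      set c := @Finset.min' M (ord (1 - q)) R hne
      refine Finset.disjoint_union_left.mpr ⟨?_, ih _ _⟩
      split
      · refine Finset.disjoint_singleton_left.mpr fun hc =>
          (Finset.mem_erase.mp (loF_subset ord L _ hc)).1 rfl
      · simp
    · simp [bu]

lemma bu_cover : ∀ (L : List (Fin 2)) (R : Finset M), L.length ≤ R.card →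
    bu ord L R 0 ∪ bu ord L R 1 ∪ loF ord L R = R := by
  intro L
  induction L with
  | nil => intro R _; simp [bu, loF]
  | cons q L ih =>
    intro R hle
    have hle2 : L.length + 1 ≤ R.card := by simpa using hle
    have hne : R.Nonempty := Finset.card_pos.mp (by omega)
    rw [bu, dif_pos hne, bu, dif_pos hne, loF, dif_pos hne]
    set c := @Finset.min' M (ord (1 - q)) R hne with hcdef
    have hcm : c ∈ R := hcdef ▸ @Finset.min'_mem M (ord (1-q)) R hne
    have key : bu ord L (R.erase c) 0 ∪ bu ord L (R.erase c) 1 ∪ loF ord L (R.erase c) = R.erase c :=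
      ih _ (by rw [Finset.card_erase_of_mem hcm]; omega)
    have hq : q = 0 ∨ q = 1 := fin2_cases q
    have step : ∀ X Y Z : Finset M,
        X ∪ Y ∪ Z = R.erase c →
        ({c} ∪ X) ∪ Y ∪ Z = R ∧ X ∪ ({c} ∪ Y) ∪ Z = R := by
      intro X Y Z hXYZ
      constructor
      · have : ({c} ∪ X) ∪ Y ∪ Z = {c} ∪ (X ∪ Y ∪ Z) := by
          ext x; simp only [Finset.mem_union]; tauto
        rw [this, hXYZ, ← Finset.insert_eq, Finset.insert_erase hcm]
      · have : X ∪ ({c} ∪ Y) ∪ Z = {c} ∪ (X ∪ Y ∪ Z) := by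
          ext x; simp only [Finset.mem_union]; tauto
        rw [this, hXYZ, ← Finset.insert_eq, Finset.insert_erase hcm]
    rcases hq with hq | hq <;> subst hq
    · simpa using (step _ _ _ key).1
    · simpa using (step _ _ _ key).2

section PL


variable (o : LinearOrder M)

lemma plateLE_refl (A : Finset M) : PlateLE o.le A A :=
  ⟨id, Function.bijective_id, fun x => @le_refl M o.toPreorder x.1⟩

lemma plateLE_trans {A B C : Finset M} (h1 : PlateLE o.le A B) (h2 : PlateLE o.le B C) :
    PlateLE o.le A C := by
  obtain ⟨f, hf, hfle⟩ := h1
  obtain ⟨g, hg, hgle⟩ := h2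
  exact ⟨g ∘ f, hg.comp hf, fun x => @le_trans M o.toPreorder _ _ _ (hfle x) (hgle (f x))⟩

lemma plateLE_card {le : M → M → Prop} {A B : Finset M} (h : PlateLE le A B) :
    A.card = B.card := by
  obtain ⟨f, hf, -⟩ := h
  simpa [Fintype.card_coe] using Fintype.card_of_bijective hf

lemma plateLE_union {A B C : Finset M} (hCA : Disjoint C A) (hCB : Disjoint C B)
    (h : PlateLE o.le A B) : PlateLE o.le (C ∪ A) (C ∪ B) := by
  obtain ⟨f, hf, hfle⟩ := h
  have hcard : A.card = B.card := by
    simpa [Fintype.card_coe] using Fintype.card_of_bijective hf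
  refine ⟨fun x => if hx : x.1 ∈ C then ⟨x.1, Finset.mem_union_left _ hx⟩
    else ⟨(f ⟨x.1, (Finset.mem_union.mp x.2).resolve_left hx⟩).1,
      Finset.mem_union_right _ (f _).2⟩, ?_, ?_⟩
  · rw [Fintype.bijective_iff_injective_and_card]
    constructor
    · intro a b hab
      by_cases ha : a.1 ∈ C <;> by_cases hb : b.1 ∈ C
      · simp only [dif_pos ha, dif_pos hb] at hab
        have hv := congrArg Subtype.val hab
        exact Subtype.ext hv
      · simp only [dif_pos ha, dif_neg hb] at hab
        have hv := congrArg Subtype.val hab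
        exact absurd (hv ▸ ha)
          (Finset.disjoint_right.mp hCB (f ⟨b.1, (Finset.mem_union.mp b.2).resolve_left hb⟩).2)
      · simp only [dif_neg ha, dif_pos hb] at hab
        have hv := congrArg Subtype.val hab
        exact absurd (hv ▸ hb)
          (Finset.disjoint_right.mp hCB (f ⟨a.1, (Finset.mem_union.mp a.2).resolve_left ha⟩).2)
      · simp only [dif_neg ha, dif_neg hb] at hab
        have hv := congrArg Subtype.val hab
        have := hf.injective (Subtype.ext hv)
        have hv2 := congrArg Subtype.val this
        exact Subtype.ext hv2
    · simp only [Fintype.card_coe]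
      rw [Finset.card_union_of_disjoint hCA, Finset.card_union_of_disjoint hCB, hcard]
  · intro x
    by_cases hx : x.1 ∈ C
    · simp only [dif_pos hx]; exact @le_refl M o.toPreorder x.1
    · simp only [dif_neg hx]
      exact hfle ⟨x.1, (Finset.mem_union.mp x.2).resolve_left hx⟩

lemma plateLE_insert_mono {A : Finset M} {x u : M} (hle : o.le x u)
    (hxA : x ∉ A) (huA : u ∉ A) :
    PlateLE o.le (insert x A) (insert u A) := by
  refine ⟨fun y => if hy : y.1 = x then ⟨u, Finset.mem_insert_self u A⟩
    else ⟨y.1, Finset.mem_insert_of_mem ((Finset.mem_insert.mp y.2).resolve_left hy)⟩, ?_, ?_⟩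
  · rw [Fintype.bijective_iff_injective_and_card]
    constructor
    · intro a b hab
      by_cases ha : a.1 = x <;> by_cases hb : b.1 = x
      · exact Subtype.ext (ha.trans hb.symm)
      · simp only [dif_pos ha, dif_neg hb] at hab
        have hv : u = b.1 := congrArg Subtype.val hab
        exact absurd ((Finset.mem_insert.mp b.2).resolve_left hb) (hv ▸ huA)
      · simp only [dif_neg ha, dif_pos hb] at hab
        have hv : a.1 = u := congrArg Subtype.val hab
        exact absurd ((Finset.mem_insert.mp a.2).resolve_left ha) (hv.symm ▸ huA)
      · simp only [dif_neg ha, dif_neg hb] at hab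
        have hv := congrArg Subtype.val hab
        exact Subtype.ext hv
    · simp only [Fintype.card_coe, Finset.card_insert_of_notMem hxA,
        Finset.card_insert_of_notMem huA]
  · intro y
    by_cases hy : y.1 = x
    · simp only [dif_pos hy]; rw [hy]; exact hle
    · simp only [dif_neg hy]; exact @le_refl M o.toPreorder y.1


end PL

lemma fin2_sub (q p : Fin 2) (h : q ≠ p) : 1 - q = p := by revert q p; decide

lemma exchange : ∀ (L : List (Fin 2)) (R : Finset M) (p : Fin 2) (x z : M),
    R.card = L.length + 1 → x ∈ R → loF ord L R = {z} →
    PlateLE (ord p).le (insert x (bu ord L (R.erase x) p))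
      (insert z (bu ord L (R.erase z) p)) := by
  intro L
  induction L with
  | nil =>
    intro R p x z hc hx hz
    rw [loF] at hz
    subst hz
    rw [Finset.mem_singleton] at hx
    subst hx
    exact plateLE_refl (ord p) _
  | cons q L ih =>
    intro R p x z hc hx hz
    have hc2 : R.card = L.length + 2 := by simpa using hc
    have hne : R.Nonempty := Finset.card_pos.mp (by omega)
    rw [loF, dif_pos hne] at hz
    set c := @Finset.min' M (ord (1 - q)) R hne with hcdef
    have hcR : c ∈ R := hcdef ▸ @Finset.min'_mem M (ord (1-q)) R hne
    set R' := R.erase c with hR'def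
    have hcR' : R'.card = L.length + 1 := by
      rw [hR'def, Finset.card_erase_of_mem hcR]; omega
    have hneR' : R'.Nonempty := Finset.card_pos.mp (by omega)
    have hzR' : z ∈ R' := by
      have := loF_subset ord L R'
      rw [hz] at this; exact this (Finset.mem_singleton_self z)
    have hznec : z ≠ c := (Finset.mem_erase.mp hzR').1
    have hzR : z ∈ R := Finset.mem_of_mem_erase hzR'
    have hnez : (R.erase z).Nonempty := Finset.card_pos.mp
      (by rw [Finset.card_erase_of_mem hzR]; omega)
    have hminz : @Finset.min' M (ord (1-q)) (R.erase z) hnez = c :=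
      min'_erase (ord (1-q)) R hne z hznec hnez
    -- z-side normal form
    have zside : bu ord (q :: L) (R.erase z) p =
        (if q = p then {c} else ∅) ∪ bu ord L (R'.erase z) p := by
      rw [bu, dif_pos hnez, hminz, hR'def, Finset.erase_right_comm]
    by_cases hxc : x = c
    · -- x is the mover's pick
      subst hxc
      set u := @Finset.min' M (ord (1-q)) R' hneR' with hudef
      have xside : bu ord (q :: L) (R.erase c) p =
          (if q = p then {u} else ∅) ∪ bu ord L (R'.erase u) p := by
        rw [show R.erase c = R' from rfl, bu, dif_pos hneR', ← hudef]
      have huR' : u ∈ R' := hudef ▸ @Finset.min'_mem M (ord (1-q)) R' hneR'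
      have ihu := ih R' p u z hcR' huR' hz
      have hS1 : bu ord L (R'.erase u) p ⊆ R'.erase u := bu_subset ord L _ p
      have hS2 : bu ord L (R'.erase z) p ⊆ R'.erase z := bu_subset ord L _ p
      have hcnotR' : (c : M) ∉ R' := Finset.notMem_erase c R
      by_cases hqp : q = p
      · rw [xside, zside, if_pos hqp, if_pos hqp]
        have e1 : insert c ({u} ∪ bu ord L (R'.erase u) p) =
            {c} ∪ insert u (bu ord L (R'.erase u) p) := by
          ext y; simp only [Finset.mem_insert, Finset.mem_union, Finset.mem_singleton]
          try tauto
        have e2 : insert z ({c} ∪ bu ord L (R'.erase z) p) =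
            {c} ∪ insert z (bu ord L (R'.erase z) p) := by
          ext y; simp only [Finset.mem_insert, Finset.mem_union, Finset.mem_singleton]
          try tauto
        rw [e1, e2]
        apply plateLE_union
        · simp only [Finset.disjoint_singleton_left, Finset.mem_insert]
          push_neg
          exact ⟨fun h => hcnotR' (h ▸ huR'), fun h => hcnotR' (Finset.mem_of_mem_erase (hS1 h))⟩
        · simp only [Finset.disjoint_singleton_left, Finset.mem_insert]
          push_neg
          exact ⟨Ne.symm hznec, fun h => hcnotR' (Finset.mem_of_mem_erase (hS2 h))⟩
        · exact ihu
      · rw [xside, zside, if_neg hqp, if_neg hqp, Finset.empty_union, Finset.empty_union]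
        have hp : 1 - q = p := fin2_sub q p hqp
        have hcu : (ord p).le c u := by
          rw [← hp]
          exact hcdef ▸ @Finset.min'_le M (ord (1-q)) R u (Finset.mem_of_mem_erase huR')
        refine plateLE_trans (ord p) (plateLE_insert_mono (ord p) hcu ?_ ?_) ihu
        · exact fun h => hcnotR' (Finset.mem_of_mem_erase (hS1 h))
        · exact fun h => Finset.notMem_erase u R' (hS1 h)
    · -- x ≠ c : both sides pick c first
      have hxR' : x ∈ R' := Finset.mem_erase.mpr ⟨hxc, hx⟩
      have hnex : (R.erase x).Nonempty := Finset.card_pos.mp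
        (by rw [Finset.card_erase_of_mem hx]; omega)
      have hminx : @Finset.min' M (ord (1-q)) (R.erase x) hnex = c :=
        min'_erase (ord (1-q)) R hne x hxc hnex
      have xside : bu ord (q :: L) (R.erase x) p =
          (if q = p then {c} else ∅) ∪ bu ord L (R'.erase x) p := by
        rw [bu, dif_pos hnex, hminx, hR'def, Finset.erase_right_comm]
      have ihx := ih R' p x z hcR' hxR' hz
      have hS1 : bu ord L (R'.erase x) p ⊆ R'.erase x := bu_subset ord L _ p
      have hS2 : bu ord L (R'.erase z) p ⊆ R'.erase z := bu_subset ord L _ p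
      have hcnotR' : (c : M) ∉ R' := Finset.notMem_erase c R
      rw [xside, zside]
      have e1 : insert x ((if q = p then {c} else ∅) ∪ bu ord L (R'.erase x) p) =
          (if q = p then {c} else ∅) ∪ insert x (bu ord L (R'.erase x) p) := by
        ext y
        split <;>
          simp only [Finset.mem_insert, Finset.mem_union, Finset.mem_singleton,
            Finset.notMem_empty, Finset.empty_union] <;> tauto
      have e2 : insert z ((if q = p then {c} else ∅) ∪ bu ord L (R'.erase z) p) =
          (if q = p then {c} else ∅) ∪ insert z (bu ord L (R'.erase z) p) := by
        ext y
        split <;>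
          simp only [Finset.mem_insert, Finset.mem_union, Finset.mem_singleton,
            Finset.notMem_empty, Finset.empty_union] <;> tauto
      rw [e1, e2]
      apply plateLE_union
      · split
        · simp only [Finset.disjoint_singleton_left, Finset.mem_insert]
          push_neg
          exact ⟨fun h => hxc (h.symm), fun h => hcnotR' (Finset.mem_of_mem_erase (hS1 h))⟩
        · simp
      · split
        · simp only [Finset.disjoint_singleton_left, Finset.mem_insert]
          push_neg
          exact ⟨Ne.symm hznec, fun h => hcnotR' (Finset.mem_of_mem_erase (hS2 h))⟩
        · simp
      · exact ihx




variable {M : Type*} [DecidableEq M] {m : ℕ} (s : Strategy M m)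

lemma extend_length : ∀ (k : ℕ) (h : List M), (s.extend k h).length = h.length + k := by
  intro k
  induction k with
  | zero => intro h; rfl
  | succ k ih => intro h; rw [Strategy.extend, ih]; simp; omega

lemma extend_prefix : ∀ (k : ℕ) (h : List M), h <+: s.extend k h := by
  intro k
  induction k with
  | zero => intro h; exact List.prefix_refl h
  | succ k ih =>
    intro h
    rw [Strategy.extend]
    exact List.IsPrefix.trans ⟨[s.choice h], rfl⟩ (ih (h ++ [s.choice h]))

lemma extend_nodup : ∀ (k : ℕ) (h : List M), h.Nodup → h.length + k ≤ m →
    (s.extend k h).Nodup := by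
  intro k
  induction k with
  | zero => intro h hn _; exact hn
  | succ k ih =>
    intro h hn hl
    rw [Strategy.extend]
    refine ih _ ?_ (by simp; omega)
    have := s.valid h hn (by omega)
    simp [List.nodup_append, hn, this]
    exact fun a ha hc => this (by rw [← hc]; exact ha)

lemma play_lt {h : List M} (hl : h.length ≤ m) (t : Fin m) (ht : t.val < h.length) :
    s.play h t = h.getD t.val (s.choice []) := by
  obtain ⟨tl, htl⟩ := extend_prefix s (m - h.length) h
  rw [Strategy.play, ← htl, List.getD_append _ _ _ _ ht]

lemma play_pos {h : List M} (hl : h.length < m) (x : M) (t : Fin m) (ht : t.val = h.length) :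
    s.play (h ++ [x]) t = x := by
  rw [play_lt s (by simp; omega) t (by simp; omega)]
  rw [List.getD_append_right _ _ _ _ (by omega)]
  simp [ht]

lemma play_choice_eq {h : List M} (hl : h.length < m) :
    s.play h = s.play (h ++ [s.choice h]) := by
  funext t
  rw [Strategy.play, Strategy.play]
  have h1 : m - h.length = (m - (h ++ [s.choice h]).length) + 1 := by simp; omega
  rw [h1, Strategy.extend]

lemma play_inj {h : List M} (hn : h.Nodup) (hl : h.length ≤ m) :
    Function.Injective (s.play h) := by
  intro t u htu
  have hlen : (s.extend (m - h.length) h).length = m := by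
    rw [extend_length]; omega
  have hnd : (s.extend (m - h.length) h).Nodup := extend_nodup s _ h hn (by omega)
  simp only [Strategy.play] at htu
  simp only [List.getD_eq_getElem _ _ (by rw [hlen]; exact t.isLt),
    List.getD_eq_getElem _ _ (by rw [hlen]; exact u.isLt)] at htu
  exact Fin.ext ((List.Nodup.getElem_inj_iff hnd).mp htu)

lemma play_mem_of_lt {h : List M} (hl : h.length ≤ m) (t : Fin m) (ht : t.val < h.length) :
    s.play h t ∈ h := by
  rw [play_lt s hl t ht, List.getD_eq_getElem _ _ ht]
  exact List.getElem_mem ht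



section Game

variable {M : Type*} [DecidableEq M] [Fintype M] {m : ℕ}

def tailPlate (P : Fin m → Fin 2) (a : Fin m → M) (j : ℕ) (i : Fin 2) : Finset M :=
  (Finset.univ.filter fun t : Fin m => j ≤ t.val ∧ P t = i).image a

def revOrd (P : Fin m → Fin 2) (j : ℕ) : List (Fin 2) :=
  (((List.finRange m).drop j).reverse).map P

lemma revOrd_length (P : Fin m → Fin 2) (j : ℕ) : (revOrd P j).length = m - j := by
  simp [revOrd]

lemma revOrd_succ (P : Fin m → Fin 2) (j : ℕ) (hj : j < m) :
    revOrd P j = revOrd P (j + 1) ++ [P ⟨j, hj⟩] := by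
  unfold revOrd
  rw [List.drop_eq_getElem_cons (by simpa using hj), List.reverse_cons, List.map_append]
  simp

lemma tailPlate_top (P : Fin m → Fin 2) (a : Fin m → M) (j : ℕ) (hj : m ≤ j) (i : Fin 2) :
    tailPlate P a j i = ∅ := by
  unfold tailPlate
  rw [Finset.filter_false_of_mem, Finset.image_empty]
  intro t _
  rintro ⟨h1, -⟩
  have := t.isLt
  omega

lemma tailPlate_succ (P : Fin m → Fin 2) (a : Fin m → M) (j : ℕ) (hj : j < m) (i : Fin 2) :
    tailPlate P a j i =
      (if P ⟨j, hj⟩ = i then {a ⟨j, hj⟩} else ∅) ∪ tailPlate P a (j + 1) i := by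
  unfold tailPlate
  have hfilter : (Finset.univ.filter fun t : Fin m => j ≤ t.val ∧ P t = i) =
      (if P ⟨j, hj⟩ = i then {(⟨j, hj⟩ : Fin m)} else ∅) ∪
        (Finset.univ.filter fun t : Fin m => j + 1 ≤ t.val ∧ P t = i) := by
    ext t
    by_cases hP : P ⟨j, hj⟩ = i
    · simp only [if_pos hP, Finset.mem_union, Finset.mem_singleton, Finset.mem_filter,
        Finset.mem_univ, true_and]
      constructor
      · rintro ⟨h1, h2⟩
        by_cases hteq : t.val = j
        · exact Or.inl (Fin.ext hteq)
        · exact Or.inr ⟨by omega, h2⟩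
      · rintro (rfl | ⟨h1, h2⟩)
        · exact ⟨le_refl j, hP⟩
        · exact ⟨by omega, h2⟩
    · simp only [if_neg hP, Finset.empty_union, Finset.mem_filter, Finset.mem_univ, true_and]
      constructor
      · rintro ⟨h1, h2⟩
        have hne : t ≠ ⟨j, hj⟩ := fun he => hP (he ▸ h2)
        have hvne : t.val ≠ j := fun hv => hne (Fin.ext hv)
        exact ⟨by omega, h2⟩
      · rintro ⟨h1, h2⟩
        exact ⟨by omega, h2⟩
  rw [hfilter, Finset.image_union]
  congr 1
  split <;> simp

def headSet (b : Fin m → M) (j : ℕ) : Finset M :=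
  (Finset.univ.filter fun t : Fin m => t.val < j).image b

lemma headSet_zero (b : Fin m → M) : headSet b 0 = ∅ := by
  simp [headSet]

lemma headSet_succ (b : Fin m → M) (j : ℕ) (hj : j < m) :
    headSet b (j + 1) = insert (b ⟨j, hj⟩) (headSet b j) := by
  unfold headSet
  have hfilter : (Finset.univ.filter fun t : Fin m => t.val < j + 1) =
      insert (⟨j, hj⟩ : Fin m) (Finset.univ.filter fun t : Fin m => t.val < j) := by
    ext t
    simp only [Finset.mem_insert, Finset.mem_filter, Finset.mem_univ, true_and]
    constructor
    · intro h1
      by_cases hteq : t.val = j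
      · exact Or.inl (Fin.ext hteq)
      · exact Or.inr (by omega)
    · rintro (rfl | h1)
      · simp
      · omega
  rw [hfilter, Finset.image_insert]

variable (ord : Fin 2 → LinearOrder M)

lemma bu_compl (L : List (Fin 2)) (R : Finset M) (hcard : R.card = L.length)
    (i p : Fin 2) (hip : i ≠ p) :
    bu ord L R i = R \ bu ord L R p := by
  have hcover := bu_cover ord L R (le_of_eq hcard.symm)
  have hlo : loF ord L R = ∅ := Finset.card_eq_zero.mp
    (by rw [loF_card ord L R (le_of_eq hcard.symm)]; omega)
  rw [hlo, Finset.union_empty] at hcover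
  have hd := bu_disj01 ord L R
  rcases fin2_cases i with hi | hi <;> rcases fin2_cases p with hp | hp <;> subst hi <;> subst hp
  · exact absurd rfl hip
  · have hthis := Finset.union_sdiff_cancel_right hd
    rw [hcover] at hthis
    exact hthis.symm
  · have hthis := Finset.union_sdiff_cancel_left hd
    rw [hcover] at hthis
    exact hthis.symm
  · exact absurd rfl hip

lemma greedy_bu (Q : Fin m → Fin 2) (b : Fin m → M)
    (hinj : Function.Injective b)
    (hgreedy : ∀ t : Fin m, ∀ x : M, (∀ u : Fin m, u < t → b u ≠ x) → x ≠ b t →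
      (ord (1 - Q t)).lt (b t) x) :
    ∀ (r j : ℕ), j + r = m → ∀ i,
      tailPlate Q b j i =
        bu ord (((List.finRange m).drop j).map Q) (Finset.univ \ headSet b j) i := by
  intro r
  induction r with
  | zero =>
    intro j hj i
    rw [tailPlate_top Q b j (by omega) i, List.drop_eq_nil_of_le (by simp; omega)]
    rfl
  | succ r ih =>
    intro j hj i
    have hjm : j < m := by omega
    have hbt0R : b ⟨j, hjm⟩ ∈ Finset.univ \ headSet b j := by
      simp only [Finset.mem_sdiff, Finset.mem_univ, true_and, headSet, Finset.mem_image]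
      rintro ⟨t, ht, hbt⟩
      have h1 := (Finset.mem_filter.mp ht).2
      have h2 := hinj hbt
      rw [h2] at h1
      exact absurd h1 (by simp)
    have hne : (Finset.univ \ headSet b j).Nonempty := ⟨_, hbt0R⟩
    have hmin : @Finset.min' M (ord (1 - Q ⟨j, hjm⟩)) (Finset.univ \ headSet b j) hne
        = b ⟨j, hjm⟩ := by
      refine @le_antisymm M (ord (1 - Q ⟨j, hjm⟩)).toPartialOrder _ _
        (@Finset.min'_le M (ord (1 - Q ⟨j, hjm⟩)) _ _ hbt0R) ?_
      have hminmem := @Finset.min'_mem M (ord (1 - Q ⟨j, hjm⟩)) _ hne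
      by_cases hy : @Finset.min' M (ord (1 - Q ⟨j, hjm⟩)) _ hne = b ⟨j, hjm⟩
      · rw [hy]
        exact @le_refl M (ord (1 - Q ⟨j, hjm⟩)).toPreorder _
      · refine @le_of_lt M (ord (1 - Q ⟨j, hjm⟩)).toPartialOrder.toPreorder _ _
          (hgreedy ⟨j, hjm⟩ _ ?_ hy)
        intro u hu hbu
        have hmem : @Finset.min' M (ord (1 - Q ⟨j, hjm⟩)) _ hne ∈ headSet b j :=
          Finset.mem_image.mpr ⟨u, Finset.mem_filter.mpr ⟨Finset.mem_univ u, hu⟩, hbu⟩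
        exact (Finset.mem_sdiff.mp hminmem).2 hmem
    have hlist : ((List.finRange m).drop j).map Q =
        Q ⟨j, hjm⟩ :: ((List.finRange m).drop (j + 1)).map Q := by
      rw [List.drop_eq_getElem_cons (by simpa using hjm)]
      simp
    rw [hlist, tailPlate_succ Q b j hjm i, bu, dif_pos hne, hmin]
    have herase : (Finset.univ \ headSet b j).erase (b ⟨j, hjm⟩) =
        Finset.univ \ headSet b (j + 1) := by
      rw [headSet_succ b j hjm, Finset.sdiff_insert]
    rw [herase, ih (j + 1) (by omega) i]

end Game


section SPEsec

variable {M : Type*} [DecidableEq M] [Fintype M] {m : ℕ}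

lemma spe_bu (hm : m = Fintype.card M) (P : Fin m → Fin 2)
    (ord : Fin 2 → LinearOrder M) (big : Fin m → (Fin m → M) → (Fin m → M) → Prop)
    (hext : ∀ t (a b : Fin m → M), Function.Injective a → Function.Injective b →
      SelfLT P ord (P t) a b → big t a b)
    (s : Strategy M m) (hs : SPE big s) :
    ∀ (r : ℕ) (h : List M), h.Nodup → h.length + r = m → ∀ i,
      tailPlate P (s.play h) h.length i =
        bu ord (revOrd P h.length) (Finset.univ \ h.toFinset) i := by
  intro r
  induction r with
  | zero =>
    intro h hn hlen i
    rw [tailPlate_top P _ h.length (by omega) i]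
    have hrev : revOrd P h.length = [] :=
      List.eq_nil_of_length_eq_zero (by rw [revOrd_length]; omega)
    rw [hrev]
    rfl
  | succ r ih =>
    intro h hn hlen i
    set j := h.length with hj
    have hjm : j < m := by omega
    set c := s.choice h with hcdef
    have hcnot : c ∉ h := s.valid h hn hjm
    set Rh := Finset.univ \ h.toFinset with hRh
    have hhcard : h.toFinset.card = j := List.toFinset_card_of_nodup hn
    have hRcard : Rh.card = r + 1 := by
      rw [hRh, Finset.card_sdiff_of_subset (Finset.subset_univ _), Finset.card_univ, ← hm, hhcard]
      omega
    set L' := revOrd P (j + 1) with hL'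
    have hL'len : L'.length = r := by rw [hL', revOrd_length]; omega
    have hcardL : Rh.card = L'.length + 1 := by omega
    have hloc : (loF ord L' Rh).card = 1 := by
      rw [loF_card ord L' Rh (by omega)]; omega
    obtain ⟨z, hz⟩ := Finset.card_eq_one.mp hloc
    have hzR : z ∈ Rh := loF_subset ord L' Rh (hz ▸ Finset.mem_singleton_self z)
    have hznoth : z ∉ h := by
      have h2 := (Finset.mem_sdiff.mp hzR).2
      simpa [List.mem_toFinset] using h2
    have hcR : c ∈ Rh := by
      rw [hRh]
      simp [List.mem_toFinset, hcnot]
    have hnodup1 : ∀ x : M, x ∉ h → (h ++ [x]).Nodup := fun x hx => by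
      simp [List.nodup_append, hn, hx]
      exact fun a ha hc => hx (by rw [← hc]; exact ha)
    have happ : ∀ x : M, x ∉ h → Finset.univ \ (h ++ [x]).toFinset = Rh.erase x := by
      intro x hx
      have : (h ++ [x]).toFinset = insert x h.toFinset := by
        ext y
        simp [or_comm]
      rw [this, Finset.sdiff_insert, hRh]
    have ihx : ∀ x : M, x ∉ h → ∀ i',
        tailPlate P (s.play (h ++ [x])) (j + 1) i' = bu ord L' (Rh.erase x) i' := by
      intro x hx i'
      have hres := ih (h ++ [x]) (hnodup1 x hx) (by simp; omega) i'
      rwa [show (h ++ [x]).length = j + 1 by simp [hj], happ x hx] at hres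
    have hplayc : s.play h = s.play (h ++ [c]) := play_choice_eq s hjm
    have hplayt0 : s.play h ⟨j, hjm⟩ = c := by
      rw [hplayc]
      exact play_pos s hjm c ⟨j, hjm⟩ rfl
    have hdev : ∀ x : M, x ∉ h → s.play (h ++ [x]) ⟨j, hjm⟩ = x := fun x hx =>
      play_pos s hjm x ⟨j, hjm⟩ rfl
    have houtc : ∀ i', tailPlate P (s.play h) j i' =
        (if P ⟨j, hjm⟩ = i' then {c} else ∅) ∪ bu ord L' (Rh.erase c) i' := by
      intro i'
      rw [tailPlate_succ P _ j hjm i', hplayt0, hplayc, ihx c hcnot i']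
    have houtx : ∀ x, x ∉ h → ∀ i', tailPlate P (s.play (h ++ [x])) j i' =
        (if P ⟨j, hjm⟩ = i' then {x} else ∅) ∪ bu ord L' (Rh.erase x) i' := by
      intro x hx i'
      rw [tailPlate_succ P _ j hjm i', hdev x hx, ihx x hx i']
    set H : Fin 2 → Finset M :=
      fun i' => (Finset.univ.filter fun t : Fin m => t.val < j ∧ P t = i').image (s.play h)
      with hH
    have hplate : ∀ (a' : Fin m → M), (∀ t : Fin m, t.val < j → a' t = s.play h t) →
        ∀ i', plate P a' i' = H i' ∪ tailPlate P a' j i' := by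
      intro a' hagree i'
      unfold plate tailPlate
      rw [hH]
      have hsplit : (Finset.univ.filter fun t : Fin m => P t = i') =
          (Finset.univ.filter fun t : Fin m => t.val < j ∧ P t = i') ∪
            (Finset.univ.filter fun t : Fin m => j ≤ t.val ∧ P t = i') := by
        ext t
        simp only [Finset.mem_filter, Finset.mem_union, Finset.mem_univ, true_and]
        constructor
        · intro hPt
          by_cases htj : t.val < j
          · exact Or.inl ⟨htj, hPt⟩
          · exact Or.inr ⟨by omega, hPt⟩
        · rintro (⟨-, hPt⟩ | ⟨-, hPt⟩) <;> exact hPt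
      rw [hsplit, Finset.image_union]
      congr 1
      apply Finset.image_congr
      intro t ht
      simp only [Finset.mem_coe, Finset.mem_filter] at ht
      exact hagree t ht.2.1
    have hagree_dev : ∀ x, x ∉ h → ∀ t : Fin m, t.val < j → s.play (h ++ [x]) t = s.play h t := by
      intro x hx t ht
      rw [play_lt s (le_of_lt hjm) t ht, play_lt s (by simp; omega) t (by simp [hj]; omega),
        List.getD_append _ _ _ _ ht]
    have hHsub : ∀ i', H i' ⊆ h.toFinset := by
      intro i' y hy
      rw [hH] at hy
      obtain ⟨t, ht, rfl⟩ := Finset.mem_image.mp hy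
      have ht2 := (Finset.mem_filter.mp ht).2.1
      exact List.mem_toFinset.mpr (play_mem_of_lt s (le_of_lt hjm) t ht2)
    have hdisjH : ∀ i' (X : Finset M), X ⊆ Rh → Disjoint (H i') X := by
      intro i' X hX
      refine Finset.disjoint_left.mpr fun y hy hyX => ?_
      exact (Finset.mem_sdiff.mp (hX hyX)).2 (hHsub i' hy)
    have hsub1 : insert c (bu ord L' (Rh.erase c) (P ⟨j, hjm⟩)) ⊆ Rh :=
      Finset.insert_subset hcR ((bu_subset ord L' _ _).trans (Finset.erase_subset _ _))
    have hsub2 : insert z (bu ord L' (Rh.erase z) (P ⟨j, hjm⟩)) ⊆ Rh :=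
      Finset.insert_subset hzR ((bu_subset ord L' _ _).trans (Finset.erase_subset _ _))
    have hABle : PlateLE (ord (P ⟨j, hjm⟩)).le (plate P (s.play h) (P ⟨j, hjm⟩))
        (plate P (s.play (h ++ [z])) (P ⟨j, hjm⟩)) := by
      rw [hplate _ (fun _ _ => rfl) _, hplate _ (hagree_dev z hznoth) _,
        houtc (P ⟨j, hjm⟩), houtx z hznoth (P ⟨j, hjm⟩), if_pos rfl, if_pos rfl,
        ← Finset.insert_eq, ← Finset.insert_eq]
      exact plateLE_union (ord (P ⟨j, hjm⟩)) (hdisjH _ _ hsub1) (hdisjH _ _ hsub2)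
        (exchange ord L' Rh (P ⟨j, hjm⟩) c z hcardL hcR hz)
    have hABeq : plate P (s.play h) (P ⟨j, hjm⟩) = plate P (s.play (h ++ [z])) (P ⟨j, hjm⟩) := by
      by_contra hne2
      have hbig : big ⟨j, hjm⟩ (s.play h) (s.play (h ++ [z])) := by
        apply hext ⟨j, hjm⟩ _ _ (play_inj s hn (le_of_lt hjm))
          (play_inj s (hnodup1 z hznoth) (by simp [hj]; omega))
        exact ⟨hABle, hne2⟩
      exact hs ⟨j, hjm⟩ h hn rfl z hznoth hbig
    have hkey : insert c (bu ord L' (Rh.erase c) (P ⟨j, hjm⟩)) =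
        insert z (bu ord L' (Rh.erase z) (P ⟨j, hjm⟩)) := by
      rw [hplate _ (fun _ _ => rfl) _, hplate _ (hagree_dev z hznoth) _,
        houtc (P ⟨j, hjm⟩), houtx z hznoth (P ⟨j, hjm⟩), if_pos rfl, if_pos rfl,
        ← Finset.insert_eq, ← Finset.insert_eq] at hABeq
      have hcongr := congrArg (fun S => S \ H (P ⟨j, hjm⟩)) hABeq
      rwa [Finset.union_sdiff_cancel_left (hdisjH _ _ hsub1),
        Finset.union_sdiff_cancel_left (hdisjH _ _ hsub2)] at hcongr
    show tailPlate P (s.play h) j i = bu ord (revOrd P j) Rh i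
    have hlecard : L'.length ≤ Rh.card := by omega
    rw [revOrd_succ P j hjm, ← hL', bu_append ord L' [P ⟨j, hjm⟩] Rh _ hlecard, hz]
    have hbusingle : ∀ i', bu ord [P ⟨j, hjm⟩] ({z} : Finset M) i' =
        if P ⟨j, hjm⟩ = i' then {z} else ∅ := by
      intro i'
      rw [bu, dif_pos (Finset.singleton_nonempty z), @Finset.min'_singleton M (ord (1 - P ⟨j, hjm⟩)) z]
      simp [bu]
    rw [hbusingle i, houtc i]
    by_cases hpi : P ⟨j, hjm⟩ = i
    · rw [if_pos hpi, if_pos hpi, ← Finset.insert_eq, ← hpi, hkey,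
        bu_erase_loF ord L' Rh z _ hcardL hz, Finset.union_comm, ← Finset.insert_eq]
    · rw [if_neg hpi, if_neg hpi, Finset.empty_union, Finset.union_empty]
      have hip : i ≠ P ⟨j, hjm⟩ := fun he => hpi he.symm
      have hcardc : (Rh.erase c).card = L'.length := by
        rw [Finset.card_erase_of_mem hcR]; omega
      have hcardz : (Rh.erase z).card = L'.length := by
        rw [Finset.card_erase_of_mem hzR]; omega
      rw [bu_compl ord L' _ hcardc i _ hip,
        ← bu_erase_loF ord L' Rh z i hcardL hz,
        bu_compl ord L' _ hcardz i _ hip]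
      have herw : ∀ (x : M) (S : Finset M), (Rh.erase x) \ S = Rh \ insert x S := by
        intro x S
        rw [Finset.erase_eq, sdiff_sdiff, Finset.sup_eq_union, ← Finset.insert_eq]
      rw [herw c _, herw z _, hkey]

end SPEsec


end KC

/-- Kohler–Chandrasekaran: with two self-interested players
consuming all morsels, every optimal play gives the same division of food as
the reversed-order play in which each mover takes the remaining morsel minimal
for the other player. -/
theorem kohler_chandrasekaran {M : Type*} [Fintype M] [DecidableEq M] {m : ℕ}
    (hm : m = Fintype.card M) (P : Fin m → Fin 2) (ord : Fin 2 → LinearOrder M)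
    (big : Fin m → (Fin m → M) → (Fin m → M) → Prop)
    (hirr : ∀ t (a : Fin m → M), Function.Injective a → ¬ big t a a)
    (htrans : ∀ t (a b c : Fin m → M), Function.Injective a → Function.Injective b →
      Function.Injective c → big t a b → big t b c → big t a c)
    (hext : ∀ t (a b : Fin m → M), Function.Injective a → Function.Injective b →
      SelfLT P ord (P t) a b → big t a b)
    (b : Fin m → M) (hb : IsGreedyMinOther (P ∘ Fin.rev) ord b)
    (a : Fin m → M) (ha : OptimalPlay big a) :
    ∀ i : Fin 2, plate P a i = plate (P ∘ Fin.rev) b i := by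
  intro i
  obtain ⟨s, hs, rfl⟩ := ha
  have h1 := KC.spe_bu hm P ord big hext s hs m [] List.nodup_nil (by simp) i
  have h2 := KC.greedy_bu ord (P ∘ Fin.rev) b hb.1 hb.2 m 0 (by omega) i
  have e1 : plate P (s.play []) i = KC.tailPlate P (s.play []) 0 i := by
    unfold plate KC.tailPlate
    congr 1
    ext t
    simp
  have e2 : plate (P ∘ Fin.rev) b i = KC.tailPlate (P ∘ Fin.rev) b 0 i := by
    unfold plate KC.tailPlate
    congr 1
    ext t
    simp
  have e3 : KC.revOrd P 0 = (List.finRange m).map (P ∘ Fin.rev) := by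
    unfold KC.revOrd
    rw [List.drop_zero, List.finRange_reverse, List.map_map]
  simp only [List.length_nil, List.toFinset_nil, Finset.sdiff_empty] at h1
  rw [KC.headSet_zero, Finset.sdiff_empty, List.drop_zero] at h2
  rw [e1, h1, e2, h2, e3]
end

section
/- (A gallant knight moving last behaves as a lout.) Suppose the preference at the last turn m, ≺_m, is a strict partial order extending the knight order <K_{P m} of the last mover. Then in every SPE s and for every history h of length m−1, the prescribed choice s(h) is the <_{P m}-maximum element of the set of morsels not occurring in h. -/
/-- a gallant knight moving last behaves as a lout: in every SPE,
at every history of length `m - 1`, the prescribed choice is the favourite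
remaining morsel of the last mover. -/
theorem knight_last_acts_as_lout {M : Type*} [Fintype M] [DecidableEq M] {m k : ℕ}
    (hm : m ≤ Fintype.card M) (hm0 : 0 < m) (P : Fin m → Fin k)
    (ord : Fin k → LinearOrder M)
    (pref : Fin m → (Fin m → M) → (Fin m → M) → Prop)
    (hirr : ∀ t (a : Fin m → M), Function.Injective a → ¬ pref t a a)
    (htrans : ∀ t (a b c : Fin m → M), Function.Injective a → Function.Injective b →
      Function.Injective c → pref t a b → pref t b c → pref t a c)
    (hext : ∀ a b : Fin m → M, Function.Injective a → Function.Injective b →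
      KnightLT P ord (P ⟨m - 1, by omega⟩) a b → pref ⟨m - 1, by omega⟩ a b)
    (s : Strategy M m) (hs : SPE pref s) :
    ∀ h : List M, h.Nodup → h.length = m - 1 →
      ∀ x : M, x ∉ h → (ord (P ⟨m - 1, by omega⟩)).le x (s.choice h) := by
  intro h hnd hlen x hx
  have htlval : m - 1 < m := by omega
  set tl : Fin m := ⟨m - 1, htlval⟩ with htl
  set i := P tl with hi
  set c := s.choice h with hc
  by_contra hnle
  have hcnh : c ∉ h := s.valid h hnd (by omega)
  have hlt : (ord i).lt c x := by
    letI := ord i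
    exact lt_of_not_ge hnle
  have hxc : x ≠ c := by
    intro e; subst e
    exact absurd hlt (by letI := ord i; exact lt_irrefl _)
  -- the two outcome lists
  set L1 : List M := h ++ [c] with hL1
  set L2 : List M := h ++ [x] with hL2
  have hL1len : L1.length = m := by simp [hL1, hlen]; omega
  have hL2len : L2.length = m := by simp [hL2, hlen]; omega
  have hL1nd : L1.Nodup := by
    simp [hL1, List.nodup_append, hnd, hcnh]
    intro a ha e; exact hcnh (e ▸ ha)
  have hL2nd : L2.Nodup := by
    simp [hL2, List.nodup_append, hnd, hx]
    intro a ha e; exact hx (e ▸ ha)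
  set a := s.play h with ha
  set b := s.play (h ++ [x]) with hb
  have hext1 : s.extend (m - h.length) h = L1 := by
    have h1 : m - h.length = 1 := by omega
    rw [h1]
    rfl
  have hext2 : s.extend (m - (h ++ [x]).length) (h ++ [x]) = L2 := by
    have h2 : m - (h ++ [x]).length = 0 := by
      simp [hlen]; omega
    rw [h2]
    rfl
  have haval : ∀ t : Fin m, a t = L1[t.val]'(by omega) := by
    intro t
    show (s.extend (m - h.length) h).getD t.val (s.choice []) = _
    rw [hext1, List.getD_eq_getElem]
  have hbval : ∀ t : Fin m, b t = L2[t.val]'(by omega) := by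
    intro t
    show (s.extend (m - (h ++ [x]).length) (h ++ [x])).getD t.val (s.choice []) = _
    rw [hext2, List.getD_eq_getElem]
  have hainj : Function.Injective a := by
    intro t1 t2 he
    rw [haval, haval] at he
    exact Fin.ext ((hL1nd.getElem_inj_iff).mp he)
  have hbinj : Function.Injective b := by
    intro t1 t2 he
    rw [hbval, hbval] at he
    exact Fin.ext ((hL2nd.getElem_inj_iff).mp he)
  have htlt : ∀ t : Fin m, t ≠ tl → t.val < h.length := by
    intro t ht
    rw [hlen]
    have h1 := t.isLt
    rcases lt_or_eq_of_le (Nat.le_of_lt_succ (by omega : t.val < (m - 1) + 1)) with h' | h'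
    · exact h'
    · exact absurd (Fin.ext h') ht
  have hasmall : ∀ t : Fin m, (ht : t ≠ tl) → a t = h[t.val]'(htlt t ht) := by
    intro t ht
    rw [haval]
    exact List.getElem_append_left (htlt t ht)
  have hbsmall : ∀ t : Fin m, (ht : t ≠ tl) → b t = h[t.val]'(htlt t ht) := by
    intro t ht
    rw [hbval]
    exact List.getElem_append_left (htlt t ht)
  have hatl : a tl = c := by
    rw [haval]
    exact List.getElem_concat_length hlen.symm _
  have hbtl : b tl = x := by
    rw [hbval]
    exact List.getElem_concat_length hlen.symm _
  have habeq : ∀ t : Fin m, t ≠ tl → a t = b t := by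
    intro t ht
    rw [hasmall t ht, hbsmall t ht]
  have hamem : ∀ t : Fin m, a t ∈ L1 := by
    intro t; rw [haval]; exact List.getElem_mem _
  have hbmem : ∀ t : Fin m, b t ∈ L2 := by
    intro t; rw [hbval]; exact List.getElem_mem _
  -- plates of other players agree
  have hplates : ∀ j, j ≠ i → plate P a j = plate P b j := by
    intro j hj
    apply Finset.image_congr
    intro t ht
    simp only [Finset.coe_filter, Set.mem_setOf_eq, Finset.mem_univ, true_and] at ht
    apply habeq
    intro e
    exact hj (by rw [← ht, e])
  set A := plate P a i with hA
  set B := plate P b i with hB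
  have hcA : c ∈ A := by
    rw [hA]
    unfold plate
    rw [Finset.mem_image]
    exact ⟨tl, by simp [hi], hatl⟩
  have hxB : x ∈ B := by
    rw [hB]
    unfold plate
    rw [Finset.mem_image]
    exact ⟨tl, by simp [hi], hbtl⟩
  have hxA : x ∉ A := by
    rw [hA]
    unfold plate
    rw [Finset.mem_image]
    rintro ⟨t, -, ht⟩
    have := hamem t
    rw [ht] at this
    rcases List.mem_append.mp this with h' | h'
    · exact hx h'
    · exact hxc (List.mem_singleton.mp h')
  have hmemA : ∀ y ∈ A, y ≠ c → y ∈ B ∧ y ∈ h := by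
    intro y hy hyc
    rw [hA] at hy
    unfold plate at hy
    rw [Finset.mem_image] at hy
    obtain ⟨t, htf, hty⟩ := hy
    simp only [Finset.mem_filter, Finset.mem_univ, true_and] at htf
    have httl : t ≠ tl := by
      intro e; rw [e, hatl] at hty; exact hyc hty.symm
    constructor
    · rw [hB]
      unfold plate
      rw [Finset.mem_image]
      exact ⟨t, by simp [htf], by rw [← habeq t httl, hty]⟩
    · rw [← hty, hasmall t httl]
      exact List.getElem_mem _
  have hmemB : ∀ z ∈ B, z ≠ x → z ∈ A ∧ z ≠ c := by
    intro z hz hzx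
    rw [hB] at hz
    unfold plate at hz
    rw [Finset.mem_image] at hz
    obtain ⟨t, htf, htz⟩ := hz
    simp only [Finset.mem_filter, Finset.mem_univ, true_and] at htf
    have httl : t ≠ tl := by
      intro e; rw [e, hbtl] at htz; exact hzx htz.symm
    have hzh : z ∈ h := by
      rw [← htz, hbsmall t httl]
      exact List.getElem_mem _
    constructor
    · rw [hA]
      unfold plate
      rw [Finset.mem_image]
      exact ⟨t, by simp [htf], by rw [habeq t httl, htz]⟩
    · intro e; rw [e] at hzh; exact hcnh hzh
  have hAB : A ≠ B := by
    intro e; rw [e] at hxA; exact hxA hxB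
  -- the bijection
  have hplt : PlateLT (ord i).le A B := by
    refine ⟨⟨fun y => if hy : y.1 = c then ⟨x, hxB⟩ else ⟨y.1, (hmemA y.1 y.2 hy).1⟩, ?_, ?_⟩, hAB⟩
    · constructor
      · rintro ⟨y1, hy1⟩ ⟨y2, hy2⟩ he
        apply Subtype.ext
        show y1 = y2
        dsimp only at he
        by_cases h1 : y1 = c <;> by_cases h2 : y2 = c
        · rw [h1, h2]
        · rw [dif_pos h1, dif_neg h2] at he
          have hxy : x = y2 := congrArg Subtype.val he
          exact absurd (hxy ▸ hy2) hxA
        · rw [dif_neg h1, dif_pos h2] at he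
          have hxy : y1 = x := congrArg Subtype.val he
          exact absurd (hxy ▸ hy1) hxA
        · rw [dif_neg h1, dif_neg h2] at he
          exact congrArg Subtype.val he
      · rintro ⟨z, hz⟩
        by_cases hzx : z = x
        · exact ⟨⟨c, hcA⟩, by simp [hzx]⟩
        · obtain ⟨hzA, hzc⟩ := hmemB z hz hzx
          exact ⟨⟨z, hzA⟩, by simp [hzc]⟩
    · rintro ⟨y, hy⟩
      by_cases hyc : y = c
      · simp only [hyc, dif_pos]
        letI := ord i
        exact le_of_lt hlt
      · simp only [dif_neg hyc]
        exact (ord i).le_refl y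

  have hk : KnightLT P ord i a b := Or.inr ⟨hplates, hplt⟩
  have hpref : pref tl a b := hext a b hainj hbinj hk
  exact hs tl h hnd (by rw [hlen]) x hx hpref
end
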